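/- arXiv:1805.01267 — 4 statements merged into one kernel-verified Lean document; each statement's English description precedes it below -/
import Mathlib

section
/- Let q > 2 be a prime power. Suppose B is a double blocking set of size 3q-1 in PG(2,q) such that all points of L_X and L_Y are in B except for the four points X_1, X_inf, Y_1 and Y_inf. Let T be the set of lines through the origin O that are different from L_X and L_Y and intersect B in more than two points. Then there exist mu, s in F_q, both nonzero, with mu^2 + mu + 1 = 0, such that a line through O different from the two axes belongs to T if and only if its slope is s, s*mu or s*mu^2. -/
/-- Points (and, dually, lines) of the projective plane `PG(2,q)` over a field `F` with
`q` elements: one-dimensional subspaces of `F^3`, i.e. the projectivization of `F^3`. -/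
abbrev PG2 (F : Type*) [Field F] : Type _ := Projectivization F (Fin 3 → F)

/-- The point `P` lies on the line `L` (both given by homogeneous coordinates):
`(x:y:z)` lies on `[a:b:c]` iff `ax + by + cz = 0`. -/
def PG2.incident {F : Type*} [Field F] (P L : PG2 F) : Prop :=
  P.rep 0 * L.rep 0 + P.rep 1 * L.rep 1 + P.rep 2 * L.rep 2 = 0

/-- The set of points of the line `L`. -/
def PG2.linePts {F : Type*} [Field F] (L : PG2 F) : Set (PG2 F) :=
  {P | PG2.incident P L}

/-- `B` is a `t`-fold blocking set: every line meets `B` in at least `t` points. -/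
def PG2.IsBlocking {F : Type*} [Field F] (t : ℕ) (B : Set (PG2 F)) : Prop :=
  ∀ L : PG2 F, t ≤ (B ∩ PG2.linePts L).ncard

/-- The point (or line) with homogeneous coordinates `(x:y:z)`. -/
def PG2.mk3 {F : Type*} [Field F] (x y z : F) (h : x ≠ 0 ∨ y ≠ 0 ∨ z ≠ 0) : PG2 F :=
  Projectivization.mk F ![x, y, z] (by
    intro h0
    rcases h with h | h | h
    · exact h (by simpa using congrFun h0 0)
    · exact h (by simpa using congrFun h0 1)
    · exact h (by simpa using congrFun h0 2))

open PG2
namespace PG2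
variable (F : Type*) [Field F]

/-- The X axis `[0:1:0]`. -/
def LX : PG2 F := mk3 0 1 0 (Or.inr (Or.inl one_ne_zero))
/-- The Y axis `[1:0:0]`. -/
def LY : PG2 F := mk3 1 0 0 (Or.inl one_ne_zero)
/-- `X_∞ = (1:0:0)`. -/
def Xinf : PG2 F := mk3 1 0 0 (Or.inl one_ne_zero)
/-- `X_1 = (1:0:1)`. -/
def X1 : PG2 F := mk3 1 0 1 (Or.inl one_ne_zero)
/-- `Y_∞ = (0:1:0)`. -/
def Yinf : PG2 F := mk3 0 1 0 (Or.inr (Or.inl one_ne_zero))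
/-- `Y_1 = (0:1:1)`. -/
def Y1 : PG2 F := mk3 0 1 1 (Or.inr (Or.inl one_ne_zero))
/-- The origin `O = (0:0:1)`. -/
def O : PG2 F := mk3 0 0 1 (Or.inr (Or.inr one_ne_zero))

/-- The line through the origin with slope `t` (for `t ≠ 0`), namely `[t:-1:0]`. -/
def slopeLine (t : F) : PG2 F := mk3 t (-1) 0 (Or.inr (Or.inl (neg_ne_zero.mpr one_ne_zero)))

/-- `B` contains all points of the two axes except `X_1`, `X_∞`, `Y_1`, `Y_∞`. -/
def AxesSetting (B : Set (PG2 F)) : Prop :=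
  ∀ P : PG2 F, (P ∈ linePts (LX F) ∨ P ∈ linePts (LY F)) →
    (P ∈ B ↔ (P ≠ X1 F ∧ P ≠ Xinf F ∧ P ≠ Y1 F ∧ P ≠ Yinf F))

end PG2

namespace PG2
variable {F : Type*} [Field F]

lemma vec_ne_zero {x y z : F} (h : x ≠ 0 ∨ y ≠ 0 ∨ z ≠ 0) : ![x,y,z] ≠ 0 := by
  intro h0
  rcases h with h | h | h
  · exact h (by simpa using congrFun h0 0)
  · exact h (by simpa using congrFun h0 1)
  · exact h (by simpa using congrFun h0 2)

lemma mk3_eq_iff {x y z a b c : F} (h : x ≠ 0 ∨ y ≠ 0 ∨ z ≠ 0) (h' : a ≠ 0 ∨ b ≠ 0 ∨ c ≠ 0) :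
    mk3 x y z h = mk3 a b c h' ↔ ∃ t : F, t ≠ 0 ∧ x = t*a ∧ y = t*b ∧ z = t*c := by
  rw [mk3, mk3, Projectivization.mk_eq_mk_iff]
  constructor
  · rintro ⟨u, hu⟩
    refine ⟨u, u.ne_zero, ?_, ?_, ?_⟩
    · simpa [Units.smul_def] using (congrFun hu 0).symm
    · simpa [Units.smul_def] using (congrFun hu 1).symm
    · simpa [Units.smul_def] using (congrFun hu 2).symm
  · rintro ⟨t, ht, hx, hy, hz⟩
    exact ⟨Units.mk0 t ht, by funext i; fin_cases i <;> simp [hx, hy, hz]⟩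

lemma exists_rep_mk3 (x y z : F) (h) :
    ∃ t : F, t ≠ 0 ∧ (mk3 x y z h).rep 0 = t*x ∧ (mk3 x y z h).rep 1 = t*y ∧
      (mk3 x y z h).rep 2 = t*z := by
  obtain ⟨u, hu⟩ := Projectivization.exists_smul_eq_mk_rep F ![x,y,z] (vec_ne_zero h)
  exact ⟨u, u.ne_zero, by simpa [mk3, Units.smul_def] using (congrFun hu 0).symm,
    by simpa [mk3, Units.smul_def] using (congrFun hu 1).symm, by simpa [mk3, Units.smul_def] using (congrFun hu 2).symm⟩

lemma incident_mk3 {x y z a b c : F} (h h') :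
    incident (mk3 x y z h) (mk3 a b c h') ↔ x*a + y*b + z*c = 0 := by
  obtain ⟨t, ht, h0, h1, h2⟩ := exists_rep_mk3 x y z h
  obtain ⟨u, hu, g0, g1, g2⟩ := exists_rep_mk3 a b c h'
  unfold incident
  rw [h0, h1, h2, g0, g1, g2]
  constructor
  · intro hh
    have : t * u * (x*a + y*b + z*c) = 0 := by linear_combination hh
    rcases mul_eq_zero.1 this with h | h
    · exact absurd h (mul_ne_zero ht hu)
    · exact h
  · intro hh
    have : t*x*(u*a) + t*y*(u*b) + t*z*(u*c) = t*u*(x*a+y*b+z*c) := by ring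
    rw [this, hh, mul_zero]

/-- affine point (x:y:1) -/
def aff (x y : F) : PG2 F := mk3 x y 1 (Or.inr (Or.inr one_ne_zero))
/-- infinite point (1:m:0) -/
def inf (m : F) : PG2 F := mk3 1 m 0 (Or.inl one_ne_zero)

lemma point_cases (P : PG2 F) :
    (∃ x y, P = aff x y) ∨ (∃ m, P = inf m) ∨ P = mk3 0 1 0 (Or.inr (Or.inl one_ne_zero)) := by
  induction P using Projectivization.ind with
  | h v hv =>
    have hveq : v = ![v 0, v 1, v 2] := by
      funext i; fin_cases i <;> simp
    have hv3 : v 0 ≠ 0 ∨ v 1 ≠ 0 ∨ v 2 ≠ 0 := by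
      by_contra hc
      push_neg at hc
      exact hv (by rw [hveq, hc.1, hc.2.1, hc.2.2]; funext i; fin_cases i <;> simp)
    have hP : Projectivization.mk F v hv = mk3 (v 0) (v 1) (v 2) hv3 := by
      rw [mk3, Projectivization.mk_eq_mk_iff]
      exact ⟨1, by rw [one_smul, ← hveq]⟩
    by_cases h2 : v 2 ≠ 0
    · left
      exact ⟨v 0 / v 2, v 1 / v 2, by
        rw [hP, aff, mk3_eq_iff]
        exact ⟨v 2, h2, by field_simp, by field_simp, (mul_one _).symm⟩⟩
    · push_neg at h2
      by_cases h0 : v 0 ≠ 0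
      · right; left
        exact ⟨v 1 / v 0, by
          rw [hP, inf, mk3_eq_iff]
          exact ⟨v 0, h0, by field_simp, by field_simp, by simp [h2]⟩⟩
      · push_neg at h0
        right; right
        have h1 : v 1 ≠ 0 := by tauto
        rw [hP, mk3_eq_iff]
        exact ⟨v 1, h1, by simp [h0], by simp, by simp [h2]⟩


-- Named point identifications
lemma inf_zero : (inf 0 : PG2 F) = Xinf F := rfl
lemma aff_zero : (aff 0 0 : PG2 F) = O F := rfl
lemma aff_X1 : (aff 1 0 : PG2 F) = X1 F := rfl
lemma aff_Y1 : (aff 0 1 : PG2 F) = Y1 F := rfl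
lemma Yinf_eq : (Yinf F) = mk3 (0:F) 1 0 (Or.inr (Or.inl one_ne_zero)) := rfl
lemma LX_eq_Yinf : (LX F) = Yinf F := rfl

lemma aff_inj {x y x' y' : F} : aff x y = aff x' y' ↔ x = x' ∧ y = y' := by
  rw [aff, aff, mk3_eq_iff]
  constructor
  · rintro ⟨t, ht, hx, hy, hz⟩
    rw [mul_one] at hz
    subst hz
    simp [hx, hy]
  · rintro ⟨rfl, rfl⟩
    exact ⟨1, one_ne_zero, by simp⟩

lemma inf_inj {m m' : F} : inf m = inf m' ↔ m = m' := by
  rw [inf, inf, mk3_eq_iff]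
  constructor
  · rintro ⟨t, ht, hx, hy, hz⟩
    rw [mul_one] at hx
    subst hx
    simp [hy]
  · rintro rfl
    exact ⟨1, one_ne_zero, by simp⟩

lemma aff_ne_inf {x y m : F} : aff x y ≠ inf m := by
  rw [aff, inf, Ne, mk3_eq_iff]
  rintro ⟨t, ht, hx, hy, hz⟩
  simp at hz

lemma aff_ne_Yinf {x y : F} : aff x y ≠ Yinf F := by
  rw [aff, Yinf_eq, Ne, mk3_eq_iff]
  rintro ⟨t, ht, hx, hy, hz⟩
  simp at hz

lemma inf_ne_Yinf {m : F} : inf m ≠ Yinf F := by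
  rw [inf, Yinf_eq, Ne, mk3_eq_iff]
  rintro ⟨t, ht, hx, hy, hz⟩
  simp at hx

lemma incident_aff {x y a b c : F} (h') :
    incident (aff x y) (mk3 a b c h') ↔ x*a + y*b + c = 0 := by
  rw [aff, incident_mk3, one_mul]

lemma incident_inf {m a b c : F} (h') :
    incident (inf m) (mk3 a b c h') ↔ a + m*b = 0 := by
  rw [inf, incident_mk3, one_mul, zero_mul, add_zero]

lemma incident_Yinf {a b c : F} (h') :
    incident (Yinf F) (mk3 a b c h') ↔ b = 0 := by
  rw [Yinf_eq, incident_mk3, one_mul]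
  constructor
  · intro h; linear_combination h
  · intro h; rw [h]; ring


section Membership
variable {B : Set (PG2 F)}

lemma mem_linePts {P L : PG2 F} : P ∈ linePts L ↔ incident P L := Iff.rfl

lemma memB_x0 (haxes : AxesSetting F B) (x : F) : aff x 0 ∈ B ↔ x ≠ 1 := by
  have hon : aff x 0 ∈ linePts (LX F) := by
    rw [mem_linePts, LX, incident_aff]
    ring
  rw [haxes _ (Or.inl hon)]
  constructor
  · rintro ⟨h1, _, _, _⟩ rfl
    exact h1 aff_X1
  · intro hx
    refine ⟨?_, ?_, ?_, ?_⟩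
    · rw [← aff_X1]
      intro h
      exact hx (aff_inj.1 h).1
    · rw [← inf_zero]
      exact aff_ne_inf
    · rw [← aff_Y1]
      intro h
      exact one_ne_zero (aff_inj.1 h).2.symm
    · exact aff_ne_Yinf

lemma memB_0y (haxes : AxesSetting F B) (y : F) : aff 0 y ∈ B ↔ y ≠ 1 := by
  have hon : aff 0 y ∈ linePts (LY F) := by
    rw [mem_linePts, LY, incident_aff]
    ring
  rw [haxes _ (Or.inr hon)]
  constructor
  · rintro ⟨_, _, h1, _⟩ rfl
    exact h1 aff_Y1
  · intro hy
    refine ⟨?_, ?_, ?_, ?_⟩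
    · rw [← aff_X1]
      intro h
      exact one_ne_zero (aff_inj.1 h).1.symm
    · rw [← inf_zero]
      exact aff_ne_inf
    · rw [← aff_Y1]
      intro h
      exact hy (aff_inj.1 h).2
    · exact aff_ne_Yinf

lemma memB_O (haxes : AxesSetting F B) : aff (0:F) 0 ∈ B :=
  (memB_x0 haxes 0).2 zero_ne_one

lemma notB_Xinf (haxes : AxesSetting F B) : (inf (0:F)) ∉ B := by
  rw [inf_zero]
  intro hc
  have hon : Xinf F ∈ linePts (LX F) := by
    rw [mem_linePts, Xinf, LX, incident_mk3]
    ring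
  exact ((haxes _ (Or.inl hon)).1 hc).2.1 rfl

lemma notB_Yinf (haxes : AxesSetting F B) : (Yinf F) ∉ B := by
  intro hc
  have hon : Yinf F ∈ linePts (LY F) := by
    rw [mem_linePts, LY, incident_Yinf]
  exact ((haxes _ (Or.inr hon)).1 hc).2.2.2 rfl

end Membership

section Counting
variable [Fintype F] {B : Set (PG2 F)}

lemma ncard_decomp (T : Set (PG2 F)) (hY : Yinf F ∉ T) :
    T.ncard = {p : F × F | aff p.1 p.2 ∈ T}.ncard + {m : F | inf m ∈ T}.ncard := by
  have hT : T = (fun p : F × F => aff p.1 p.2) '' {p | aff p.1 p.2 ∈ T}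
      ∪ inf '' {m | inf m ∈ T} := by
    ext P
    constructor
    · intro hP
      rcases point_cases P with ⟨x, y, rfl⟩ | ⟨m, rfl⟩ | rfl
      · exact Or.inl ⟨(x, y), hP, rfl⟩
      · exact Or.inr ⟨m, hP, rfl⟩
      · exact absurd hP hY
    · rintro (⟨p, hp, rfl⟩ | ⟨m, hm, rfl⟩)
      · exact hp
      · exact hm
  have hinja : Function.Injective (fun p : F × F => aff p.1 p.2) := by
    intro p q h
    obtain ⟨h1, h2⟩ := aff_inj.1 h
    exact Prod.ext h1 h2
  have hdisj : Disjoint ((fun p : F × F => aff p.1 p.2) '' {p | aff p.1 p.2 ∈ T})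
      (inf '' {m | inf m ∈ T}) := by
    rw [Set.disjoint_left]
    rintro P ⟨p, _, rfl⟩ ⟨m, _, hm⟩
    exact aff_ne_inf hm.symm
  have hinji : Function.Injective (inf : F → PG2 F) := fun _ _ h => inf_inj.1 h
  conv_lhs => rw [hT]
  rw [Set.ncard_union_eq hdisj (Set.toFinite _) (Set.toFinite _),
    Set.ncard_image_of_injective _ hinja, Set.ncard_image_of_injective _ hinji]

lemma ncard_setOf {α : Type*} [Fintype α] (S : Set α) :
    S.ncard = (Set.toFinite S).toFinset.card :=
  Set.ncard_eq_toFinset_card _ _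

lemma count_line (haxes : AxesSetting F B) (a b c : F) (h) :
    (B ∩ linePts (mk3 a b c h)).ncard =
      (Set.toFinite {p : F × F | aff p.1 p.2 ∈ B ∧ p.1*a + p.2*b + c = 0}).toFinset.card +
      (Set.toFinite {m : F | inf m ∈ B ∧ a + m*b = 0}).toFinset.card := by
  rw [ncard_decomp _ (fun hc => notB_Yinf haxes hc.1), ← ncard_setOf, ← ncard_setOf]
  congr 2
  · ext p
    simp [Set.mem_inter_iff, mem_linePts, incident_aff]
  · ext m
    simp [Set.mem_inter_iff, mem_linePts, incident_inf]

end Counting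


section Sets
variable [Fintype F] [DecidableEq F] (B : Set (PG2 F))

noncomputable def Aset : Finset (F × F) :=
  (Set.toFinite {p : F × F | p.1 ≠ 0 ∧ p.2 ≠ 0 ∧ aff p.1 p.2 ∈ B}).toFinset

noncomputable def Mset : Finset F :=
  (Set.toFinite {m : F | m ≠ 0 ∧ inf m ∈ B}).toFinset

variable {B}

lemma mem_Aset {p : F × F} : p ∈ Aset B ↔ p.1 ≠ 0 ∧ p.2 ≠ 0 ∧ aff p.1 p.2 ∈ B :=
  Set.Finite.mem_toFinset _

lemma mem_Mset {m : F} : m ∈ Mset B ↔ m ≠ 0 ∧ inf m ∈ B :=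
  Set.Finite.mem_toFinset _

lemma mem_Mset' (haxes : AxesSetting F B) {m : F} : m ∈ Mset B ↔ inf m ∈ B := by
  rw [mem_Mset]
  constructor
  · exact fun h => h.2
  · intro h
    refine ⟨?_, h⟩
    rintro rfl
    exact notB_Xinf haxes h

lemma count_lineInf (haxes : AxesSetting F B) :
    (B ∩ linePts (mk3 (0:F) 0 1 (Or.inr (Or.inr one_ne_zero)))).ncard = (Mset B).card := by
  rw [count_line haxes]
  have h1 : (Set.toFinite {p : F × F | aff p.1 p.2 ∈ B ∧ p.1*0 + p.2*0 + 1 = 0}).toFinset = ∅ := by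
    ext p
    simp
  have h2 : (Set.toFinite {m : F | inf m ∈ B ∧ 0 + m*0 = 0}).toFinset = Mset B := by
    ext m
    rw [Set.Finite.mem_toFinset, mem_Mset' haxes]
    simp
  rw [h1, h2, Finset.card_empty, zero_add]

lemma count_hline (haxes : AxesSetting F B) {t : F} (ht : t ≠ 0) :
    (B ∩ linePts (mk3 0 1 (-t) (Or.inr (Or.inl one_ne_zero)))).ncard =
      (if t = 1 then 0 else 1) + ((Aset B).filter (fun p => p.2 = t)).card := by
  rw [count_line haxes]
  have h2 : (Set.toFinite {m : F | inf m ∈ B ∧ 0 + m*1 = 0}).toFinset = ∅ := by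
    ext m
    rw [Set.Finite.mem_toFinset]
    simp only [Finset.notMem_empty, iff_false, Set.mem_setOf_eq, not_and]
    intro hm h0
    rw [zero_add, mul_one] at h0
    subst h0
    exact notB_Xinf haxes hm
  rw [h2, Finset.card_empty, add_zero]
  have hmem : ∀ p : F × F, (aff p.1 p.2 ∈ B ∧ p.1*0 + p.2*1 + (-t) = 0) ↔
      (aff p.1 p.2 ∈ B ∧ p.2 = t) := by
    intro p
    constructor
    · rintro ⟨h, he⟩
      exact ⟨h, by linear_combination he⟩
    · rintro ⟨h, rfl⟩
      exact ⟨h, by ring⟩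
  by_cases ht1 : t = 1
  · subst ht1
    rw [if_pos rfl, zero_add]
    congr 1
    ext p
    rw [Set.Finite.mem_toFinset, Set.mem_setOf_eq, hmem, Finset.mem_filter, mem_Aset]
    constructor
    · rintro ⟨hb, h2⟩
      refine ⟨⟨?_, by rw [h2]; exact one_ne_zero, hb⟩, h2⟩
      rintro h0
      rw [show p = (0, 1) from Prod.ext h0 h2] at hb
      exact (memB_0y haxes 1).1 hb rfl
    · rintro ⟨⟨_, _, hb⟩, h2⟩
      exact ⟨hb, h2⟩
  · rw [if_neg ht1, add_comm]
    have hins : (Set.toFinite {p : F × F | aff p.1 p.2 ∈ B ∧ p.1*0 + p.2*1 + (-t) = 0}).toFinset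
        = insert ((0:F), t) ((Aset B).filter (fun p => p.2 = t)) := by
      ext p
      rw [Set.Finite.mem_toFinset, Set.mem_setOf_eq, hmem, Finset.mem_insert,
        Finset.mem_filter, mem_Aset]
      constructor
      · rintro ⟨hb, h2⟩
        by_cases h0 : p.1 = 0
        · exact Or.inl (Prod.ext h0 h2)
        · exact Or.inr ⟨⟨h0, by rw [h2]; exact ht, hb⟩, h2⟩
      · rintro (rfl | ⟨⟨_, _, hb⟩, h2⟩)
        · exact ⟨(memB_0y haxes t).2 ht1, rfl⟩
        · exact ⟨hb, h2⟩
    rw [hins, Finset.card_insert_of_notMem]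
    intro hc
    exact ((mem_Aset.1 (Finset.mem_filter.1 hc).1).1) rfl

lemma count_vline (haxes : AxesSetting F B) {t : F} (ht : t ≠ 0) :
    (B ∩ linePts (mk3 1 0 (-t) (Or.inl one_ne_zero))).ncard =
      (if t = 1 then 0 else 1) + ((Aset B).filter (fun p => p.1 = t)).card := by
  rw [count_line haxes]
  have h2 : (Set.toFinite {m : F | inf m ∈ B ∧ 1 + m*0 = 0}).toFinset = ∅ := by
    ext m
    rw [Set.Finite.mem_toFinset]
    simp
  rw [h2, Finset.card_empty, add_zero]
  have hmem : ∀ p : F × F, (aff p.1 p.2 ∈ B ∧ p.1*1 + p.2*0 + (-t) = 0) ↔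
      (aff p.1 p.2 ∈ B ∧ p.1 = t) := by
    intro p
    constructor
    · rintro ⟨h, he⟩
      exact ⟨h, by linear_combination he⟩
    · rintro ⟨h, rfl⟩
      exact ⟨h, by ring⟩
  by_cases ht1 : t = 1
  · subst ht1
    rw [if_pos rfl, zero_add]
    congr 1
    ext p
    rw [Set.Finite.mem_toFinset, Set.mem_setOf_eq, hmem, Finset.mem_filter, mem_Aset]
    constructor
    · rintro ⟨hb, h2⟩
      refine ⟨⟨by rw [h2]; exact one_ne_zero, ?_, hb⟩, h2⟩
      rintro h0
      rw [show p = (1, 0) from Prod.ext h2 h0] at hb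
      exact (memB_x0 haxes 1).1 hb rfl
    · rintro ⟨⟨_, _, hb⟩, h2⟩
      exact ⟨hb, h2⟩
  · rw [if_neg ht1, add_comm]
    have hins : (Set.toFinite {p : F × F | aff p.1 p.2 ∈ B ∧ p.1*1 + p.2*0 + (-t) = 0}).toFinset
        = insert ((t:F), (0:F)) ((Aset B).filter (fun p => p.1 = t)) := by
      ext p
      rw [Set.Finite.mem_toFinset, Set.mem_setOf_eq, hmem, Finset.mem_insert,
        Finset.mem_filter, mem_Aset]
      constructor
      · rintro ⟨hb, h2⟩
        by_cases h0 : p.2 = 0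
        · exact Or.inl (Prod.ext h2 h0)
        · exact Or.inr ⟨⟨by rw [h2]; exact ht, h0, hb⟩, h2⟩
      · rintro (rfl | ⟨⟨_, _, hb⟩, h2⟩)
        · exact ⟨(memB_x0 haxes t).2 ht1, rfl⟩
        · exact ⟨hb, h2⟩
    rw [hins, Finset.card_insert_of_notMem]
    intro hc
    exact ((mem_Aset.1 (Finset.mem_filter.1 hc).1).2.1) rfl

end Sets


section Sets2
variable [Fintype F] [DecidableEq F] {B : Set (PG2 F)}

lemma count_slope (haxes : AxesSetting F B) {s : F} (hs : s ≠ 0) :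
    (B ∩ linePts (slopeLine F s)).ncard =
      1 + (((Aset B).filter fun p => p.2 = s*p.1).card + (if s ∈ Mset B then 1 else 0)) := by
  rw [slopeLine, count_line haxes]
  have h2 : (Set.toFinite {m : F | inf m ∈ B ∧ s + m*(-1) = 0}).toFinset
      = (Mset B).filter (fun m => m = s) := by
    ext m
    rw [Set.Finite.mem_toFinset, Set.mem_setOf_eq, Finset.mem_filter, mem_Mset' haxes]
    constructor
    · rintro ⟨h, he⟩
      exact ⟨h, by linear_combination -he⟩
    · rintro ⟨h, rfl⟩
      exact ⟨h, by ring⟩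
  have h2' : ((Mset B).filter (fun m => m = s)).card = if s ∈ Mset B then 1 else 0 := by
    rw [Finset.filter_eq', apply_ite Finset.card, Finset.card_singleton, Finset.card_empty]
  have hins : (Set.toFinite {p : F × F | aff p.1 p.2 ∈ B ∧ p.1*s + p.2*(-1) + 0 = 0}).toFinset
      = insert ((0:F), (0:F)) ((Aset B).filter (fun p => p.2 = s*p.1)) := by
    ext p
    rw [Set.Finite.mem_toFinset, Set.mem_setOf_eq, Finset.mem_insert, Finset.mem_filter, mem_Aset]
    constructor
    · rintro ⟨hb, he⟩
      have h2 : p.2 = s * p.1 := by linear_combination -he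
      by_cases h0 : p.1 = 0
      · exact Or.inl (Prod.ext h0 (by rw [h2, h0, mul_zero]))
      · exact Or.inr ⟨⟨h0, by rw [h2]; exact mul_ne_zero hs h0, hb⟩, h2⟩
    · rintro (rfl | ⟨⟨_, _, hb⟩, h2⟩)
      · exact ⟨memB_O haxes, by ring⟩
      · exact ⟨hb, by linear_combination -h2⟩
  rw [h2, h2', hins, Finset.card_insert_of_notMem]
  · ring
  · intro hc
    exact ((mem_Aset.1 (Finset.mem_filter.1 hc).1).1) rfl

lemma count_lX1 (haxes : AxesSetting F B) {b : F} (hb : b ≠ 0) :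
    (B ∩ linePts (mk3 1 b (-1) (Or.inl one_ne_zero))).ncard =
      (if b = 1 then 0 else 1) +
      (((Aset B).filter fun p => p.1 + b*p.2 = 1).card +
        ((Mset B).filter fun m => 1 + m*b = 0).card) := by
  rw [count_line haxes]
  have h2 : (Set.toFinite {m : F | inf m ∈ B ∧ 1 + m*b = 0}).toFinset
      = (Mset B).filter (fun m => 1 + m*b = 0) := by
    ext m
    rw [Set.Finite.mem_toFinset, Set.mem_setOf_eq, Finset.mem_filter, mem_Mset' haxes]
  rw [h2]
  have hmem : ∀ p : F × F, (aff p.1 p.2 ∈ B ∧ p.1*1 + p.2*b + (-1) = 0) ↔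
      (aff p.1 p.2 ∈ B ∧ p.1 + b*p.2 = 1) := by
    intro p
    constructor
    · rintro ⟨h, he⟩
      exact ⟨h, by linear_combination he⟩
    · rintro ⟨h, he⟩
      exact ⟨h, by linear_combination he⟩
  have hp2 : ∀ p : F × F, aff p.1 p.2 ∈ B → p.1 + b*p.2 = 1 → p.2 ≠ 0 := by
    intro p hB he h0
    rw [h0, mul_zero, add_zero] at he
    rw [show p = (1, 0) from Prod.ext (by rw [← he]) h0] at hB
    exact (memB_x0 haxes 1).1 hB rfl
  by_cases hb1 : b = 1
  · subst hb1
    rw [if_pos rfl, zero_add]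
    have h1 : (Set.toFinite {p : F × F | aff p.1 p.2 ∈ B ∧ p.1*1 + p.2*1 + (-1) = 0}).toFinset
        = (Aset B).filter (fun p => p.1 + 1*p.2 = 1) := by
      ext p
      rw [Set.Finite.mem_toFinset, Set.mem_setOf_eq, hmem, Finset.mem_filter, mem_Aset]
      constructor
      · rintro ⟨hB, he⟩
        have h20 : p.2 ≠ 0 := hp2 p hB he
        refine ⟨⟨?_, h20, hB⟩, he⟩
        intro h0
        rw [h0, zero_add, one_mul] at he
        rw [show p = (0, 1) from Prod.ext h0 he] at hB
        exact (memB_0y haxes 1).1 hB rfl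
      · rintro ⟨⟨_, _, hB⟩, he⟩
        exact ⟨hB, he⟩
    rw [h1]
  · rw [if_neg hb1]
    have hb1' : b⁻¹ ≠ 1 := by
      intro hc
      exact hb1 (by rw [← inv_inv b, hc, inv_one])
    have hins : (Set.toFinite {p : F × F | aff p.1 p.2 ∈ B ∧ p.1*1 + p.2*b + (-1) = 0}).toFinset
        = insert ((0:F), b⁻¹) ((Aset B).filter (fun p => p.1 + b*p.2 = 1)) := by
      ext p
      rw [Set.Finite.mem_toFinset, Set.mem_setOf_eq, hmem, Finset.mem_insert,
        Finset.mem_filter, mem_Aset]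
      constructor
      · rintro ⟨hB, he⟩
        have h20 : p.2 ≠ 0 := hp2 p hB he
        by_cases h0 : p.1 = 0
        · left
          refine Prod.ext h0 ?_
          rw [h0, zero_add] at he
          field_simp
          linear_combination he
        · exact Or.inr ⟨⟨h0, h20, hB⟩, he⟩
      · rintro (rfl | ⟨⟨_, _, hB⟩, he⟩)
        · refine ⟨(memB_0y haxes _).2 hb1', by field_simp; ring⟩
        · exact ⟨hB, he⟩
    have hcard : (Set.toFinite {p : F × F | aff p.1 p.2 ∈ B ∧ p.1*1 + p.2*b + (-1) = 0}).toFinset.card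
        = ((Aset B).filter (fun p => p.1 + b*p.2 = 1)).card + 1 := by
      rw [hins, Finset.card_insert_of_notMem]
      intro hc
      exact ((mem_Aset.1 (Finset.mem_filter.1 hc).1).1) rfl
    rw [hcard]
    ring

lemma count_lY1 (haxes : AxesSetting F B) {a : F} (ha : a ≠ 0) :
    (B ∩ linePts (mk3 a 1 (-1) (Or.inr (Or.inl one_ne_zero)))).ncard =
      (if a = 1 then 0 else 1) +
      (((Aset B).filter fun p => a*p.1 + p.2 = 1).card +
        ((Mset B).filter fun m => a + m = 0).card) := by
  rw [count_line haxes]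
  have h2 : (Set.toFinite {m : F | inf m ∈ B ∧ a + m*1 = 0}).toFinset
      = (Mset B).filter (fun m => a + m = 0) := by
    ext m
    rw [Set.Finite.mem_toFinset, Set.mem_setOf_eq, Finset.mem_filter, mem_Mset' haxes, mul_one]
  rw [h2]
  have hmem : ∀ p : F × F, (aff p.1 p.2 ∈ B ∧ p.1*a + p.2*1 + (-1) = 0) ↔
      (aff p.1 p.2 ∈ B ∧ a*p.1 + p.2 = 1) := by
    intro p
    constructor
    · rintro ⟨h, he⟩
      exact ⟨h, by linear_combination he⟩
    · rintro ⟨h, he⟩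
      exact ⟨h, by linear_combination he⟩
  have hp1 : ∀ p : F × F, aff p.1 p.2 ∈ B → a*p.1 + p.2 = 1 → p.1 ≠ 0 := by
    intro p hB he h0
    rw [h0, mul_zero, zero_add] at he
    rw [show p = (0, 1) from Prod.ext h0 (by rw [he])] at hB
    exact (memB_0y haxes 1).1 hB rfl
  by_cases ha1 : a = 1
  · subst ha1
    rw [if_pos rfl, zero_add]
    have h1 : (Set.toFinite {p : F × F | aff p.1 p.2 ∈ B ∧ p.1*1 + p.2*1 + (-1) = 0}).toFinset
        = (Aset B).filter (fun p => 1*p.1 + p.2 = 1) := by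
      ext p
      rw [Set.Finite.mem_toFinset, Set.mem_setOf_eq, hmem, Finset.mem_filter, mem_Aset]
      constructor
      · rintro ⟨hB, he⟩
        have h10 : p.1 ≠ 0 := hp1 p hB he
        refine ⟨⟨h10, ?_, hB⟩, he⟩
        intro h0
        rw [h0, add_zero, one_mul] at he
        rw [show p = (1, 0) from Prod.ext he h0] at hB
        exact (memB_x0 haxes 1).1 hB rfl
      · rintro ⟨⟨_, _, hB⟩, he⟩
        exact ⟨hB, he⟩
    rw [h1]
  · rw [if_neg ha1]
    have ha1' : a⁻¹ ≠ 1 := by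
      intro hc
      exact ha1 (by rw [← inv_inv a, hc, inv_one])
    have hins : (Set.toFinite {p : F × F | aff p.1 p.2 ∈ B ∧ p.1*a + p.2*1 + (-1) = 0}).toFinset
        = insert ((a⁻¹ : F), (0:F)) ((Aset B).filter (fun p => a*p.1 + p.2 = 1)) := by
      ext p
      rw [Set.Finite.mem_toFinset, Set.mem_setOf_eq, hmem, Finset.mem_insert,
        Finset.mem_filter, mem_Aset]
      constructor
      · rintro ⟨hB, he⟩
        have h10 : p.1 ≠ 0 := hp1 p hB he
        by_cases h0 : p.2 = 0
        · left
          refine Prod.ext ?_ h0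
          rw [h0, add_zero] at he
          field_simp
          linear_combination he
        · exact Or.inr ⟨⟨h10, h0, hB⟩, he⟩
      · rintro (rfl | ⟨⟨_, _, hB⟩, he⟩)
        · refine ⟨(memB_x0 haxes _).2 ha1', by field_simp; ring⟩
        · exact ⟨hB, he⟩
    have hcard : (Set.toFinite {p : F × F | aff p.1 p.2 ∈ B ∧ p.1*a + p.2*1 + (-1) = 0}).toFinset.card
        = ((Aset B).filter (fun p => a*p.1 + p.2 = 1)).card + 1 := by
      rw [hins, Finset.card_insert_of_notMem]
      intro hc
      exact ((mem_Aset.1 (Finset.mem_filter.1 hc).1).2.1) rfl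
    rw [hcard]
    ring

end Sets2


section FieldSums
variable [Fintype F]

lemma sum_univ_field (hq : 2 < Fintype.card F) : ∑ x : F, x = 0 := by
  classical
  have hne : ((Finset.univ.erase (0:F)).erase 1).Nonempty := by
    rw [← Finset.card_pos]
    have h1 := Finset.card_erase_of_mem (Finset.mem_univ (0:F))
    have h2 : ((Finset.univ.erase (0:F)).erase 1).card ≥ (Finset.univ.erase (0:F)).card - 1 :=
      Finset.pred_card_le_card_erase
    rw [Finset.card_univ] at h1
    omega
  obtain ⟨c, hc⟩ := hne
  have hc1 : c ≠ 1 := Finset.ne_of_mem_erase hc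
  have hc0 : c ≠ 0 := Finset.ne_of_mem_erase (Finset.mem_of_mem_erase hc)
  have hbij : ∑ x : F, c * x = ∑ x : F, x :=
    Finset.sum_bijective (fun x => c * x)
      ⟨mul_right_injective₀ hc0, fun y => ⟨c⁻¹ * y, by field_simp⟩⟩
      (fun i => by simp) (fun i _ => rfl)
  rw [← Finset.mul_sum] at hbij
  have : (c - 1) * ∑ x : F, x = 0 := by
    rw [sub_mul, one_mul, hbij, sub_self]
  rcases mul_eq_zero.1 this with h | h
  · exact absurd (by linear_combination h) hc1
  · exact h

lemma sum_univ_field_inv (hq : 2 < Fintype.card F) : ∑ x : F, x⁻¹ = 0 := by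
  have hbij : ∑ x : F, x⁻¹ = ∑ x : F, x :=
    Finset.sum_bijective (fun x : F => x⁻¹) (inv_involutive.bijective)
      (fun i => by simp) (fun i _ => rfl)
  rw [hbij]
  exact sum_univ_field hq

lemma sum_fiber_card_smul [DecidableEq F] {α : Type*} (s : Finset α) (κ : α → F) (φ : F → F) :
    ∑ b : F, (((s.filter fun p => κ p = b).card : F) * φ b) = ∑ p ∈ s, φ (κ p) := by
  rw [← Finset.sum_fiberwise s κ (fun p => φ (κ p))]
  refine Finset.sum_congr rfl fun b _ => ?_
  have : ∑ p ∈ s.filter (fun p => κ p = b), φ (κ p)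
      = ∑ p ∈ s.filter (fun p => κ p = b), φ b := by
    refine Finset.sum_congr rfl fun p hp => ?_
    rw [(Finset.mem_filter.1 hp).2]
  rw [this, Finset.sum_const, nsmul_eq_mul]

lemma sum_ite_ne_zero {M : Type*} [AddCommMonoid M] [DecidableEq F] (f : F → M)
    (hf : f 0 = 0) : ∑ x : F, (if x = 0 then 0 else f x) = ∑ x : F, f x := by
  refine Finset.sum_congr rfl fun x _ => ?_
  by_cases hx : x = 0
  · rw [if_pos hx, hx, hf]
  · rw [if_neg hx]

lemma card_filter_ne_zero [DecidableEq F] :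
    (Finset.univ.filter fun x : F => ¬ x = 0).card = Fintype.card F - 1 := by
  have : (Finset.univ.filter fun x : F => ¬ x = 0) = Finset.univ.erase 0 := by
    ext x
    simp [Finset.mem_erase, and_comm]
  rw [this, Finset.card_erase_of_mem (Finset.mem_univ _), Finset.card_univ]

lemma sum_ite_zero_one [DecidableEq F] :
    ∑ x : F, (if x = 0 then 0 else 1) = Fintype.card F - 1 := by
  rw [Finset.sum_ite, Finset.sum_const, Finset.sum_const, smul_eq_mul, smul_eq_mul,
    mul_zero, mul_one, zero_add, card_filter_ne_zero]

end FieldSums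

section Final
variable [Fintype F] [DecidableEq F]

lemma trisecant_slopes (e : F → ℕ) (h0 : e 0 = 0) (h3 : ∑ s : F, e s = 3)
    (hs : ∑ s : F, (e s : F) * s = 0) (hi : ∑ s : F, (e s : F) * s⁻¹ = 0) :
    ∃ μ s₀ : F, μ ≠ 0 ∧ s₀ ≠ 0 ∧ μ^2 + μ + 1 = 0 ∧
      ∀ s : F, s ≠ 0 → (1 ≤ e s ↔ (s = s₀ ∨ s = s₀*μ ∨ s = s₀*μ^2)) := by
  set T := Finset.univ.filter (fun s : F => 1 ≤ e s) with hTdef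
  have hmemT : ∀ s : F, s ∈ T ↔ 1 ≤ e s := by
    intro s
    rw [hTdef, Finset.mem_filter]
    simp
  have hzero : ∀ s : F, s ∉ T → e s = 0 := by
    intro s hsn
    rw [hmemT] at hsn
    omega
  have hT0 : (0:F) ∉ T := by
    rw [hmemT, h0]
    omega
  have hsum_T : ∑ s ∈ T, e s = 3 := by
    rw [← h3]
    exact Finset.sum_subset (Finset.subset_univ T) (fun x _ hx => hzero x hx)
  have hs_T : ∑ s ∈ T, (e s : F) * s = 0 := by
    rw [← hs]
    refine Finset.sum_subset (Finset.subset_univ T) fun x _ hx => ?_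
    rw [hzero x hx]
    simp
  have hi_T : ∑ s ∈ T, (e s : F) * s⁻¹ = 0 := by
    rw [← hi]
    refine Finset.sum_subset (Finset.subset_univ T) fun x _ hx => ?_
    rw [hzero x hx]
    simp
  have hcard_le : T.card ≤ 3 := by
    have h' : T.card ≤ ∑ s ∈ T, e s := by
      simpa using Finset.card_nsmul_le_sum T e 1 (fun x hx => (hmemT x).1 hx)
    omega
  have hne : T.Nonempty := by
    rw [Finset.nonempty_iff_ne_empty]
    intro hc
    rw [hc, Finset.sum_empty] at hsum_T
    omega
  have hcard_pos : 1 ≤ T.card := Finset.card_pos.2 hne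
  have hcases : T.card = 1 ∨ T.card = 2 ∨ T.card = 3 := by omega
  rcases hcases with h1 | h2 | h3c
  · -- one trisecant with multiplicity 3: char 3
    obtain ⟨t, hTt⟩ := Finset.card_eq_one.1 h1
    have ht : t ∈ T := hTt ▸ Finset.mem_singleton_self t
    have ht0 : t ≠ 0 := fun hc => hT0 (hc ▸ ht)
    rw [hTt, Finset.sum_singleton] at hsum_T hs_T
    have h3F : (3 : F) = 0 := by
      rw [hsum_T] at hs_T
      rcases mul_eq_zero.1 hs_T with h | h
      · exact_mod_cast h
      · exact absurd h ht0
    refine ⟨1, t, one_ne_zero, ht0, by linear_combination h3F, fun s hs0 => ?_⟩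
    rw [← hmemT, hTt, Finset.mem_singleton]
    constructor
    · intro h
      exact Or.inl h
    · rintro (h | h | h) <;> simpa using h
  · -- two trisecants: impossible
    exfalso
    obtain ⟨t, u, htu, hTt⟩ := Finset.card_eq_two.1 h2
    have ht : t ∈ T := hTt ▸ Finset.mem_insert_self t {u}
    have hu : u ∈ T := hTt ▸ Finset.mem_insert_of_mem (Finset.mem_singleton_self u)
    have ht0 : t ≠ 0 := fun hc => hT0 (hc ▸ ht)
    have hu0 : u ≠ 0 := fun hc => hT0 (hc ▸ hu)
    rw [hTt, Finset.sum_pair htu] at hsum_T hs_T hi_T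
    have h2' : (e t : F) * u + (e u : F) * t = 0 := by
      have := congrArg (· * (t * u)) hi_T
      simp only [add_mul, zero_mul] at this
      calc (e t : F) * u + (e u : F) * t
          = (e t : F) * t⁻¹ * (t * u) + (e u : F) * u⁻¹ * (t * u) := by
            field_simp
        _ = 0 := this
    have het : 1 ≤ e t := (hmemT t).1 ht
    have heu : 1 ≤ e u := (hmemT u).1 hu
    have hv : (e t = 1 ∧ e u = 2) ∨ (e t = 2 ∧ e u = 1) := by omega
    rcases hv with ⟨ha, hb⟩ | ⟨ha, hb⟩
    · rw [ha, hb] at hs_T h2'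
      push_cast at hs_T h2'
      exact htu (by linear_combination h2' - hs_T)
    · rw [ha, hb] at hs_T h2'
      push_cast at hs_T h2'
      exact htu (by linear_combination hs_T - h2')
  · -- three trisecants
    obtain ⟨t, u, w, htu, htw, huw, hTt⟩ := Finset.card_eq_three.1 h3c
    have ht : t ∈ T := hTt ▸ Finset.mem_insert_self _ _
    have hu : u ∈ T := hTt ▸ Finset.mem_insert_of_mem (Finset.mem_insert_self _ _)
    have hw : w ∈ T := hTt ▸ Finset.mem_insert_of_mem
      (Finset.mem_insert_of_mem (Finset.mem_singleton_self w))
    have ht0 : t ≠ 0 := fun hc => hT0 (hc ▸ ht)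
    have hu0 : u ≠ 0 := fun hc => hT0 (hc ▸ hu)
    have hw0 : w ≠ 0 := fun hc => hT0 (hc ▸ hw)
    have hsum3 : ∑ s ∈ T, e s = e t + e u + e w := by
      rw [hTt, Finset.sum_insert (by simp [htu, htw]),
        Finset.sum_insert (by simp [huw]), Finset.sum_singleton, add_assoc]
    have hall : e t = 1 ∧ e u = 1 ∧ e w = 1 := by
      have het : 1 ≤ e t := (hmemT t).1 ht
      have heu : 1 ≤ e u := (hmemT u).1 hu
      have hew : 1 ≤ e w := (hmemT w).1 hw
      rw [hsum3] at hsum_T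
      omega
    have hsse : ∑ s ∈ T, (e s : F) * s = (e t : F) * t + (e u : F) * u + (e w : F) * w := by
      rw [hTt, Finset.sum_insert (by simp [htu, htw]),
        Finset.sum_insert (by simp [huw]), Finset.sum_singleton, add_assoc]
    have hssi : ∑ s ∈ T, (e s : F) * s⁻¹
        = (e t : F) * t⁻¹ + (e u : F) * u⁻¹ + (e w : F) * w⁻¹ := by
      rw [hTt, Finset.sum_insert (by simp [htu, htw]),
        Finset.sum_insert (by simp [huw]), Finset.sum_singleton, add_assoc]
    rw [hsse, hall.1, hall.2.1, hall.2.2] at hs_T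
    rw [hssi, hall.1, hall.2.1, hall.2.2] at hi_T
    push_cast at hs_T hi_T
    rw [one_mul, one_mul, one_mul] at hs_T hi_T
    -- t + u + w = 0 and 1/t + 1/u + 1/w = 0
    have he2 : u*w + t*w + t*u = 0 := by
      have := congrArg (· * (t * u * w)) hi_T
      simp only [add_mul, zero_mul] at this
      calc u*w + t*w + t*u
          = t⁻¹ * (t * u * w) + u⁻¹ * (t * u * w) + w⁻¹ * (t * u * w) := by
            field_simp
        _ = 0 := this
    have hwv : w = -t - u := by linear_combination hs_T
    have key : u^2 + u*t + t^2 = 0 := by linear_combination -he2 + (u + t) * hwv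
    refine ⟨u * t⁻¹, t, by
        exact mul_ne_zero hu0 (inv_ne_zero ht0), ht0, ?_, fun s hs0 => ?_⟩
    · have hti : t⁻¹ * t = 1 := inv_mul_cancel₀ ht0
      linear_combination (t⁻¹*t⁻¹) * key - (u*t⁻¹ + 1 + t*t⁻¹) * hti
    · have hmu1 : t * (u * t⁻¹) = u := by field_simp
      have hti : t⁻¹ * t = 1 := inv_mul_cancel₀ ht0
      have huw2 : u^2 = t*w := by linear_combination key - t*hwv
      have hmu2 : t * (u * t⁻¹)^2 = w := by
        linear_combination (t*t⁻¹*t⁻¹) * huw2 + w*(t*t⁻¹ + 1) * hti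
      rw [← hmemT, hTt, hmu1, hmu2]
      simp only [Finset.mem_insert, Finset.mem_singleton]

end Final


section Main
variable [Fintype F] [DecidableEq F] {B : Set (PG2 F)}

noncomputable def Ncnt (B : Set (PG2 F)) (s : F) : ℕ :=
  ((Aset B).filter fun p => p.2 = s*p.1).card + (if s ∈ Mset B then 1 else 0)

lemma sum_card_filter {α : Type*} (s : Finset α) (κ : α → F) (P : F → α → Prop)
    [∀ b a, Decidable (P b a)] (h : ∀ a ∈ s, ∀ b, P b a ↔ κ a = b) :
    ∑ b : F, (s.filter (P b)).card = s.card := by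
  have he : ∀ b, s.filter (P b) = s.filter (fun a => κ a = b) := fun b =>
    Finset.filter_congr (fun a ha => by rw [h a ha b])
  calc ∑ b : F, (s.filter (P b)).card = ∑ b : F, (s.filter (fun a => κ a = b)).card := by
        refine Finset.sum_congr rfl fun b _ => ?_
        rw [he b]
    _ = s.card := (Finset.card_eq_sum_card_fiberwise (fun a _ => Finset.mem_univ (κ a))).symm

lemma sum_card_filter_mul {α : Type*} (s : Finset α) (κ : α → F) (P : F → α → Prop)
    [∀ b a, Decidable (P b a)] (h : ∀ a ∈ s, ∀ b, P b a ↔ κ a = b) (φ : F → F) :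
    ∑ b : F, ((s.filter (P b)).card : F) * φ b = ∑ a ∈ s, φ (κ a) := by
  have he : ∀ b, s.filter (P b) = s.filter (fun a => κ a = b) := fun b =>
    Finset.filter_congr (fun a ha => by rw [h a ha b])
  calc ∑ b : F, ((s.filter (P b)).card : F) * φ b
      = ∑ b : F, ((s.filter (fun a => κ a = b)).card : F) * φ b := by
        refine Finset.sum_congr rfl fun b _ => ?_
        rw [he b]
    _ = ∑ a ∈ s, φ (κ a) := sum_fiber_card_smul s κ φ

lemma AM_card (hq : 2 < Fintype.card F) (hcard : B.ncard = 3 * Fintype.card F - 1)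
    (haxes : AxesSetting F B) : (Aset B).card + (Mset B).card = Fintype.card F + 2 := by
  have hdec := ncard_decomp B (notB_Yinf haxes)
  have hm : {m : F | inf m ∈ B}.ncard = (Mset B).card := by
    rw [ncard_setOf]
    congr 1
    ext m
    rw [Set.Finite.mem_toFinset, Set.mem_setOf_eq, mem_Mset' haxes]
  have ha : {p : F × F | aff p.1 p.2 ∈ B}.ncard
      = (Fintype.card F - 1) + ((Fintype.card F - 2) + (Aset B).card) := by
    rw [ncard_setOf]
    have hsplit : (Set.toFinite {p : F × F | aff p.1 p.2 ∈ B}).toFinset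
        = ({(0:F)} ×ˢ (Finset.univ.erase 1)) ∪
          (((Finset.univ.erase 1).erase 0) ×ˢ ({(0:F)} : Finset F) ∪ Aset B) := by
      ext ⟨x, y⟩
      rw [Set.Finite.mem_toFinset, Set.mem_setOf_eq, Finset.mem_union, Finset.mem_union,
        Finset.mem_product, Finset.mem_product, Finset.mem_singleton, Finset.mem_singleton,
        Finset.mem_erase, Finset.mem_erase, Finset.mem_erase, mem_Aset]
      simp only [Finset.mem_univ, and_true]
      constructor
      · intro hBm
        by_cases h1 : x = 0
        · subst h1
          exact Or.inl ⟨rfl, (memB_0y haxes y).1 hBm⟩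
        · by_cases h2 : y = 0
          · subst h2
            exact Or.inr (Or.inl ⟨⟨h1, (memB_x0 haxes x).1 hBm⟩, rfl⟩)
          · exact Or.inr (Or.inr ⟨h1, h2, hBm⟩)
      · rintro (⟨rfl, hy⟩ | ⟨⟨hx0, hx1⟩, rfl⟩ | ⟨_, _, hBm⟩)
        · exact (memB_0y haxes y).2 hy
        · exact (memB_x0 haxes x).2 hx1
        · exact hBm
    have hd2 : Disjoint (((Finset.univ.erase 1).erase 0) ×ˢ ({(0:F)} : Finset F)) (Aset B) := by
      rw [Finset.disjoint_left]
      rintro ⟨x, y⟩ hp hq'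
      rw [Finset.mem_product, Finset.mem_singleton] at hp
      exact (mem_Aset.1 hq').2.1 hp.2
    have hd1 : Disjoint ({(0:F)} ×ˢ (Finset.univ.erase 1))
        (((Finset.univ.erase 1).erase 0) ×ˢ ({(0:F)} : Finset F) ∪ Aset B) := by
      rw [Finset.disjoint_left]
      rintro ⟨x, y⟩ hp hq'
      rw [Finset.mem_product, Finset.mem_singleton] at hp
      rcases Finset.mem_union.1 hq' with h | h
      · rw [Finset.mem_product, Finset.mem_erase] at h
        exact h.1.1 hp.1
      · exact (mem_Aset.1 h).1 hp.1
    rw [hsplit, Finset.card_union_of_disjoint hd1, Finset.card_union_of_disjoint hd2,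
      Finset.card_product, Finset.card_product, Finset.card_singleton,
      Finset.card_erase_of_mem (Finset.mem_univ _),
      Finset.card_erase_of_mem (Finset.mem_erase.2 ⟨zero_ne_one, Finset.mem_univ _⟩),
      Finset.card_erase_of_mem (Finset.mem_univ _), Finset.card_univ]
    omega
  rw [hdec, hm, ha] at hcard
  omega


lemma counts_exact (hq : 2 < Fintype.card F) (hB : IsBlocking 2 B)
    (hcard : B.ncard = 3 * Fintype.card F - 1) (haxes : AxesSetting F B) :
    (∀ t : F, ((Aset B).filter fun p => p.2 = t).card
        = (if t = 0 then 0 else 1) + (if t = 1 then 1 else 0))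
    ∧ (∀ t : F, ((Aset B).filter fun p => p.1 = t).card
        = (if t = 0 then 0 else 1) + (if t = 1 then 1 else 0))
    ∧ (Mset B).card = 2 ∧ (Aset B).card = Fintype.card F := by
  have hAM := AM_card hq hcard haxes
  have hM2 : 2 ≤ (Mset B).card := by
    have h := hB (mk3 (0:F) 0 1 (Or.inr (Or.inr one_ne_zero)))
    rwa [count_lineInf haxes] at h
  -- lower bound function
  set lb : F → ℕ := fun t => (if t = 0 then 0 else 1) + (if t = 1 then 1 else 0) with hlbdef
  have hlbsum : ∑ t : F, lb t = Fintype.card F := by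
    rw [hlbdef, Finset.sum_add_distrib, sum_ite_zero_one]
    have h1 : ∑ t : F, (if t = 1 then 1 else 0) = 1 := by
      rw [Finset.sum_ite_eq' Finset.univ (1:F) (fun _ => 1)]
      simp
    rw [h1]
    omega
  have hYlb : ∀ t : F, lb t ≤ ((Aset B).filter fun p => p.2 = t).card := by
    intro t
    by_cases ht0 : t = 0
    · subst ht0
      rw [hlbdef]
      simp [zero_ne_one]
    · have h := hB (mk3 0 1 (-t) (Or.inr (Or.inl one_ne_zero)))
      rw [count_hline haxes ht0] at h
      by_cases ht1 : t = 1
      · subst ht1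
        rw [if_pos rfl, zero_add] at h
        rw [hlbdef]
        norm_num
        omega
      · rw [if_neg ht1] at h
        rw [hlbdef]
        simp only [ht0, ht1, if_false]
        omega
  have hXlb : ∀ t : F, lb t ≤ ((Aset B).filter fun p => p.1 = t).card := by
    intro t
    by_cases ht0 : t = 0
    · subst ht0
      rw [hlbdef]
      simp [zero_ne_one]
    · have h := hB (mk3 1 0 (-t) (Or.inl one_ne_zero))
      rw [count_vline haxes ht0] at h
      by_cases ht1 : t = 1
      · subst ht1
        rw [if_pos rfl, zero_add] at h
        rw [hlbdef]
        norm_num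
        omega
      · rw [if_neg ht1] at h
        rw [hlbdef]
        simp only [ht0, ht1, if_false]
        omega
  have hYsum : ∑ t : F, ((Aset B).filter fun p => p.2 = t).card = (Aset B).card :=
    (Finset.card_eq_sum_card_fiberwise (f := fun p : F × F => p.2)
      (fun p _ => Finset.mem_univ _)).symm
  have hXsum : ∑ t : F, ((Aset B).filter fun p => p.1 = t).card = (Aset B).card :=
    (Finset.card_eq_sum_card_fiberwise (f := fun p : F × F => p.1)
      (fun p _ => Finset.mem_univ _)).symm
  have hAge : Fintype.card F ≤ (Aset B).card := by
    rw [← hlbsum, ← hYsum]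
    exact Finset.sum_le_sum (fun t _ => hYlb t)
  have hAcard : (Aset B).card = Fintype.card F := by omega
  have hMcard : (Mset B).card = 2 := by omega
  refine ⟨?_, ?_, hMcard, hAcard⟩
  · have heq : ∑ t : F, lb t = ∑ t : F, ((Aset B).filter fun p => p.2 = t).card := by
      rw [hYsum, hAcard, hlbsum]
    have := (Finset.sum_eq_sum_iff_of_le (fun t _ => hYlb t)).1 heq
    intro t
    exact (this t (Finset.mem_univ t)).symm
  · have heq : ∑ t : F, lb t = ∑ t : F, ((Aset B).filter fun p => p.1 = t).card := by
      rw [hXsum, hAcard, hlbsum]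
    have := (Finset.sum_eq_sum_iff_of_le (fun t _ => hXlb t)).1 heq
    intro t
    exact (this t (Finset.mem_univ t)).symm


lemma U_exact (hq : 2 < Fintype.card F) (hB : IsBlocking 2 B)
    (hcard : B.ncard = 3 * Fintype.card F - 1) (haxes : AxesSetting F B) :
    ∀ b : F, ((Aset B).filter fun p => p.1 + b*p.2 = 1).card
        + ((Mset B).filter fun m => 1 + m*b = 0).card
      = 1 + ((if b = 0 then 1 else 0) + (if b = 1 then 1 else 0)) := by
  obtain ⟨hcY, hcX, hM, hA⟩ := counts_exact hq hB hcard haxes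
  set U : F → ℕ := fun b => ((Aset B).filter fun p => p.1 + b*p.2 = 1).card
      + ((Mset B).filter fun m => 1 + m*b = 0).card with hUdef
  set lbu : F → ℕ := fun b => 1 + ((if b = 0 then 1 else 0) + (if b = 1 then 1 else 0)) with hlbdef
  have hU0 : U 0 = 2 := by
    rw [hUdef]
    have h1 : ((Aset B).filter fun p => p.1 + 0*p.2 = 1) = (Aset B).filter fun p => p.1 = 1 := by
      refine Finset.filter_congr fun p _ => ?_
      rw [zero_mul, add_zero]
    have h2 : ((Mset B).filter fun m => 1 + m*0 = 0) = ∅ := by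
      rw [Finset.filter_eq_empty_iff]
      intro m _
      rw [mul_zero, add_zero]
      exact one_ne_zero
    simp only
    rw [h1, h2, hcX 1, Finset.card_empty]
    norm_num
  have hUsum : ∑ b : F, U b = Fintype.card F + 2 := by
    rw [hUdef]
    simp only
    rw [Finset.sum_add_distrib]
    have h1 : ∑ b : F, ((Aset B).filter fun p => p.1 + b*p.2 = 1).card = (Aset B).card := by
      refine sum_card_filter (Aset B) (fun p => (1 - p.1) * p.2⁻¹) _ ?_
      intro p hp b
      have h2 : p.2 ≠ 0 := (mem_Aset.1 hp).2.1
      constructor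
      · intro he
        linear_combination (-p.2⁻¹) * he + b * (inv_mul_cancel₀ h2)
      · intro he
        linear_combination -p.2 * he + (1 - p.1) * (inv_mul_cancel₀ h2)
    have h2 : ∑ b : F, ((Mset B).filter fun m => 1 + m*b = 0).card = (Mset B).card := by
      refine sum_card_filter (Mset B) (fun m => -m⁻¹) _ ?_
      intro m hm b
      have hm0 : m ≠ 0 := (mem_Mset.1 hm).1
      constructor
      · intro he
        linear_combination -m⁻¹ * he + b * (inv_mul_cancel₀ hm0)
      · intro he
        linear_combination (-m) * he + (-1) * (mul_inv_cancel₀ hm0)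
    rw [h1, h2, hA, hM]
  have hlbsum : ∑ b : F, lbu b = Fintype.card F + 2 := by
    rw [hlbdef]
    simp only
    rw [Finset.sum_add_distrib, Finset.sum_add_distrib, Finset.sum_const, Finset.card_univ,
      smul_eq_mul, mul_one]
    have h1 : ∑ b : F, (if b = 0 then 1 else 0) = 1 := by
      rw [Finset.sum_ite_eq' Finset.univ (0:F) (fun _ => 1)]
      simp
    have h2 : ∑ b : F, (if b = 1 then 1 else 0) = 1 := by
      rw [Finset.sum_ite_eq' Finset.univ (1:F) (fun _ => 1)]
      simp
    rw [h1, h2]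
  have hlb_le : ∀ b : F, lbu b ≤ U b := by
    intro b
    by_cases hb0 : b = 0
    · subst hb0
      rw [hU0, hlbdef]
      norm_num
    · have h := hB (mk3 1 b (-1) (Or.inl one_ne_zero))
      rw [count_lX1 haxes hb0] at h
      by_cases hb1 : b = 1
      · subst hb1
        rw [if_pos rfl, zero_add] at h
        rw [hlbdef, hUdef]
        simp only [one_mul, mul_one] at h ⊢
        norm_num
        omega
      · rw [if_neg hb1] at h
        rw [hlbdef, hUdef]
        simp only [hb0, hb1, if_false]
        omega
  intro b
  have heq : ∑ b : F, lbu b = ∑ b : F, U b := by rw [hUsum, hlbsum]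
  have := (Finset.sum_eq_sum_iff_of_le (fun b _ => hlb_le b)).1 heq
  exact (this b (Finset.mem_univ b)).symm

lemma V_exact (hq : 2 < Fintype.card F) (hB : IsBlocking 2 B)
    (hcard : B.ncard = 3 * Fintype.card F - 1) (haxes : AxesSetting F B) :
    ∀ a : F, ((Aset B).filter fun p => a*p.1 + p.2 = 1).card
        + ((Mset B).filter fun m => a + m = 0).card
      = 1 + ((if a = 0 then 1 else 0) + (if a = 1 then 1 else 0)) := by
  obtain ⟨hcY, hcX, hM, hA⟩ := counts_exact hq hB hcard haxes
  set U : F → ℕ := fun a => ((Aset B).filter fun p => a*p.1 + p.2 = 1).card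
      + ((Mset B).filter fun m => a + m = 0).card with hUdef
  set lbu : F → ℕ := fun a => 1 + ((if a = 0 then 1 else 0) + (if a = 1 then 1 else 0)) with hlbdef
  have hU0 : U 0 = 2 := by
    rw [hUdef]
    have h1 : ((Aset B).filter fun p => 0*p.1 + p.2 = 1) = (Aset B).filter fun p => p.2 = 1 := by
      refine Finset.filter_congr fun p _ => ?_
      rw [zero_mul, zero_add]
    have h2 : ((Mset B).filter fun m => (0:F) + m = 0) = ∅ := by
      rw [Finset.filter_eq_empty_iff]
      intro m hm
      rw [zero_add]
      exact (mem_Mset.1 hm).1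
    simp only
    rw [h1, h2, hcY 1, Finset.card_empty]
    norm_num
  have hUsum : ∑ a : F, U a = Fintype.card F + 2 := by
    rw [hUdef]
    simp only
    rw [Finset.sum_add_distrib]
    have h1 : ∑ a : F, ((Aset B).filter fun p => a*p.1 + p.2 = 1).card = (Aset B).card := by
      refine sum_card_filter (Aset B) (fun p => (1 - p.2) * p.1⁻¹) _ ?_
      intro p hp a
      have h2 : p.1 ≠ 0 := (mem_Aset.1 hp).1
      constructor
      · intro he
        linear_combination (-p.1⁻¹) * he + a * (inv_mul_cancel₀ h2)
      · intro he
        linear_combination -p.1 * he + (1 - p.2) * (inv_mul_cancel₀ h2)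
    have h2 : ∑ a : F, ((Mset B).filter fun m => a + m = 0).card = (Mset B).card := by
      refine sum_card_filter (Mset B) (fun m => -m) _ ?_
      intro m hm a
      constructor
      · intro he
        linear_combination -he
      · intro he
        linear_combination -he
    rw [h1, h2, hA, hM]
  have hlbsum : ∑ a : F, lbu a = Fintype.card F + 2 := by
    rw [hlbdef]
    simp only
    rw [Finset.sum_add_distrib, Finset.sum_add_distrib, Finset.sum_const, Finset.card_univ,
      smul_eq_mul, mul_one]
    have h1 : ∑ a : F, (if a = 0 then 1 else 0) = 1 := by
      rw [Finset.sum_ite_eq' Finset.univ (0:F) (fun _ => 1)]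
      simp
    have h2 : ∑ a : F, (if a = 1 then 1 else 0) = 1 := by
      rw [Finset.sum_ite_eq' Finset.univ (1:F) (fun _ => 1)]
      simp
    rw [h1, h2]
  have hlb_le : ∀ a : F, lbu a ≤ U a := by
    intro a
    by_cases ha0 : a = 0
    · subst ha0
      rw [hU0, hlbdef]
      norm_num
    · have h := hB (mk3 a 1 (-1) (Or.inr (Or.inl one_ne_zero)))
      rw [count_lY1 haxes ha0] at h
      by_cases ha1 : a = 1
      · subst ha1
        rw [if_pos rfl, zero_add] at h
        rw [hlbdef, hUdef]
        simp only [one_mul, mul_one] at h ⊢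
        norm_num
        omega
      · rw [if_neg ha1] at h
        rw [hlbdef, hUdef]
        simp only [ha0, ha1, if_false]
        omega
  intro a
  have heq : ∑ a : F, lbu a = ∑ a : F, U a := by rw [hUsum, hlbsum]
  have := (Finset.sum_eq_sum_iff_of_le (fun a _ => hlb_le a)).1 heq
  exact (this a (Finset.mem_univ a)).symm


lemma Ncnt_def (B : Set (PG2 F)) (s : F) :
    Ncnt B s = ((Aset B).filter fun p => p.2 = s*p.1).card + (if s ∈ Mset B then 1 else 0) := rfl

lemma sum_ite_zero_mul (φ : F → F) (hφ : φ 0 = 0) :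
    ∑ t : F, (if t = 0 then (0:F) else 1) * φ t = ∑ t : F, φ t := by
  refine Finset.sum_congr rfl fun t _ => ?_
  by_cases ht : t = 0
  · subst ht
    rw [if_pos rfl, hφ, zero_mul]
  · rw [if_neg ht, one_mul]

lemma sum_ite_one_mul (c : F) (φ : F → F) :
    ∑ t : F, (if t = c then (1:F) else 0) * φ t = φ c := by
  have h : ∀ t : F, (if t = c then (1:F) else 0) * φ t = if t = c then φ t else 0 := by
    intro t
    by_cases ht : t = c
    · rw [if_pos ht, if_pos ht, one_mul]
    · rw [if_neg ht, if_neg ht, zero_mul]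
  rw [Finset.sum_congr rfl (fun t _ => h t), Finset.sum_ite_eq' Finset.univ c φ]
  simp

lemma sum_ite_mem_cast (S : Finset F) (φ : F → F) :
    ∑ s : F, ((if s ∈ S then (1:ℕ) else 0) : F) * φ s = ∑ m ∈ S, φ m := by
  have h : ∀ s : F, ((if s ∈ S then (1:ℕ) else 0) : F) * φ s = if s ∈ S then φ s else 0 := by
    intro s
    by_cases hs : s ∈ S
    · rw [if_pos hs, if_pos hs, Nat.cast_one, one_mul]
    · rw [if_neg hs, if_neg hs]
      simp
  rw [Finset.sum_congr rfl (fun s _ => h s), Finset.sum_ite_mem, Finset.univ_inter]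

lemma sum_cast_lb_mul (hq : 2 < Fintype.card F) (φ : F → F) (hφ : φ 0 = 0)
    (hφs : ∑ t : F, φ t = 0) :
    ∑ t : F, (((if t = 0 then 0 else 1) + (if t = 1 then 1 else 0) : ℕ) : F) * φ t = φ 1 := by
  have h : ∀ t : F, (((if t = 0 then 0 else 1) + (if t = 1 then 1 else 0) : ℕ) : F) * φ t
      = (if t = 0 then (0:F) else 1) * φ t + (if t = 1 then (1:F) else 0) * φ t := by
    intro t
    push_cast
    rw [add_mul]
  rw [Finset.sum_congr rfl (fun t _ => h t), Finset.sum_add_distrib,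
    sum_ite_zero_mul φ hφ, sum_ite_one_mul 1 φ, hφs, zero_add]

lemma sum_cast_lbu_mul (φ : F → F) :
    ∑ b : F, ((1 + ((if b = 0 then 1 else 0) + (if b = 1 then 1 else 0)) : ℕ) : F) * φ b
      = (∑ b : F, φ b) + (φ 0 + φ 1) := by
  have h : ∀ b : F, ((1 + ((if b = 0 then 1 else 0) + (if b = 1 then 1 else 0)) : ℕ) : F) * φ b
      = φ b + ((if b = 0 then (1:F) else 0) * φ b + (if b = 1 then (1:F) else 0) * φ b) := by
    intro b
    push_cast
    ring
  rw [Finset.sum_congr rfl (fun b _ => h b), Finset.sum_add_distrib, Finset.sum_add_distrib,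
    sum_ite_one_mul 0 φ, sum_ite_one_mul 1 φ]

lemma Ncnt_props (hq : 2 < Fintype.card F) (hB : IsBlocking 2 B)
    (hcard : B.ncard = 3 * Fintype.card F - 1) (haxes : AxesSetting F B) :
    (∀ s : F, s ≠ 0 → 1 ≤ Ncnt B s) ∧ Ncnt B 0 = 0
    ∧ (∑ s : F, Ncnt B s) = Fintype.card F + 2
    ∧ (∑ s : F, (Ncnt B s : F) * s) = 0 ∧ (∑ s : F, (Ncnt B s : F) * s⁻¹) = 0 := by
  obtain ⟨hcY, hcX, hM, hA⟩ := counts_exact hq hB hcard haxes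
  have hU := U_exact hq hB hcard haxes
  have hV := V_exact hq hB hcard haxes
  -- the slope fiber map
  have hκ : ∀ p ∈ Aset B, ∀ s : F, (p.2 = s * p.1 ↔ p.2 * p.1⁻¹ = s) := by
    intro p hp s
    have h1 : p.1 ≠ 0 := (mem_Aset.1 hp).1
    constructor
    · intro he
      linear_combination p.1⁻¹ * he + s * (inv_mul_cancel₀ h1)
    · intro he
      linear_combination p.1 * he - p.2 * (inv_mul_cancel₀ h1)
  have hκU : ∀ p ∈ Aset B, ∀ b : F, (p.1 + b*p.2 = 1 ↔ (1 - p.1) * p.2⁻¹ = b) := by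
    intro p hp b
    have h2 : p.2 ≠ 0 := (mem_Aset.1 hp).2.1
    constructor
    · intro he
      linear_combination (-p.2⁻¹) * he + b * (inv_mul_cancel₀ h2)
    · intro he
      linear_combination -p.2 * he + (1 - p.1) * (inv_mul_cancel₀ h2)
  have hκUM : ∀ m ∈ Mset B, ∀ b : F, (1 + m*b = 0 ↔ -m⁻¹ = b) := by
    intro m hm b
    have hm0 : m ≠ 0 := (mem_Mset.1 hm).1
    constructor
    · intro he
      linear_combination -m⁻¹ * he + b * (inv_mul_cancel₀ hm0)
    · intro he
      linear_combination (-m) * he + (-1) * (mul_inv_cancel₀ hm0)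
  have hκV : ∀ p ∈ Aset B, ∀ a : F, (a*p.1 + p.2 = 1 ↔ (1 - p.2) * p.1⁻¹ = a) := by
    intro p hp a
    have h2 : p.1 ≠ 0 := (mem_Aset.1 hp).1
    constructor
    · intro he
      linear_combination (-p.1⁻¹) * he + a * (inv_mul_cancel₀ h2)
    · intro he
      linear_combination -p.1 * he + (1 - p.2) * (inv_mul_cancel₀ h2)
  have hκVM : ∀ m ∈ Mset B, ∀ a : F, (a + m = 0 ↔ -m = a) := by
    intro m hm a
    constructor
    · intro he
      linear_combination -he
    · intro he
      linear_combination -he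
  -- sums of inverses of coordinates
  have hX1 : ∑ p ∈ Aset B, p.1⁻¹ = 1 := by
    have h : ∑ t : F, (((Aset B).filter fun p => p.1 = t).card : F) * t⁻¹
        = ∑ p ∈ Aset B, p.1⁻¹ := sum_card_filter_mul (Aset B) (fun p => p.1) (fun t p => p.1 = t)
      (fun p _ t => Iff.rfl) (fun t => t⁻¹)
    rw [← h]
    have h2 : ∀ t : F, (((Aset B).filter fun p => p.1 = t).card : F) * t⁻¹
        = (((if t = 0 then 0 else 1) + (if t = 1 then 1 else 0) : ℕ) : F) * t⁻¹ := by
      intro t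
      rw [hcX t]
    rw [Finset.sum_congr rfl (fun t _ => h2 t),
      sum_cast_lb_mul hq (fun t => t⁻¹) inv_zero (sum_univ_field_inv hq), inv_one]
  have hY1 : ∑ p ∈ Aset B, p.2⁻¹ = 1 := by
    have h : ∑ t : F, (((Aset B).filter fun p => p.2 = t).card : F) * t⁻¹
        = ∑ p ∈ Aset B, p.2⁻¹ := sum_card_filter_mul (Aset B) (fun p => p.2) (fun t p => p.2 = t)
      (fun p _ t => Iff.rfl) (fun t => t⁻¹)
    rw [← h]
    have h2 : ∀ t : F, (((Aset B).filter fun p => p.2 = t).card : F) * t⁻¹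
        = (((if t = 0 then 0 else 1) + (if t = 1 then 1 else 0) : ℕ) : F) * t⁻¹ := by
      intro t
      rw [hcY t]
    rw [Finset.sum_congr rfl (fun t _ => h2 t),
      sum_cast_lb_mul hq (fun t => t⁻¹) inv_zero (sum_univ_field_inv hq), inv_one]
  -- main identities from U and V pencils
  have hUid : (∑ p ∈ Aset B, (1 - p.1) * p.2⁻¹) + (∑ m ∈ Mset B, -m⁻¹) = 1 := by
    have hsplit : ∀ b : F,
        ((((Aset B).filter fun p => p.1 + b*p.2 = 1).card
          + ((Mset B).filter fun m => 1 + m*b = 0).card : ℕ) : F) * b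
        = (((Aset B).filter fun p => p.1 + b*p.2 = 1).card : F) * b
          + (((Mset B).filter fun m => 1 + m*b = 0).card : F) * b := by
      intro b
      push_cast
      rw [add_mul]
    have hL : ∑ b : F,
        ((((Aset B).filter fun p => p.1 + b*p.2 = 1).card
          + ((Mset B).filter fun m => 1 + m*b = 0).card : ℕ) : F) * b
        = (∑ p ∈ Aset B, (1 - p.1) * p.2⁻¹) + (∑ m ∈ Mset B, -m⁻¹) := by
      rw [Finset.sum_congr rfl (fun b _ => hsplit b), Finset.sum_add_distrib]
      congr 1
      · exact sum_card_filter_mul (Aset B) (fun p => (1 - p.1) * p.2⁻¹) _ hκU (fun x => x)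
      · exact sum_card_filter_mul (Mset B) (fun m => -m⁻¹) _ hκUM (fun x => x)
    have hR : ∑ b : F,
        ((((Aset B).filter fun p => p.1 + b*p.2 = 1).card
          + ((Mset B).filter fun m => 1 + m*b = 0).card : ℕ) : F) * b
        = 1 := by
      have h2 : ∀ b : F,
          ((((Aset B).filter fun p => p.1 + b*p.2 = 1).card
            + ((Mset B).filter fun m => 1 + m*b = 0).card : ℕ) : F) * b
          = ((1 + ((if b = 0 then 1 else 0) + (if b = 1 then 1 else 0)) : ℕ) : F) * b := by
        intro b
        rw [hU b]
      rw [Finset.sum_congr rfl (fun b _ => h2 b), sum_cast_lbu_mul (fun b => b),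
        sum_univ_field hq]
      simp
    rw [← hL, hR]
  have hVid : (∑ p ∈ Aset B, (1 - p.2) * p.1⁻¹) + (∑ m ∈ Mset B, -m) = 1 := by
    have hsplit : ∀ a : F,
        ((((Aset B).filter fun p => a*p.1 + p.2 = 1).card
          + ((Mset B).filter fun m => a + m = 0).card : ℕ) : F) * a
        = (((Aset B).filter fun p => a*p.1 + p.2 = 1).card : F) * a
          + (((Mset B).filter fun m => a + m = 0).card : F) * a := by
      intro a
      push_cast
      rw [add_mul]
    have hL : ∑ a : F,
        ((((Aset B).filter fun p => a*p.1 + p.2 = 1).card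
          + ((Mset B).filter fun m => a + m = 0).card : ℕ) : F) * a
        = (∑ p ∈ Aset B, (1 - p.2) * p.1⁻¹) + (∑ m ∈ Mset B, -m) := by
      rw [Finset.sum_congr rfl (fun a _ => hsplit a), Finset.sum_add_distrib]
      congr 1
      · exact sum_card_filter_mul (Aset B) (fun p => (1 - p.2) * p.1⁻¹) _ hκV (fun x => x)
      · exact sum_card_filter_mul (Mset B) (fun m => -m) _ hκVM (fun x => x)
    have hR : ∑ a : F,
        ((((Aset B).filter fun p => a*p.1 + p.2 = 1).card
          + ((Mset B).filter fun m => a + m = 0).card : ℕ) : F) * a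
        = 1 := by
      have h2 : ∀ a : F,
          ((((Aset B).filter fun p => a*p.1 + p.2 = 1).card
            + ((Mset B).filter fun m => a + m = 0).card : ℕ) : F) * a
          = ((1 + ((if a = 0 then 1 else 0) + (if a = 1 then 1 else 0)) : ℕ) : F) * a := by
        intro a
        rw [hV a]
      rw [Finset.sum_congr rfl (fun a _ => h2 a), sum_cast_lbu_mul (fun a => a),
        sum_univ_field hq]
      simp
    rw [← hL, hR]
  -- slope sums over the affine part
  have hslope : ∑ p ∈ Aset B, p.2 * p.1⁻¹ = ∑ m ∈ Mset B, -m := by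
    have h : ∀ p ∈ Aset B, p.2 * p.1⁻¹ = p.1⁻¹ - (1 - p.2) * p.1⁻¹ := by
      intro p _
      ring
    rw [Finset.sum_congr rfl h, Finset.sum_sub_distrib, hX1]
    linear_combination -hVid
  have hslopeinv : ∑ p ∈ Aset B, (p.2 * p.1⁻¹)⁻¹ = ∑ m ∈ Mset B, -m⁻¹ := by
    have h : ∀ p ∈ Aset B, (p.2 * p.1⁻¹)⁻¹ = p.2⁻¹ - (1 - p.1) * p.2⁻¹ := by
      intro p _
      rw [mul_inv_rev, inv_inv]
      ring
    rw [Finset.sum_congr rfl h, Finset.sum_sub_distrib, hY1]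
    linear_combination -hUid
  refine ⟨?_, ?_, ?_, ?_, ?_⟩
  · intro s hs
    have h := hB (slopeLine F s)
    rw [count_slope haxes hs] at h
    rw [Ncnt_def]
    omega
  · rw [Ncnt_def]
    have h1 : ((Aset B).filter fun p => p.2 = 0*p.1) = ∅ := by
      rw [Finset.filter_eq_empty_iff]
      intro p hp
      rw [zero_mul]
      exact (mem_Aset.1 hp).2.1
    have h2 : (0:F) ∉ Mset B := by
      intro hc
      exact (mem_Mset.1 hc).1 rfl
    rw [h1, if_neg h2, Finset.card_empty]
  · have h1 : ∑ s : F, ((Aset B).filter fun p => p.2 = s*p.1).card = (Aset B).card :=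
      sum_card_filter (Aset B) (fun p => p.2 * p.1⁻¹) _ hκ
    have h2 : ∑ s : F, (if s ∈ Mset B then 1 else 0) = (Mset B).card := by
      rw [Finset.sum_ite_mem, Finset.univ_inter, Finset.sum_const, smul_eq_mul, mul_one]
    calc ∑ s : F, Ncnt B s
        = (∑ s : F, ((Aset B).filter fun p => p.2 = s*p.1).card)
          + ∑ s : F, (if s ∈ Mset B then 1 else 0) := by
          rw [← Finset.sum_add_distrib]
          exact Finset.sum_congr rfl fun s _ => Ncnt_def B s
      _ = Fintype.card F + 2 := by rw [h1, h2, hA, hM]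
  · have h1 : ∑ s : F, (((Aset B).filter fun p => p.2 = s*p.1).card : F) * s
        = ∑ p ∈ Aset B, p.2 * p.1⁻¹ :=
      sum_card_filter_mul (Aset B) (fun p => p.2 * p.1⁻¹) _ hκ (fun x => x)
    have h2 : ∑ s : F, ((if s ∈ Mset B then (1:ℕ) else 0) : F) * s = ∑ m ∈ Mset B, m :=
      sum_ite_mem_cast (Mset B) (fun s => s)
    have hsplit : ∀ s : F, ((Ncnt B s : ℕ) : F) * s
        = (((Aset B).filter fun p => p.2 = s*p.1).card : F) * s
          + ((if s ∈ Mset B then (1:ℕ) else 0) : F) * s := by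
      intro s
      rw [Ncnt_def]
      push_cast
      rw [add_mul]
    rw [Finset.sum_congr rfl (fun s _ => hsplit s), Finset.sum_add_distrib, h1, h2, hslope]
    have hn : ∑ m ∈ Mset B, -m = -∑ m ∈ Mset B, m := Finset.sum_neg_distrib (fun m => m)
    rw [hn]
    ring
  · have h1 : ∑ s : F, (((Aset B).filter fun p => p.2 = s*p.1).card : F) * s⁻¹
        = ∑ p ∈ Aset B, (p.2 * p.1⁻¹)⁻¹ :=
      sum_card_filter_mul (Aset B) (fun p => p.2 * p.1⁻¹) _ hκ (fun s => s⁻¹)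
    have h2 : ∑ s : F, ((if s ∈ Mset B then (1:ℕ) else 0) : F) * s⁻¹ = ∑ m ∈ Mset B, m⁻¹ :=
      sum_ite_mem_cast (Mset B) (fun s => s⁻¹)
    have hsplit : ∀ s : F, ((Ncnt B s : ℕ) : F) * s⁻¹
        = (((Aset B).filter fun p => p.2 = s*p.1).card : F) * s⁻¹
          + ((if s ∈ Mset B then (1:ℕ) else 0) : F) * s⁻¹ := by
      intro s
      rw [Ncnt_def]
      push_cast
      rw [add_mul]
    rw [Finset.sum_congr rfl (fun s _ => hsplit s), Finset.sum_add_distrib, h1, h2, hslopeinv]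
    have hn : ∑ m ∈ Mset B, -m⁻¹ = -∑ m ∈ Mset B, m⁻¹ := Finset.sum_neg_distrib (fun m => m⁻¹)
    rw [hn]
    ring

end Main

end PG2


/-- **Lemma (trisecants).** Let `q > 2` be a prime power and let `B` be a double blocking set
of size `3q-1` in `PG(2,q)` containing all points of the two axes except `X_1, X_∞, Y_1, Y_∞`.
Then there exist nonzero `μ, s ∈ F_q` with `μ² + μ + 1 = 0` such that a line through the origin,
different from the two axes, meets `B` in more than two points if and only if its slope is
`s`, `s·μ` or `s·μ²`. (A line through the origin different from the `Y` axis with slope `t`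
is exactly the line `[t:-1:0]`.) -/
theorem dbs_axes_trisecants (F : Type*) [Field F] [Fintype F]
    (hq : 2 < Fintype.card F)
    (B : Set (PG2 F)) (hB : IsBlocking 2 B)
    (hcard : B.ncard = 3 * Fintype.card F - 1)
    (haxes : AxesSetting F B) :
    ∃ μ s : F, μ ≠ 0 ∧ s ≠ 0 ∧ μ ^ 2 + μ + 1 = 0 ∧
      ∀ L : PG2 F, incident (O F) L → L ≠ LX F → L ≠ LY F →
        (2 < (B ∩ linePts L).ncard ↔
          L = slopeLine F s ∨ L = slopeLine F (s * μ) ∨ L = slopeLine F (s * μ ^ 2)) := by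
  classical
  obtain ⟨hN1, hN0, hNsum, hNs, hNi⟩ := Ncnt_props hq hB hcard haxes
  set e : F → ℕ := fun s => if s = 0 then 0 else Ncnt B s - 1 with hedef
  have he0 : e 0 = 0 := by rw [hedef]; simp
  have hept : ∀ s : F, s ≠ 0 → e s = Ncnt B s - 1 := by
    intro s hs
    rw [hedef]
    simp [hs]
  have he3 : ∑ s : F, e s = 3 := by
    have hpt : ∀ s : F, e s + (if s = 0 then 0 else 1) = Ncnt B s := by
      intro s
      by_cases hs : s = 0
      · subst hs
        rw [he0, hN0, if_pos rfl]
      · rw [hept s hs, if_neg hs]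
        have := hN1 s hs
        omega
    have hsum := Finset.sum_congr rfl (fun s (_ : s ∈ Finset.univ) => hpt s)
    rw [Finset.sum_add_distrib, hNsum] at hsum
    rw [sum_ite_zero_one] at hsum
    omega
  have hes : ∑ s : F, (e s : F) * s = 0 := by
    have hpt : ∀ s : F, (e s : F) * s = (Ncnt B s : F) * s - s := by
      intro s
      by_cases hs : s = 0
      · subst hs
        rw [he0, hN0]
        simp
      · rw [hept s hs, Nat.cast_sub (hN1 s hs)]
        push_cast
        ring
    rw [Finset.sum_congr rfl (fun s (_ : s ∈ Finset.univ) => hpt s), Finset.sum_sub_distrib,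
      hNs, sum_univ_field hq, sub_zero]
  have hei : ∑ s : F, (e s : F) * s⁻¹ = 0 := by
    have hpt : ∀ s : F, (e s : F) * s⁻¹ = (Ncnt B s : F) * s⁻¹ - s⁻¹ := by
      intro s
      by_cases hs : s = 0
      · subst hs
        rw [he0, hN0]
        simp
      · rw [hept s hs, Nat.cast_sub (hN1 s hs)]
        push_cast
        ring
    rw [Finset.sum_congr rfl (fun s (_ : s ∈ Finset.univ) => hpt s), Finset.sum_sub_distrib,
      hNi, sum_univ_field_inv hq, sub_zero]
  obtain ⟨μ, s₀, hμ0, hs₀0, hμeq, hiff⟩ := trisecant_slopes e he0 he3 hes hei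
  have hslinj : ∀ a b : F, (slopeLine F a = slopeLine F b) ↔ a = b := by
    intro a b
    rw [slopeLine, slopeLine, mk3_eq_iff]
    constructor
    · rintro ⟨t, ht, h1, h2, h3⟩
      have ht1 : t = 1 := by linear_combination h2
      subst ht1
      rw [one_mul] at h1
      exact h1
    · rintro rfl
      exact ⟨1, one_ne_zero, by ring, by ring, by ring⟩
  refine ⟨μ, s₀, hμ0, hs₀0, hμeq, ?_⟩
  intro L hLO hLX hLY
  obtain ⟨s, hs0, rfl⟩ : ∃ s : F, s ≠ 0 ∧ L = slopeLine F s := by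
    rcases point_cases L with ⟨x, y, rfl⟩ | ⟨m, rfl⟩ | rfl
    · exfalso
      rw [O, aff] at hLO
      rw [incident_mk3] at hLO
      simp at hLO
    · have hm : m ≠ 0 := by
        rintro rfl
        exact hLY rfl
      refine ⟨-m⁻¹, neg_ne_zero.2 (inv_ne_zero hm), ?_⟩
      rw [inf, slopeLine, mk3_eq_iff]
      refine ⟨-m, neg_ne_zero.2 hm, ?_, by ring, by ring⟩
      field_simp
    · exact absurd rfl hLX
  rw [count_slope haxes hs0]
  have hmain : (2 < 1 + (((Aset B).filter fun p => p.2 = s*p.1).card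
      + (if s ∈ Mset B then 1 else 0))) ↔ 1 ≤ e s := by
    have hN := hN1 s hs0
    have heq := hept s hs0
    rw [← Ncnt_def B s, heq]
    rw [Ncnt_def] at hN
    omega
  rw [hmain, hiff s hs0, hslinj s s₀, hslinj s (s₀*μ), hslinj s (s₀*μ^2)]
end

section
/- Let Pi be a finite projective plane of order q with q > 4, and let B be a 2-fold blocking set in Pi of size 3q-1 that admits two distinct (q-1)-secants ell and m whose intersection point lies in B. Then B is minimal, i.e. no proper subset of B is a 2-fold blocking set of Pi (equivalently, for every point p in B, the set B \ {p} fails to meet some line in at least 2 points). -/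
open Configuration

open scoped Classical in
lemma dbs_aux_sum {P L : Type*} [Membership P L] [ProjectivePlane P L]
    [Fintype P] [Fintype L]
    (v : P) (S : Set P) (hv : v ∉ S) :
    ∑ T ∈ Finset.univ.filter (fun T : L => v ∈ T), {p ∈ S | p ∈ T}.ncard
      = S.ncard := by
  classical
  have hdisj : ∀ T₁ ∈ Finset.univ.filter (fun T : L => v ∈ T),
      ∀ T₂ ∈ Finset.univ.filter (fun T : L => v ∈ T), T₁ ≠ T₂ →
      Disjoint (S.toFinset.filter (fun p => p ∈ T₁))
        (S.toFinset.filter (fun p => p ∈ T₂)) := by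
    intro T₁ h₁ T₂ h₂ hne
    simp only [Finset.mem_filter, Finset.mem_univ, true_and] at h₁ h₂
    rw [Finset.disjoint_left]
    intro x hx₁ hx₂
    simp only [Finset.mem_filter, Set.mem_toFinset] at hx₁ hx₂
    rcases Nondegenerate.eq_or_eq (P := P) (L := L) hx₁.2 h₁ hx₂.2 h₂ with h | h
    · exact hv (h ▸ hx₁.1)
    · exact hne h
  have hcover : S.toFinset = (Finset.univ.filter (fun T : L => v ∈ T)).biUnion
      (fun T => S.toFinset.filter (fun p => p ∈ T)) := by
    ext x
    simp only [Finset.mem_biUnion, Finset.mem_filter, Finset.mem_univ, true_and,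
      Set.mem_toFinset]
    constructor
    · intro hx
      have hxv : x ≠ v := fun h => hv (h ▸ hx)
      obtain ⟨T, hT, -⟩ := HasLines.existsUnique_line P L x v hxv
      exact ⟨T, hT.2, hx, hT.1⟩
    · rintro ⟨T, -, hx, -⟩; exact hx
  have hbi := Finset.card_biUnion hdisj
  rw [← hcover] at hbi
  calc ∑ T ∈ Finset.univ.filter (fun T : L => v ∈ T), {p ∈ S | p ∈ T}.ncard
      = ∑ T ∈ Finset.univ.filter (fun T : L => v ∈ T),
          (S.toFinset.filter (fun p => p ∈ T)).card := by
        refine Finset.sum_congr rfl fun T _ => ?_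
        rw [← Set.ncard_coe_finset]
        congr 1
        ext x; simp [Set.mem_toFinset]
    _ = S.toFinset.card := hbi.symm
    _ = S.ncard := (Set.ncard_eq_toFinset_card' S).symm

/-- **Proposition (minimality).** Let `Π` be a finite projective plane of order `q > 4` (every
line has exactly `q+1` points) and let `B` be a 2-fold blocking set of size `3q-1` in `Π`
admitting two distinct `(q-1)`-secants `l` and `m` whose intersection point lies in `B`. Then
`B` is minimal: no proper subset of `B` is a 2-fold blocking set. -/
theorem dbs_two_long_secants_minimal (P L : Type*) [Membership P L]
    [ProjectivePlane P L] [Finite P] [Finite L]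
    (q : ℕ) (hq : 4 < q)
    (horder : ∀ l : L, {p : P | p ∈ l}.ncard = q + 1)
    (B : Set P)
    (hB : ∀ l : L, 2 ≤ {p ∈ B | p ∈ l}.ncard)
    (hcard : B.ncard = 3 * q - 1)
    (l m : L) (hlm : l ≠ m)
    (hl : {p ∈ B | p ∈ l}.ncard = q - 1)
    (hm : {p ∈ B | p ∈ m}.ncard = q - 1)
    (X : P) (hXl : X ∈ l) (hXm : X ∈ m) (hXB : X ∈ B) :
    ∀ B' : Set P, B' ⊂ B → ¬ (∀ l' : L, 2 ≤ {p ∈ B' | p ∈ l'}.ncard) := by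
  classical
  cases nonempty_fintype P
  cases nonempty_fintype L
  -- Every point lies on exactly q+1 lines
  have hncardline : ∀ p : P, {T : L | p ∈ T}.ncard = q + 1 := by
    intro p
    have h1 : lineCount L p = pointCount P l := ProjectivePlane.lineCount_eq_pointCount p l
    have h2 : pointCount P l = q + 1 := by
      rw [← horder l, ← Nat.card_coe_set_eq]
      rfl
    rw [← Nat.card_coe_set_eq]
    exact h1.trans h2
  have hfiltcard : ∀ p : P, (Finset.univ.filter (fun T : L => p ∈ T)).card = q + 1 := by
    intro p
    rw [← hncardline p, Set.ncard_eq_toFinset_card', Set.toFinset_setOf]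
  -- Key fact: every line through a hole of a (q-1)-secant, other than the secant itself,
  -- is a 2-secant of B.
  have key : ∀ w : L, {p ∈ B | p ∈ w}.ncard = q - 1 →
      ∀ v : P, v ∈ w → v ∉ B → ∀ T : L, v ∈ T → T ≠ w →
      {p ∈ B | p ∈ T}.ncard = 2 := by
    intro w hw v hvw hvB T hvT hTw
    by_contra hne2
    have h3 : 3 ≤ {p ∈ B | p ∈ T}.ncard := by have := hB T; omega
    have hsum := dbs_aux_sum (L := L) v B hvB
    set s := Finset.univ.filter (fun T' : L => v ∈ T') with hs
    have hws : w ∈ s := by simp [hs, hvw]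
    have hTs : T ∈ s.erase w := by simp [hs, hvT, hTw]
    have hcards : s.card = q + 1 := hfiltcard v
    have e1 : ∑ T' ∈ s, {p ∈ B | p ∈ T'}.ncard
        = {p ∈ B | p ∈ w}.ncard + ∑ T' ∈ s.erase w, {p ∈ B | p ∈ T'}.ncard :=
      (Finset.add_sum_erase s _ hws).symm
    have e2 : ∑ T' ∈ s.erase w, {p ∈ B | p ∈ T'}.ncard
        = {p ∈ B | p ∈ T}.ncard + ∑ T' ∈ (s.erase w).erase T, {p ∈ B | p ∈ T'}.ncard :=
      (Finset.add_sum_erase (s.erase w) _ hTs).symm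
    have hc2 : ((s.erase w).erase T).card = q - 1 := by
      rw [Finset.card_erase_of_mem hTs, Finset.card_erase_of_mem hws, hcards]; omega
    have hlow : ((s.erase w).erase T).card * 2
        ≤ ∑ T' ∈ (s.erase w).erase T, {p ∈ B | p ∈ T'}.ncard := by
      calc ((s.erase w).erase T).card * 2
          = ∑ _T' ∈ (s.erase w).erase T, 2 := by rw [Finset.sum_const, smul_eq_mul]
        _ ≤ _ := Finset.sum_le_sum fun T' _ => hB T'
    rw [hcard] at hsum
    rw [e1, e2, hw] at hsum
    rw [hc2] at hlow
    omega
  -- Every (q-1)-secant has a hole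
  have hole : ∀ w : L, {p ∈ B | p ∈ w}.ncard = q - 1 → ∃ v, v ∈ w ∧ v ∉ B := by
    intro w hw
    by_contra h
    push_neg at h
    have heq : {p : P | p ∈ w} = {p ∈ B | p ∈ w} := by
      ext x
      simp only [Set.mem_setOf_eq]
      exact ⟨fun hx => ⟨h x hx, hx⟩, fun hx => hx.2⟩
    have := horder w
    rw [heq, hw] at this
    omega
  -- The point X lies on a line meeting B in at most 2 points
  have hX : ∃ T : L, X ∈ T ∧ {p ∈ B | p ∈ T}.ncard ≤ 2 := by
    by_contra h
    push_neg at h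
    have hXnotin : X ∉ B \ {X} := by simp
    have hsum := dbs_aux_sum (L := L) X (B \ {X}) hXnotin
    set s := Finset.univ.filter (fun T' : L => X ∈ T') with hs
    have hterm : ∀ T ∈ s, {p ∈ B | p ∈ T}.ncard = {p ∈ B \ {X} | p ∈ T}.ncard + 1 := by
      intro T hT
      simp only [hs, Finset.mem_filter, Finset.mem_univ, true_and] at hT
      have hset : {p ∈ B | p ∈ T} = insert X {p ∈ B \ {X} | p ∈ T} := by
        ext x
        simp only [Set.mem_insert_iff, Set.mem_setOf_eq, Set.mem_diff,
          Set.mem_singleton_iff]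
        constructor
        · rintro ⟨h1, h2⟩
          by_cases hx : x = X
          · exact Or.inl hx
          · exact Or.inr ⟨⟨h1, hx⟩, h2⟩
        · rintro (rfl | ⟨⟨h1, -⟩, h2⟩)
          · exact ⟨hXB, hT⟩
          · exact ⟨h1, h2⟩
      rw [hset, Set.ncard_insert_of_notMem (by simp)]
    have hsum2 : ∑ T ∈ s, {p ∈ B | p ∈ T}.ncard = (B \ {X}).ncard + s.card := by
      rw [Finset.sum_congr rfl hterm, Finset.sum_add_distrib, hsum,
        Finset.sum_const, smul_eq_mul, mul_one]
    have hdiff : (B \ {X}).ncard = 3 * q - 2 := by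
      rw [Set.ncard_diff_singleton_of_mem hXB, hcard]
      omega
    have hcards : s.card = q + 1 := hfiltcard X
    have hls : l ∈ s := by simp [hs, hXl]
    have hms : m ∈ s.erase l := by simp [hs, hXm, hlm.symm]
    have e1 : ∑ T' ∈ s, {p ∈ B | p ∈ T'}.ncard
        = {p ∈ B | p ∈ l}.ncard + ∑ T' ∈ s.erase l, {p ∈ B | p ∈ T'}.ncard :=
      (Finset.add_sum_erase s _ hls).symm
    have e2 : ∑ T' ∈ s.erase l, {p ∈ B | p ∈ T'}.ncard
        = {p ∈ B | p ∈ m}.ncard + ∑ T' ∈ (s.erase l).erase m, {p ∈ B | p ∈ T'}.ncard :=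
      (Finset.add_sum_erase (s.erase l) _ hms).symm
    have hc2 : ((s.erase l).erase m).card = q - 1 := by
      rw [Finset.card_erase_of_mem hms, Finset.card_erase_of_mem hls, hcards]; omega
    have hlow : ((s.erase l).erase m).card * 3
        ≤ ∑ T' ∈ (s.erase l).erase m, {p ∈ B | p ∈ T'}.ncard := by
      calc ((s.erase l).erase m).card * 3
          = ∑ _T' ∈ (s.erase l).erase m, 3 := by rw [Finset.sum_const, smul_eq_mul]
        _ ≤ _ := Finset.sum_le_sum fun T' hT' => by
            have hT's : T' ∈ s := Finset.mem_of_mem_erase (Finset.mem_of_mem_erase hT')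
            simp only [hs, Finset.mem_filter, Finset.mem_univ, true_and] at hT's
            have := h T' hT's
            omega
    rw [hsum2, hdiff, hcards] at e1
    rw [hl] at e1
    rw [hm] at e2
    rw [hc2] at hlow
    omega
  -- Main argument
  intro B' hB' hblock
  obtain ⟨p, hpB, hpB'⟩ := Set.exists_of_ssubset hB'
  have hsubB' : B' ⊆ B := hB'.1
  have hfind : ∃ T : L, p ∈ T ∧ {x ∈ B | x ∈ T}.ncard ≤ 2 := by
    by_cases hpm : p ∈ m
    · by_cases hpl : p ∈ l
      · have hpX : p = X := by
          rcases Nondegenerate.eq_or_eq (P := P) (L := L) hpl hXl hpm hXm with h | h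
          · exact h
          · exact absurd h hlm
        rw [hpX]; exact hX
      · obtain ⟨u, hul, huB⟩ := hole l hl
        have hpu : p ≠ u := fun h => huB (h ▸ hpB)
        obtain ⟨T, ⟨hpT, huT⟩, -⟩ := HasLines.existsUnique_line P L p u hpu
        have hTl : T ≠ l := fun h => hpl (h ▸ hpT)
        exact ⟨T, hpT, (key l hl u hul huB T huT hTl).le⟩
    · obtain ⟨u, hum, huB⟩ := hole m hm
      have hpu : p ≠ u := fun h => huB (h ▸ hpB)
      obtain ⟨T, ⟨hpT, huT⟩, -⟩ := HasLines.existsUnique_line P L p u hpu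
      have hTm : T ≠ m := fun h => hpm (h ▸ hpT)
      exact ⟨T, hpT, (key m hm u hum huB T huT hTm).le⟩
  obtain ⟨T, hpT, hT2⟩ := hfind
  have hble := hblock T
  have hsub2 : {x ∈ B' | x ∈ T} ⊆ {x ∈ B | x ∈ T} \ {p} := by
    intro x hx
    exact ⟨⟨hsubB' hx.1, hx.2⟩, fun h => hpB' (h ▸ hx.1)⟩
  have hpmem : p ∈ {x ∈ B | x ∈ T} := ⟨hpB, hpT⟩
  have hdiffcard : ({x ∈ B | x ∈ T} \ {p}).ncard = {x ∈ B | x ∈ T}.ncard - 1 :=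
    Set.ncard_diff_singleton_of_mem hpmem
  have hle : {x ∈ B' | x ∈ T}.ncard ≤ ({x ∈ B | x ∈ T} \ {p}).ncard :=
    Set.ncard_le_ncard hsub2 (Set.toFinite _)
  have hBT := hB T
  omega
end

section
/- Let q be a prime power and suppose B is a double blocking set of size 3q-1 in PG(2,q) in the triangle setting (six holes, two per side and none a vertex; five midpoints off the sides). Assume the six holes are in general position, i.e. no three of them are collinear. Then no midpoint is incident with three of the six lines joining a vertex of the triangle to a hole lying on the side opposite to that vertex. -/
namespace PG2X

variable {F : Type*} [Field F]

/-- dot product on `F^3` -/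
def dotc (u v : Fin 3 → F) : F := u 0 * v 0 + u 1 * v 1 + u 2 * v 2

/-- cross product on `F^3` -/
def crossc (u v : Fin 3 → F) : Fin 3 → F :=
  ![u 1 * v 2 - u 2 * v 1, u 2 * v 0 - u 0 * v 2, u 0 * v 1 - u 1 * v 0]

lemma crossc_eq_zero_imp {u v : Fin 3 → F} (hu : u ≠ 0) (h : crossc u v = 0) :
    ∃ c : F, v = c • u := by
  have h0 := congrFun h 0
  have h1 := congrFun h 1
  have h2 := congrFun h 2
  simp [crossc, sub_eq_zero] at h0 h1 h2
  have hne : u 0 ≠ 0 ∨ u 1 ≠ 0 ∨ u 2 ≠ 0 := by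
    by_contra hc
    push_neg at hc
    apply hu
    funext i
    fin_cases i <;> simp [hc.1, hc.2.1, hc.2.2]
  rcases hne with hn | hn | hn
  · refine ⟨v 0 / u 0, funext fun i => ?_⟩
    fin_cases i <;> simp [Pi.smul_apply, smul_eq_mul] <;> field_simp
    · linear_combination h2
    · linear_combination -h1
  · refine ⟨v 1 / u 1, funext fun i => ?_⟩
    fin_cases i <;> simp [Pi.smul_apply, smul_eq_mul] <;> field_simp
    · linear_combination -h2
    · linear_combination h0
  · refine ⟨v 2 / u 2, funext fun i => ?_⟩
    fin_cases i <;> simp [Pi.smul_apply, smul_eq_mul] <;> field_simp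
    · linear_combination h1
    · linear_combination -h0

lemma bac_cab (l p q : Fin 3 → F) :
    crossc l (crossc p q) = dotc l q • p - dotc l p • q := by
  funext i
  fin_cases i <;> simp [crossc, dotc, Pi.smul_apply, smul_eq_mul] <;> ring

lemma dotc_crossc_left (u v : Fin 3 → F) : dotc u (crossc u v) = 0 := by
  simp [dotc, crossc]; ring

lemma dotc_crossc_right (u v : Fin 3 → F) : dotc v (crossc u v) = 0 := by
  simp [dotc, crossc]; ring

lemma dotc_comm (u v : Fin 3 → F) : dotc u v = dotc v u := by
  simp [dotc]; ring

lemma dotc_smul_left (c : F) (u v : Fin 3 → F) : dotc (c • u) v = c * dotc u v := by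
  simp [dotc]; ring

lemma dotc_smul_right (c : F) (u v : Fin 3 → F) : dotc u (c • v) = c * dotc u v := by
  simp [dotc]; ring

open Projectivization in
lemma rep_mk_scalar {v : Fin 3 → F} (hv : v ≠ 0) :
    ∃ c : F, c ≠ 0 ∧ (Projectivization.mk F v hv).rep = c • v := by
  obtain ⟨a, ha⟩ := Projectivization.exists_smul_eq_mk_rep F v hv
  exact ⟨(a : F), a.ne_zero, by rw [← ha]; rfl⟩

lemma incident_def (P L : PG2 F) : PG2.incident P L ↔ dotc P.rep L.rep = 0 := Iff.rfl

lemma incident_comm {P L : PG2 F} : PG2.incident P L ↔ PG2.incident L P := by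
  rw [incident_def, incident_def, dotc_comm]

lemma incident_mk {v w : Fin 3 → F} (hv : v ≠ 0) (hw : w ≠ 0) :
    PG2.incident (Projectivization.mk F v hv) (Projectivization.mk F w hw) ↔ dotc v w = 0 := by
  obtain ⟨c, hc, hcv⟩ := rep_mk_scalar hv
  obtain ⟨d, hd, hdw⟩ := rep_mk_scalar hw
  rw [incident_def, hcv, hdw, dotc_smul_left, dotc_smul_right]
  constructor
  · intro h
    rcases mul_eq_zero.1 h with h | h
    · exact absurd h hc
    rcases mul_eq_zero.1 h with h | h
    · exact absurd h hd
    · exact h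
  · intro h; rw [h, mul_zero, mul_zero]

lemma eq_iff_scalar {P Q : PG2 F} : P = Q ↔ ∃ c : F, P.rep = c • Q.rep := by
  constructor
  · intro h; exact ⟨1, by rw [h, one_smul]⟩
  · rintro ⟨c, hc⟩
    rw [← Projectivization.mk_rep P, ← Projectivization.mk_rep Q]
    rw [Projectivization.mk_eq_mk_iff']
    exact ⟨c, hc.symm⟩

lemma ortho_two_scalar {p q l : Fin 3 → F} (hl : l ≠ 0)
    (h1 : dotc l p = 0) (h2 : dotc l q = 0) : ∃ c : F, crossc p q = c • l := by
  have hb := bac_cab l p q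
  rw [h1, h2, zero_smul, zero_smul, sub_zero] at hb
  exact crossc_eq_zero_imp hl hb

/-- two distinct points lie on at most one line (self-dual). -/
lemma unique_join {P Q L L' : PG2 F} (hPQ : P ≠ Q)
    (h1 : PG2.incident P L) (h2 : PG2.incident Q L)
    (h3 : PG2.incident P L') (h4 : PG2.incident Q L') : L = L' := by
  have hindep : crossc P.rep Q.rep ≠ 0 := by
    intro h
    obtain ⟨c, hc⟩ := crossc_eq_zero_imp P.rep_nonzero h
    exact hPQ (eq_iff_scalar.2 ⟨c, hc⟩).symm
  rw [incident_comm, incident_def] at h1 h2 h3 h4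
  obtain ⟨c, hc⟩ := ortho_two_scalar L.rep_nonzero h1 h2
  obtain ⟨d, hd⟩ := ortho_two_scalar L'.rep_nonzero h3 h4
  have hc0 : c ≠ 0 := by rintro rfl; rw [zero_smul] at hc; exact hindep hc
  refine eq_iff_scalar.2 ⟨c⁻¹ * d, ?_⟩
  have hcd : c • L.rep = d • L'.rep := by rw [← hc, ← hd]
  calc L.rep = c⁻¹ • (c • L.rep) := by rw [smul_smul, inv_mul_cancel₀ hc0, one_smul]
    _ = c⁻¹ • (d • L'.rep) := by rw [hcd]
    _ = (c⁻¹ * d) • L'.rep := by rw [smul_smul]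

/-- two distinct lines meet in at most one point. -/
lemma unique_meet {P Q L L' : PG2 F} (hLL' : L ≠ L')
    (h1 : PG2.incident P L) (h2 : PG2.incident P L')
    (h3 : PG2.incident Q L) (h4 : PG2.incident Q L') : P = Q := by
  rw [incident_comm] at h1 h2 h3 h4
  exact unique_join hLL' h1 h2 h3 h4

/-- existence of a line through two distinct points (self-dual). -/
lemma exists_join {P Q : PG2 F} (hPQ : P ≠ Q) :
    ∃ L : PG2 F, PG2.incident P L ∧ PG2.incident Q L := by
  have hindep : crossc P.rep Q.rep ≠ 0 := by
    intro h
    obtain ⟨c, hc⟩ := crossc_eq_zero_imp P.rep_nonzero h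
    exact hPQ (eq_iff_scalar.2 ⟨c, hc⟩).symm
  refine ⟨Projectivization.mk F _ hindep, ?_, ?_⟩
  · have h := incident_mk P.rep_nonzero hindep
    rw [Projectivization.mk_rep] at h
    exact h.2 (dotc_crossc_left _ _)
  · have h := incident_mk Q.rep_nonzero hindep
    rw [Projectivization.mk_rep] at h
    exact h.2 (dotc_crossc_right _ _)

lemma exists_meet {L L' : PG2 F} (h : L ≠ L') :
    ∃ P : PG2 F, PG2.incident P L ∧ PG2.incident P L' := by
  obtain ⟨P, h1, h2⟩ := exists_join h
  exact ⟨P, incident_comm.1 h1, incident_comm.1 h2⟩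

end PG2X

open PG2
/-- **Triangle setting:** a double blocking set `B` of size `3q-1` in `PG(2,q)` containing all
points of a triangle (three non-concurrent lines `lA`, `lB`, `lC`) except for six *holes*, of
which exactly two lie on each side and none is a vertex; the remaining five points of `B`, the
*midpoints*, lie on none of the three sides. -/
structure TriangleDBS (F : Type*) [Field F] [Fintype F] where
  B : Set (PG2 F)
  lA : PG2 F
  lB : PG2 F
  lC : PG2 F
  distinct_AB : lA ≠ lB
  distinct_BC : lB ≠ lC
  distinct_AC : lA ≠ lC
  nonconcurrent : ¬ ∃ P : PG2 F, PG2.incident P lA ∧ PG2.incident P lB ∧ PG2.incident P lC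
  blocking : PG2.IsBlocking 2 B
  card_B : B.ncard = 3 * Fintype.card F - 1
  holesA : ((PG2.linePts lA) \ B).ncard = 2
  holesB : ((PG2.linePts lB) \ B).ncard = 2
  holesC : ((PG2.linePts lC) \ B).ncard = 2
  holes_not_vertex :
    ∀ p ∈ (PG2.linePts lA ∪ PG2.linePts lB ∪ PG2.linePts lC) \ B,
      ¬ (p ∈ PG2.linePts lA ∧ p ∈ PG2.linePts lB) ∧
      ¬ (p ∈ PG2.linePts lB ∧ p ∈ PG2.linePts lC) ∧
      ¬ (p ∈ PG2.linePts lA ∧ p ∈ PG2.linePts lC)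
  card_mid : (B \ (PG2.linePts lA ∪ PG2.linePts lB ∪ PG2.linePts lC)).ncard = 5

variable {F : Type*} [Field F] [Fintype F]

/-- The six holes of the triangle setting: points of the triangle not in `B`. -/
def TriangleDBS.holes (T : TriangleDBS F) : Set (PG2 F) :=
  (PG2.linePts T.lA ∪ PG2.linePts T.lB ∪ PG2.linePts T.lC) \ T.B

/-- The five midpoints of the triangle setting: points of `B` on none of the sides. -/
def TriangleDBS.mids (T : TriangleDBS F) : Set (PG2 F) :=
  T.B \ (PG2.linePts T.lA ∪ PG2.linePts T.lB ∪ PG2.linePts T.lC)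

/-- The holes are in general position: no three of them are collinear. -/
def TriangleDBS.HolesGeneralPosition (T : TriangleDBS F) : Prop :=
  ∀ p₁ ∈ T.holes, ∀ p₂ ∈ T.holes, ∀ p₃ ∈ T.holes,
    p₁ ≠ p₂ → p₂ ≠ p₃ → p₁ ≠ p₃ →
      ¬ ∃ L : PG2 F, PG2.incident p₁ L ∧ PG2.incident p₂ L ∧ PG2.incident p₃ L

/-- `L` is one of the six lines joining a vertex of the triangle to a hole on the side opposite
to that vertex (the vertex opposite to side `lI` is the intersection of the other two sides). -/
def TriangleDBS.VertexHoleLine (T : TriangleDBS F) (L : PG2 F) : Prop :=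
  ∃ V h : PG2 F, h ∈ T.holes ∧ PG2.incident V L ∧ PG2.incident h L ∧
    ((V ∈ PG2.linePts T.lB ∧ V ∈ PG2.linePts T.lC ∧ h ∈ PG2.linePts T.lA) ∨
     (V ∈ PG2.linePts T.lA ∧ V ∈ PG2.linePts T.lC ∧ h ∈ PG2.linePts T.lB) ∨
     (V ∈ PG2.linePts T.lA ∧ V ∈ PG2.linePts T.lB ∧ h ∈ PG2.linePts T.lC))

namespace PG2X

variable {F : Type*} [Field F] [Fintype F]

instance : Finite (PG2 F) := Quotient.finite _

/-- the sides of the triangle as an indexed family -/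
def S (T : TriangleDBS F) : Fin 3 → PG2 F := ![T.lA, T.lB, T.lC]

variable {T : TriangleDBS F}

lemma S_ne {i j : Fin 3} (h : i ≠ j) : S T i ≠ S T j := by
  fin_cases i <;> fin_cases j <;>
    first
      | exact absurd rfl h
      | exact T.distinct_AB | exact T.distinct_BC | exact T.distinct_AC
      | exact T.distinct_AB.symm | exact T.distinct_BC.symm | exact T.distinct_AC.symm

lemma vertex_not_on {i : Fin 3} {V : PG2 F} (hV : ∀ j, j ≠ i → PG2.incident V (S T j)) :
    ¬ PG2.incident V (S T i) := by
  intro hVi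
  apply T.nonconcurrent
  have hall : ∀ j, PG2.incident V (S T j) := fun j => by
    by_cases hj : j = i
    · subst hj; exact hVi
    · exact hV j hj
  exact ⟨V, hall 0, hall 1, hall 2⟩

lemma hole_side {x : PG2 F} (hx : x ∈ T.holes) : ∃ i, PG2.incident x (S T i) := by
  rcases hx.1 with (h | h) | h
  exacts [⟨0, h⟩, ⟨1, h⟩, ⟨2, h⟩]

lemma hole_side_unique {x : PG2 F} (hx : x ∈ T.holes) {i j : Fin 3}
    (hi : PG2.incident x (S T i)) (hj : PG2.incident x (S T j)) : i = j := by
  obtain ⟨h1, h2, h3⟩ := T.holes_not_vertex x hx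
  have e1 : ¬(PG2.incident x T.lA ∧ PG2.incident x T.lB) := h1
  have e2 : ¬(PG2.incident x T.lB ∧ PG2.incident x T.lC) := h2
  have e3 : ¬(PG2.incident x T.lA ∧ PG2.incident x T.lC) := h3
  fin_cases i <;> fin_cases j <;>
    first
      | rfl
      | exact (e1 ⟨hi, hj⟩).elim | exact (e1 ⟨hj, hi⟩).elim
      | exact (e2 ⟨hi, hj⟩).elim | exact (e2 ⟨hj, hi⟩).elim
      | exact (e3 ⟨hi, hj⟩).elim | exact (e3 ⟨hj, hi⟩).elim

lemma side_not_B_mem_holes {x : PG2 F} {i : Fin 3}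
    (hx : PG2.incident x (S T i)) (hB : x ∉ T.B) : x ∈ T.holes := by
  refine ⟨?_, hB⟩
  fin_cases i
  exacts [Or.inl (Or.inl hx), Or.inl (Or.inr hx), Or.inr hx]

lemma mid_not_side {x : PG2 F} (hx : x ∈ T.mids) (i : Fin 3) : ¬ PG2.incident x (S T i) := by
  intro h
  apply hx.2
  fin_cases i
  exacts [Or.inl (Or.inl h), Or.inl (Or.inr h), Or.inr h]

lemma ncard_sideholes (i : Fin 3) : (PG2.linePts (S T i) \ T.B).ncard = 2 := by
  fin_cases i
  exacts [T.holesA, T.holesB, T.holesC]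

lemma exists_second_hole {i : Fin 3} {x : PG2 F} (hx1 : x ∈ T.holes)
    (hx2 : PG2.incident x (S T i)) :
    ∃ y, y ∈ T.holes ∧ PG2.incident y (S T i) ∧ y ≠ x := by
  obtain ⟨u, v, huv, hset⟩ := Set.ncard_eq_two.1 (ncard_sideholes (T := T) i)
  have hxm : x ∈ PG2.linePts (S T i) \ T.B := ⟨hx2, hx1.2⟩
  rw [hset] at hxm
  have hu : u ∈ PG2.linePts (S T i) \ T.B := by rw [hset]; exact Set.mem_insert _ _
  have hv : v ∈ PG2.linePts (S T i) \ T.B := by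
    rw [hset]; exact Set.mem_insert_of_mem _ rfl
  rcases hxm with rfl | hxv
  · exact ⟨v, side_not_B_mem_holes hv.1 hv.2, hv.1, huv.symm⟩
  · have hxv' : x = v := hxv
    subst hxv'
    exact ⟨u, side_not_B_mem_holes hu.1 hu.2, hu.1, huv⟩

lemma exists_mid_on {L : PG2 F}
    (hone : ∀ x, x ∈ T.B → PG2.incident x L → (∃ i, PG2.incident x (S T i)) →
      ∀ y, y ∈ T.B → PG2.incident y L → (∃ i, PG2.incident y (S T i)) → x = y) :
    ∃ N ∈ T.mids, PG2.incident N L := by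
  by_contra hc
  push_neg at hc
  have h2 : 2 ≤ (T.B ∩ PG2.linePts L).ncard := T.blocking L
  have hlt : 1 < (T.B ∩ PG2.linePts L).ncard := lt_of_lt_of_le one_lt_two h2
  obtain ⟨a, ha, b, hb, hab⟩ := (Set.one_lt_ncard (Set.toFinite _)).1 hlt
  have htri : ∀ z : PG2 F, z ∈ T.B ∩ PG2.linePts L → ∃ i, PG2.incident z (S T i) := by
    intro z hz
    by_contra h
    push_neg at h
    refine hc z ⟨hz.1, ?_⟩ hz.2
    rintro ((h0 | h1) | h2)
    exacts [h 0 h0, h 1 h1, h 2 h2]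
  exact hab (hone a ha.1 ha.2 (htri a ha) b hb.1 hb.2 (htri b hb))

lemma needy_vhl {i : Fin 3} {V h L : PG2 F}
    (hV : ∀ j, j ≠ i → PG2.incident V (S T j)) (hh : h ∈ T.holes)
    (hhs : PG2.incident h (S T i))
    (hVL : PG2.incident V L) (hhL : PG2.incident h L) :
    ∃ N ∈ T.mids, PG2.incident N L := by
  have hLSi : L ≠ S T i := fun he => vertex_not_on hV (he ▸ hVL)
  apply exists_mid_on
  suffices key : ∀ x, x ∈ T.B → PG2.incident x L → (∃ m, PG2.incident x (S T m)) → x = V by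
    intro x hx1 hx2 hx3 y hy1 hy2 hy3
    rw [key x hx1 hx2 hx3, key y hy1 hy2 hy3]
  intro x hxB hxL hex
  obtain ⟨m, hxm⟩ := hex
  by_cases hmi : m = i
  · subst hmi
    exfalso
    have hxh : x = h := unique_meet hLSi hxL hxm hhL hhs
    exact hh.2 (hxh ▸ hxB)
  · have hLSm : L ≠ S T m := by
      intro he
      exact hmi (hole_side_unique hh (he ▸ hhL) hhs)
    exact unique_meet hLSm hxL hxm hVL (hV m hmi)

lemma needy_pair {i j : Fin 3} (hij : i ≠ j) {x y L : PG2 F}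
    (hx : x ∈ T.holes) (hxi : PG2.incident x (S T i))
    (hy : y ∈ T.holes) (hyj : PG2.incident y (S T j))
    (hxL : PG2.incident x L) (hyL : PG2.incident y L) :
    ∃ N ∈ T.mids, PG2.incident N L := by
  have hLi : L ≠ S T i := fun he => hij (hole_side_unique hy (he ▸ hyL) hyj)
  have hLj : L ≠ S T j := fun he => hij (hole_side_unique hx hxi (he ▸ hxL))
  apply exists_mid_on
  have hm : ∀ u, u ∈ T.B → PG2.incident u L → ∀ m, PG2.incident u (S T m) →
      m ≠ i ∧ m ≠ j := by
    intro u huB huL m hum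
    constructor
    · rintro rfl
      have : u = x := unique_meet hLi huL hum hxL hxi
      exact hx.2 (this ▸ huB)
    · rintro rfl
      have : u = y := unique_meet hLj huL hum hyL hyj
      exact hy.2 (this ▸ huB)
  intro z hzB hzL hz3 w hwB hwL hw3
  obtain ⟨m, hzm⟩ := hz3
  obtain ⟨n, hwn⟩ := hw3
  have h1 := hm z hzB hzL m hzm
  have h2 := hm w hwB hwL n hwn
  have hmn : m = n := by
    have hdec : ∀ a b c d : Fin 3, a ≠ b → c ≠ a → c ≠ b → d ≠ a → d ≠ b → c = d := by decide
    exact hdec i j m n hij h1.1 h1.2 h2.1 h2.2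
  subst hmn
  have hLm : L ≠ S T m := fun he => h1.1 (hole_side_unique hx hxi (he ▸ hxL)).symm
  exact unique_meet hLm hzL hzm hwL hwn

lemma vhl_unique_hole {i : Fin 3} {V h L : PG2 F}
    (hV : ∀ j, j ≠ i → PG2.incident V (S T j)) (hh : h ∈ T.holes)
    (hhs : PG2.incident h (S T i))
    (hVL : PG2.incident V L) (hhL : PG2.incident h L) :
    ∀ x, x ∈ T.holes → PG2.incident x L → x = h := by
  intro x hx hxL
  obtain ⟨m, hxm⟩ := hole_side hx
  have hLSi : L ≠ S T i := fun he => vertex_not_on hV (he ▸ hVL)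
  by_cases hmi : m = i
  · subst hmi
    exact unique_meet hLSi hxL hxm hhL hhs
  · exfalso
    have hLSm : L ≠ S T m := fun he => hmi (hole_side_unique hh (he ▸ hhL) hhs)
    have hxV : x = V := unique_meet hLSm hxL hxm hVL (hV m hmi)
    obtain ⟨k, hk1, hk2⟩ : ∃ k : Fin 3, k ≠ i ∧ k ≠ m := by
      have : ∀ a b : Fin 3, ∃ k : Fin 3, k ≠ a ∧ k ≠ b := by decide
      exact this i m
    have hxk : PG2.incident x (S T k) := hxV ▸ hV k hk1
    exact hk2 (hole_side_unique hx hxk hxm)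

lemma pair_match (hgen : T.HolesGeneralPosition) {L : PG2 F} {x y x' y' : PG2 F}
    (hx : x ∈ T.holes) (hy : y ∈ T.holes) (hx' : x' ∈ T.holes) (hy' : y' ∈ T.holes)
    (hxy : x ≠ y) (hxy' : x' ≠ y')
    (h1 : PG2.incident x L) (h2 : PG2.incident y L)
    (h3 : PG2.incident x' L) (h4 : PG2.incident y' L) :
    (x' = x ∧ y' = y) ∨ (x' = y ∧ y' = x) := by
  by_cases he1 : x' = x
  · by_cases he2 : y' = y
    · exact Or.inl ⟨he1, he2⟩
    · have hy'x : y' ≠ x := fun h => hxy' (he1.trans h.symm)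
      exact (hgen x hx y hy y' hy' hxy (fun h => he2 h.symm) (fun h => hy'x h.symm)
        ⟨L, h1, h2, h4⟩).elim
  · by_cases he1' : x' = y
    · by_cases he2 : y' = x
      · exact Or.inr ⟨he1', he2⟩
      · have hy'y : y' ≠ y := fun h => hxy' (he1'.trans h.symm)
        exact (hgen x hx y hy y' hy' hxy (fun h => hy'y h.symm) (fun h => he2 h.symm)
          ⟨L, h1, h2, h4⟩).elim
    · exact (hgen x hx y hy x' hx' hxy (fun h => he1' h.symm) (fun h => he1 h.symm)
        ⟨L, h1, h2, h3⟩).elim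

end PG2X

namespace PG2X

variable {F : Type*} [Field F] [Fintype F]

theorem aux (T : TriangleDBS F) (hgen : T.HolesGeneralPosition) {M : PG2 F} (hM : M ∈ T.mids)
    (L V h0 : Fin 3 → PG2 F)
    (hLne : ∀ i j : Fin 3, i ≠ j → L i ≠ L j)
    (hML : ∀ i, PG2.incident M (L i))
    (hVL : ∀ i, PG2.incident (V i) (L i))
    (hVS : ∀ i j : Fin 3, j ≠ i → PG2.incident (V i) (S T j))
    (hhole : ∀ i, h0 i ∈ T.holes)
    (hhS : ∀ i, PG2.incident (h0 i) (S T i))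
    (hhL : ∀ i, PG2.incident (h0 i) (L i)) : False := by
  have fin2 : ∀ a : Fin 2, a = 0 ∨ a = 1 := by decide
  have hdec4 : ∀ a b c d : Fin 3, a ≠ b → c ≠ d → a = c ∨ a = d ∨ b = c ∨ b = d := by
    decide
  -- second hole on each side
  have hsecond : ∀ i : Fin 3, ∃ y, y ∈ T.holes ∧ PG2.incident y (S T i) ∧ y ≠ h0 i :=
    fun i => exists_second_hole (hhole i) (hhS i)
  choose h1 hh1 hh1S hh1ne using hsecond
  -- the six holes as an indexed family
  set hol : Fin 3 × Fin 2 → PG2 F := fun q => if q.2 = 0 then h0 q.1 else h1 q.1 with hhol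
  have holval0 : ∀ q : Fin 3 × Fin 2, q.2 = 0 → hol q = h0 q.1 := by
    intro q hq; simp only [hhol, if_pos hq]
  have holval1 : ∀ q : Fin 3 × Fin 2, q.2 = 1 → hol q = h1 q.1 := by
    intro q hq; simp only [hhol]
    rw [if_neg (by rw [hq]; decide)]
  have holmem : ∀ q, hol q ∈ T.holes := by
    intro q
    rcases fin2 q.2 with hq | hq
    · rw [holval0 q hq]; exact hhole q.1
    · rw [holval1 q hq]; exact hh1 q.1
  have holS : ∀ q : Fin 3 × Fin 2, PG2.incident (hol q) (S T q.1) := by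
    intro q
    rcases fin2 q.2 with hq | hq
    · rw [holval0 q hq]; exact hhS q.1
    · rw [holval1 q hq]; exact hh1S q.1
  have hol_ne_side : ∀ a b : Fin 3 × Fin 2, a.1 ≠ b.1 → hol a ≠ hol b := by
    intro a b hab he
    have hb : PG2.incident (hol a) (S T b.1) := by rw [he]; exact holS b
    exact hab (hole_side_unique (holmem a) (holS a) hb)
  have hol_inj : Function.Injective hol := by
    intro a b hab
    have h1' : PG2.incident (hol a) (S T b.1) := by rw [hab]; exact holS b
    have hside : a.1 = b.1 := hole_side_unique (holmem a) (holS a) h1'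
    have hsnd : a.2 = b.2 := by
      rcases fin2 a.2 with ha | ha <;> rcases fin2 b.2 with hb | hb
      · rw [ha, hb]
      · exfalso
        rw [holval0 a ha, holval1 b hb, ← hside] at hab
        exact hh1ne a.1 (hab.symm)
      · exfalso
        rw [holval1 a ha, holval0 b hb, hside] at hab
        exact hh1ne b.1 hab
      · rw [ha, hb]
    exact Prod.ext hside hsnd
  have hMB : M ∈ T.B := hM.1
  have hMnh : ∀ q, hol q ≠ M := fun q he => (holmem q).2 (he ▸ hMB)
  -- the unique hole on L i is h0 i
  have hLuniq : ∀ i, ∀ x, x ∈ T.holes → PG2.incident x (L i) → x = h0 i :=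
    fun i => vhl_unique_hole (fun j hj => hVS i j hj) (hhole i) (hhS i) (hVL i) (hhL i)
  -- joining lines of cross-side pairs of holes
  have hJex : ∀ p : (Fin 3 × Fin 2) × (Fin 3 × Fin 2), ∃ Lp : PG2 F,
      p.1.1 ≠ p.2.1 → PG2.incident (hol p.1) Lp ∧ PG2.incident (hol p.2) Lp := by
    intro p
    by_cases hp : p.1.1 ≠ p.2.1
    · obtain ⟨Lp, ha, hb⟩ := exists_join (hol_ne_side p.1 p.2 hp)
      exact ⟨Lp, fun _ => ⟨ha, hb⟩⟩
    · exact ⟨T.lA, fun hc => absurd hc hp⟩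
  choose J hJ using hJex
  -- the twelve cross-side pairs
  have hcross_card : (Finset.univ.filter
      (fun p : (Fin 3 × Fin 2) × (Fin 3 × Fin 2) => p.1.1 < p.2.1)).card = 12 := by decide
  set crossF : Finset ((Fin 3 × Fin 2) × (Fin 3 × Fin 2)) :=
    Finset.univ.filter (fun p => p.1.1 < p.2.1) with hcrossF
  have hcross_ne : ∀ p ∈ crossF, p.1.1 ≠ p.2.1 := by
    intro p hp
    exact ne_of_lt (Finset.mem_filter.1 hp).2
  have hcross_lt : ∀ p ∈ crossF, p.1.1 < p.2.1 := by
    intro p hp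
    exact (Finset.mem_filter.1 hp).2
  -- a pair whose joining line passes through M cannot involve any h0-hole
  have hsafe0 : ∀ p ∈ crossF, PG2.incident M (J p) → p.1.2 = 1 ∧ p.2.2 = 1 := by
    intro p hp hMJ
    have hne := hcross_ne p hp
    obtain ⟨hJ1, hJ2⟩ := hJ p hne
    constructor
    · rcases fin2 p.1.2 with h | h
      · exfalso
        have hinc : PG2.incident (hol p.1) (L p.1.1) := by
          rw [holval0 p.1 h]; exact hhL p.1.1
        have hE : J p = L p.1.1 :=
          unique_join (hMnh p.1) hJ1 hMJ hinc (hML p.1.1)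
        have h2' : PG2.incident (hol p.2) (L p.1.1) := hE ▸ hJ2
        have := hLuniq p.1.1 (hol p.2) (holmem p.2) h2'
        rw [← holval0 p.1 h] at this
        exact hol_ne_side p.2 p.1 (Ne.symm hne) this
      · exact h
    · rcases fin2 p.2.2 with h | h
      · exfalso
        have hinc : PG2.incident (hol p.2) (L p.2.1) := by
          rw [holval0 p.2 h]; exact hhL p.2.1
        have hE : J p = L p.2.1 :=
          unique_join (hMnh p.2) hJ2 hMJ hinc (hML p.2.1)
        have h2' : PG2.incident (hol p.1) (L p.2.1) := hE ▸ hJ1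
        have := hLuniq p.2.1 (hol p.1) (holmem p.1) h2'
        rw [← holval0 p.2 h] at this
        exact hol_ne_side p.1 p.2 hne this
      · exact h
  classical
  -- at most one cross pair line passes through M
  set unsafeF := crossF.filter (fun p => PG2.incident M (J p)) with hunsafeF
  have hunsafe_card : unsafeF.card ≤ 1 := by
    rw [Finset.card_le_one]
    intro p hp q hq
    obtain ⟨hpc, hpM⟩ := Finset.mem_filter.1 hp
    obtain ⟨hqc, hqM⟩ := Finset.mem_filter.1 hq
    have hpne := hcross_ne p hpc
    have hqne := hcross_ne q hqc
    obtain ⟨hp1, hp2⟩ := hJ p hpne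
    obtain ⟨hq1, hq2⟩ := hJ q hqne
    obtain ⟨hp12, hp22⟩ := hsafe0 p hpc hpM
    obtain ⟨hq12, hq22⟩ := hsafe0 q hqc hqM
    by_cases hline : J p = J q
    · have hq1' : PG2.incident (hol q.1) (J p) := by rw [hline]; exact hq1
      have hq2' : PG2.incident (hol q.2) (J p) := by rw [hline]; exact hq2
      rcases pair_match hgen (holmem p.1) (holmem p.2) (holmem q.1) (holmem q.2)
          (hol_ne_side p.1 p.2 hpne) (hol_ne_side q.1 q.2 hqne)
          hp1 hp2 hq1' hq2' with ⟨e1, e2⟩ | ⟨e1, e2⟩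
      · exact Prod.ext (hol_inj e1).symm (hol_inj e2).symm
      · exfalso
        have i1 : q.1 = p.2 := hol_inj e1
        have i2 : q.2 = p.1 := hol_inj e2
        have hlt1 := hcross_lt p hpc
        have hlt2 := hcross_lt q hqc
        rw [i1, i2] at hlt2
        exact absurd (lt_trans hlt1 hlt2) (lt_irrefl _)
    · exfalso
      -- a hole shared by both lines forces the lines to coincide
      have hshare : ∀ a b : Fin 3 × Fin 2, hol a = hol b →
          PG2.incident (hol a) (J p) → PG2.incident (hol b) (J q) → False := by
        intro a b hab hain hbin
        have hbin' : PG2.incident (hol a) (J q) := by rw [hab]; exact hbin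
        exact hline (unique_join (hMnh a) hain hpM hbin' hqM)
      by_cases e11 : hol p.1 = hol q.1
      · exact hshare p.1 q.1 e11 hp1 hq1
      by_cases e12 : hol p.1 = hol q.2
      · exact hshare p.1 q.2 e12 hp1 hq2
      by_cases e21 : hol p.2 = hol q.1
      · exact hshare p.2 q.1 e21 hp2 hq1
      by_cases e22 : hol p.2 = hol q.2
      · exact hshare p.2 q.2 e22 hp2 hq2
      -- otherwise the four side indices are pairwise distinct, impossible in Fin 3
      have hols : ∀ a b : Fin 3 × Fin 2, a.2 = 1 → b.2 = 1 → hol a ≠ hol b → a.1 ≠ b.1 := by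
        intro a b ha hb hne he
        apply hne
        rw [holval1 a ha, holval1 b hb, he]
      have d1 := hols p.1 q.1 hp12 hq12 e11
      have d2 := hols p.1 q.2 hp12 hq22 e12
      have d3 := hols p.2 q.1 hp22 hq12 e21
      have d4 := hols p.2 q.2 hp22 hq22 e22
      rcases hdec4 p.1.1 p.2.1 q.1.1 q.2.1 hpne hqne with h | h | h | h
      exacts [d1 h, d2 h, d3 h, d4 h]
  -- the safe pairs
  set P := crossF.filter (fun p => ¬ PG2.incident M (J p)) with hP
  have hPcard : 11 ≤ P.card := by
    have hsum : unsafeF.card + P.card = crossF.card :=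
      Finset.card_filter_add_card_filter_not
        (p := fun p => PG2.incident M (J p))
    have hcc : crossF.card = 12 := hcross_card
    omega
  -- choose a midpoint other than M on each safe pair line
  have hNex : ∀ p : {p // p ∈ P}, ∃ N, N ∈ T.mids ∧ PG2.incident N (J p.1) ∧ N ≠ M := by
    intro p
    obtain ⟨hpc, hpM⟩ := Finset.mem_filter.1 p.2
    have hpne := hcross_ne p.1 hpc
    obtain ⟨ha, hb⟩ := hJ p.1 hpne
    obtain ⟨N, hN1, hN2⟩ := needy_pair hpne (holmem p.1.1) (holS p.1.1)
      (holmem p.1.2) (holS p.1.2) ha hb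
    exact ⟨N, hN1, hN2, fun he => hpM (he ▸ hN2)⟩
  choose Np hNp1 hNp2 hNp3 using hNex
  -- the vertex–second-hole lines
  have hex3 : ∀ a : Fin 3, ∃ b : Fin 3, b ≠ a := by decide
  have hKex : ∀ i : Fin 3, ∃ Ki : PG2 F, PG2.incident (V i) Ki ∧ PG2.incident (h1 i) Ki := by
    intro i
    have hne : V i ≠ h1 i := by
      intro he
      obtain ⟨j, hj⟩ := hex3 i
      have hinc : PG2.incident (h1 i) (S T j) := he ▸ hVS i j hj
      exact hj (hole_side_unique (hh1 i) hinc (hh1S i))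
    exact exists_join hne
  choose K hKV hKh using hKex
  have hMK : ∀ i, ¬ PG2.incident M (K i) := by
    intro i hMKi
    have hKL : K i ≠ L i := by
      intro he
      exact hh1ne i (hLuniq i (h1 i) (hh1 i) (he ▸ hKh i))
    have hMV : M = V i := unique_meet hKL hMKi (hML i) (hKV i) (hVL i)
    obtain ⟨j, hj⟩ := hex3 i
    exact mid_not_side hM j (hMV ▸ hVS i j hj)
  have hNKex : ∀ i : Fin 3, ∃ N, N ∈ T.mids ∧ PG2.incident N (K i) ∧ N ≠ M := by
    intro i
    obtain ⟨N, hN1, hN2⟩ := needy_vhl (fun j hj => hVS i j hj) (hh1 i) (hh1S i) (hKV i) (hKh i)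
    exact ⟨N, hN1, hN2, fun he => hMK i (he ▸ hN2)⟩
  choose NK hNK1 hNK2 hNK3 using hNKex
  have hKuniq : ∀ i, ∀ x, x ∈ T.holes → PG2.incident x (K i) → x = h1 i :=
    fun i => vhl_unique_hole (fun j hj => hVS i j hj) (hh1 i) (hh1S i) (hKV i) (hKh i)
  -- finiteness of the remaining midpoints
  have hmidsfin : (T.mids \ {M} : Set (PG2 F)).Finite := Set.toFinite _
  have hmids4 : (T.mids \ {M} : Set (PG2 F)).ncard = 4 := by
    have h5 : T.mids.ncard = 5 := T.card_mid
    rw [Set.ncard_diff_singleton_of_mem hM, h5]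
  -- the tokens
  let g : ((Fin 3 × Fin 2) × (Fin 3 × Fin 2)) → Fin 2 → Fin 3 × Fin 2 :=
    fun p a => if a = 0 then p.1 else p.2
  have g0 : ∀ p, g p 0 = p.1 := fun p => if_pos rfl
  have g1 : ∀ p, g p 1 = p.2 := fun p => if_neg (by decide)
  have hginc : ∀ p ∈ crossF, ∀ a : Fin 2, PG2.incident (hol (g p a)) (J p) := by
    intro p hp a
    obtain ⟨ha, hb⟩ := hJ p (hcross_ne p hp)
    rcases fin2 a with h | h
    · rw [h, g0]; exact ha
    · rw [h, g1]; exact hb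
  have hPsub : ∀ p : {p // p ∈ P}, p.1 ∈ crossF := fun p => (Finset.mem_filter.1 p.2).1
  let ι := ({p // p ∈ P} × Fin 2) ⊕ Fin 3
  let f : ι → PG2 F × PG2 F :=
    Sum.elim (fun pa => (hol (g pa.1.1 pa.2), Np pa.1)) (fun i => (hol (i, 1), NK i))
  have hKinc1 : ∀ i : Fin 3, PG2.incident (hol (i, 1)) (K i) := by
    intro i
    rw [holval1 (i, 1) rfl]
    exact hKh i
  -- tokens determine the line
  have htok : ∀ (p : {p // p ∈ P}) (a : Fin 2) (L' : PG2 F),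
      PG2.incident (hol (g p.1 a)) L' → PG2.incident (Np p) L' → J p.1 = L' := by
    intro p a L' h1' h2'
    have hne : hol (g p.1 a) ≠ Np p := fun he => (holmem _).2 (he ▸ (hNp1 p).1)
    exact unique_join hne (hginc p.1 (hPsub p) a) (hNp2 p) h1' h2'
  -- injectivity of the token map
  have hinj : ∀ u v : ι, f u = f v → u = v := by
    have hKcase : ∀ (p : {p // p ∈ P}) (a : Fin 2) (j : Fin 3),
        hol (g p.1 a) = hol (j, 1) → Np p = NK j → False := by
      intro p a j h1c h2c
      have hline : J p.1 = K j := by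
        apply htok p a
        · rw [h1c]; exact hKinc1 j
        · rw [h2c]; exact hNK2 j
      obtain ⟨hpa, hpb⟩ := hJ p.1 (hcross_ne p.1 (hPsub p))
      have e1 : hol p.1.1 = h1 j := hKuniq j _ (holmem p.1.1) (by rw [← hline]; exact hpa)
      have e2 : hol p.1.2 = h1 j := hKuniq j _ (holmem p.1.2) (by rw [← hline]; exact hpb)
      exact hol_ne_side p.1.1 p.1.2 (hcross_ne p.1 (hPsub p)) (e1.trans e2.symm)
    rintro (⟨p, a⟩ | i) (⟨q, b⟩ | j) huv
    · have h1c : hol (g p.1 a) = hol (g q.1 b) := congrArg Prod.fst huv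
      have h2c : Np p = Np q := congrArg Prod.snd huv
      have hline : J p.1 = J q.1 := by
        apply htok p a
        · rw [h1c]; exact hginc q.1 (hPsub q) b
        · rw [h2c]; exact hNp2 q
      obtain ⟨hpa, hpb⟩ := hJ p.1 (hcross_ne p.1 (hPsub p))
      obtain ⟨hqa, hqb⟩ := hJ q.1 (hcross_ne q.1 (hPsub q))
      have hq1' : PG2.incident (hol q.1.1) (J p.1) := by rw [hline]; exact hqa
      have hq2' : PG2.incident (hol q.1.2) (J p.1) := by rw [hline]; exact hqb
      have hpq : p = q := by
        rcases pair_match hgen (holmem p.1.1) (holmem p.1.2) (holmem q.1.1) (holmem q.1.2)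
            (hol_ne_side _ _ (hcross_ne p.1 (hPsub p)))
            (hol_ne_side _ _ (hcross_ne q.1 (hPsub q)))
            hpa hpb hq1' hq2' with ⟨e1, e2⟩ | ⟨e1, e2⟩
        · exact Subtype.ext (Prod.ext (hol_inj e1).symm (hol_inj e2).symm)
        · exfalso
          have i1 : q.1.1 = p.1.2 := hol_inj e1
          have i2 : q.1.2 = p.1.1 := hol_inj e2
          have hlt1 := hcross_lt p.1 (hPsub p)
          have hlt2 := hcross_lt q.1 (hPsub q)
          rw [i1, i2] at hlt2
          exact absurd (lt_trans hlt1 hlt2) (lt_irrefl _)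
      rw [hpq] at h1c ⊢
      have hab : a = b := by
        by_contra hne2
        rcases fin2 a with ha | ha <;> rcases fin2 b with hb | hb
        · exact hne2 (ha.trans hb.symm)
        · rw [ha, hb, g0, g1] at h1c
          exact hol_ne_side q.1.1 q.1.2 (hcross_ne q.1 (hPsub q)) h1c
        · rw [ha, hb, g1, g0] at h1c
          exact hol_ne_side q.1.2 q.1.1 (Ne.symm (hcross_ne q.1 (hPsub q))) h1c
        · exact hne2 (ha.trans hb.symm)
      rw [hab]
    · exact absurd huv (by intro hc; exact hKcase p a j (congrArg Prod.fst hc) (congrArg Prod.snd hc))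
    · exact absurd huv (by intro hc; exact hKcase q b i (congrArg Prod.fst hc).symm (congrArg Prod.snd hc).symm)
    · have hij : ((i, (1 : Fin 2)) : Fin 3 × Fin 2) = (j, 1) := hol_inj (congrArg Prod.fst huv)
      have : i = j := congrArg Prod.fst hij
      rw [this]
  -- the counting
  have hmaps : ∀ u : ι, f u ∈ (Finset.image hol Finset.univ) ×ˢ hmidsfin.toFinset := by
    rintro (⟨p, a⟩ | i) <;> rw [Finset.mem_product]
    · constructor
      · exact Finset.mem_image.2 ⟨g p.1 a, Finset.mem_univ _, rfl⟩
      · rw [Set.Finite.mem_toFinset]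
        exact ⟨hNp1 p, hNp3 p⟩
    · constructor
      · exact Finset.mem_image.2 ⟨(i, 1), Finset.mem_univ _, rfl⟩
      · rw [Set.Finite.mem_toFinset]
        exact ⟨hNK1 i, hNK3 i⟩
  have hcardle : (Finset.univ : Finset ι).card ≤
      ((Finset.image hol Finset.univ) ×ˢ hmidsfin.toFinset).card := by
    apply Finset.card_le_card_of_injOn f
    · intro u _
      exact hmaps u
    · intro u _ v _ huv
      exact hinj u v huv
  have ecoe : Fintype.card {p // p ∈ P} = P.card := Fintype.card_coe P
  have e1 : (Finset.univ : Finset ι).card = Fintype.card {p // p ∈ P} * 2 + 3 := by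
    simp [ι, Finset.card_univ]
  have e2 : ((Finset.image hol Finset.univ) ×ˢ hmidsfin.toFinset).card = 24 := by
    rw [Finset.card_product, Finset.card_image_of_injective _ hol_inj]
    have h4 : hmidsfin.toFinset.card = 4 := by
      rw [← Set.ncard_eq_toFinset_card _ hmidsfin]
      exact hmids4
    rw [h4]
    simp
  omega

end PG2X

namespace PG2X

variable {F : Type*} [Field F] [Fintype F]

lemma vhl_data {T : TriangleDBS F} {Lx : PG2 F} (h : T.VertexHoleLine Lx) :
    ∃ (k : Fin 3) (Vx hx : PG2 F), hx ∈ T.holes ∧ PG2.incident Vx Lx ∧ PG2.incident hx Lx ∧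
      (∀ j, j ≠ k → PG2.incident Vx (S T j)) ∧ PG2.incident hx (S T k) := by
  obtain ⟨Vx, hx, hhx, hVi, hhi, hcase⟩ := h
  rcases hcase with ⟨h1, h2, h3⟩ | ⟨h1, h2, h3⟩ | ⟨h1, h2, h3⟩
  · refine ⟨0, Vx, hx, hhx, hVi, hhi, ?_, h3⟩
    intro j hj
    fin_cases j
    · exact absurd rfl hj
    · exact h1
    · exact h2
  · refine ⟨1, Vx, hx, hhx, hVi, hhi, ?_, h3⟩
    intro j hj
    fin_cases j
    · exact h1
    · exact absurd rfl hj
    · exact h2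
  · refine ⟨2, Vx, hx, hhx, hVi, hhi, ?_, h3⟩
    intro j hj
    fin_cases j
    · exact h1
    · exact h2
    · exact absurd rfl hj

lemma samecase {T : TriangleDBS F} {M : PG2 F} (hM : M ∈ T.mids) {k : Fin 3}
    {Lx Ly Vx Vy : PG2 F}
    (hne : Lx ≠ Ly) (hMx : PG2.incident M Lx) (hMy : PG2.incident M Ly)
    (hVx : PG2.incident Vx Lx) (hVy : PG2.incident Vy Ly)
    (hVSx : ∀ j, j ≠ k → PG2.incident Vx (S T j))
    (hVSy : ∀ j, j ≠ k → PG2.incident Vy (S T j)) : False := by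
  obtain ⟨j1, j2, hj1, hj2, hj12⟩ : ∃ j1 j2 : Fin 3, j1 ≠ k ∧ j2 ≠ k ∧ j1 ≠ j2 := by
    have hh : ∀ k : Fin 3, ∃ j1 j2 : Fin 3, j1 ≠ k ∧ j2 ≠ k ∧ j1 ≠ j2 := by decide
    exact hh k
  have hVV : Vx = Vy :=
    unique_meet (S_ne hj12) (hVSx j1 hj1) (hVSx j2 hj2) (hVSy j1 hj1) (hVSy j2 hj2)
  have hVxLy : PG2.incident Vx Ly := by rw [hVV]; exact hVy
  have hMV : M = Vx := unique_meet hne hMx hMy hVx hVxLy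
  exact mid_not_side hM j1 (hMV ▸ hVSx j1 hj1)

end PG2X

/-- **Lemma.** In the triangle setting, if the six holes are in general position, then no midpoint
is incident with three of the six lines joining a vertex of the triangle to a hole on the
opposite side. -/
theorem no_midpoint_on_three_vertex_hole_lines (T : TriangleDBS F)
    (hgen : T.HolesGeneralPosition) :
    ∀ M ∈ T.mids, ¬ ∃ L₁ L₂ L₃ : PG2 F,
      L₁ ≠ L₂ ∧ L₂ ≠ L₃ ∧ L₁ ≠ L₃ ∧
      T.VertexHoleLine L₁ ∧ T.VertexHoleLine L₂ ∧ T.VertexHoleLine L₃ ∧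
      PG2.incident M L₁ ∧ PG2.incident M L₂ ∧ PG2.incident M L₃ := by
  intro M hM
  rintro ⟨L1, L2, L3, h12, h23, h13, hv1, hv2, hv3, hM1, hM2, hM3⟩
  obtain ⟨k1, V1, x1, hx1, hV1, hx1L, hV1S, hx1S⟩ := PG2X.vhl_data hv1
  obtain ⟨k2, V2, x2, hx2, hV2, hx2L, hV2S, hx2S⟩ := PG2X.vhl_data hv2
  obtain ⟨k3, V3, x3, hx3, hV3, hx3L, hV3S, hx3S⟩ := PG2X.vhl_data hv3
  have hk12 : k1 ≠ k2 := by
    intro he; subst he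
    exact PG2X.samecase hM h12 hM1 hM2 hV1 hV2 hV1S hV2S
  have hk13 : k1 ≠ k3 := by
    intro he; subst he
    exact PG2X.samecase hM h13 hM1 hM3 hV1 hV3 hV1S hV3S
  have hk23 : k2 ≠ k3 := by
    intro he; subst he
    exact PG2X.samecase hM h23 hM2 hM3 hV2 hV3 hV2S hV3S
  set kf : Fin 3 → Fin 3 := ![k1, k2, k3] with hkf
  have hkinj : Function.Injective kf := by
    intro a b hab
    fin_cases a <;> fin_cases b <;>
      first
        | rfl
        | exact absurd hab hk12 | exact absurd hab (Ne.symm hk12)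
        | exact absurd hab hk13 | exact absurd hab (Ne.symm hk13)
        | exact absurd hab hk23 | exact absurd hab (Ne.symm hk23)
  have hbij : Function.Bijective kf := Finite.injective_iff_bijective.1 hkinj
  let e : Fin 3 ≃ Fin 3 := Equiv.ofBijective kf hbij
  have hke : ∀ i : Fin 3, kf (e.symm i) = i := fun i => e.apply_symm_apply i
  set Lv : Fin 3 → PG2 F := ![L1, L2, L3] with hLv
  set Vv : Fin 3 → PG2 F := ![V1, V2, V3] with hVv
  set xv : Fin 3 → PG2 F := ![x1, x2, x3] with hxv
  have hLvne : ∀ a b : Fin 3, a ≠ b → Lv a ≠ Lv b := by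
    intro a b hab
    fin_cases a <;> fin_cases b <;>
      first
        | exact absurd rfl hab
        | exact h12 | exact Ne.symm h12
        | exact h13 | exact Ne.symm h13
        | exact h23 | exact Ne.symm h23
  have hMLv : ∀ a : Fin 3, PG2.incident M (Lv a) := by
    intro a; fin_cases a
    exacts [hM1, hM2, hM3]
  have hVLv : ∀ a : Fin 3, PG2.incident (Vv a) (Lv a) := by
    intro a; fin_cases a
    exacts [hV1, hV2, hV3]
  have hVSv : ∀ (a : Fin 3) (j : Fin 3), j ≠ kf a → PG2.incident (Vv a) (PG2X.S T j) := by
    intro a; fin_cases a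
    exacts [hV1S, hV2S, hV3S]
  have hxholev : ∀ a : Fin 3, xv a ∈ T.holes := by
    intro a; fin_cases a
    exacts [hx1, hx2, hx3]
  have hxSv : ∀ a : Fin 3, PG2.incident (xv a) (PG2X.S T (kf a)) := by
    intro a; fin_cases a
    exacts [hx1S, hx2S, hx3S]
  have hxLv : ∀ a : Fin 3, PG2.incident (xv a) (Lv a) := by
    intro a; fin_cases a
    exacts [hx1L, hx2L, hx3L]
  refine PG2X.aux T hgen hM (fun i => Lv (e.symm i)) (fun i => Vv (e.symm i))
    (fun i => xv (e.symm i)) ?_ ?_ ?_ ?_ ?_ ?_ ?_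
  · intro i j hij
    exact hLvne _ _ (fun hee => hij (e.symm.injective hee))
  · intro i
    exact hMLv _
  · intro i
    exact hVLv _
  · intro i j hj
    exact hVSv (e.symm i) j (by rw [hke i]; exact hj)
  · intro i
    exact hxholev _
  · intro i
    have := hxSv (e.symm i)
    rwa [hke i] at this
  · intro i
    exact hxLv _
end

section
/- Let q be a prime power and suppose B is a double blocking set of size 3q-1 in PG(2,q) in the triangle setting (six holes, two per side and none a vertex; five midpoints off the sides). If S and S' are two distinct 3-element subsets of the set of six holes such that the three points of S are collinear and the three points of S' are collinear, then S and S' are disjoint. -/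
namespace PG2Aux
open PG2 Projectivization

variable {F : Type*} [Field F]

noncomputable def dot3 (u v : Fin 3 → F) : F := u 0 * v 0 + u 1 * v 1 + u 2 * v 2

noncomputable def cross3 (u v : Fin 3 → F) : Fin 3 → F :=
  ![u 1 * v 2 - u 2 * v 1, u 2 * v 0 - u 0 * v 2, u 0 * v 1 - u 1 * v 0]

lemma dot3_comm (u v : Fin 3 → F) : dot3 u v = dot3 v u := by
  simp only [dot3]; ring

lemma dot3_smul_left (c : F) (u v : Fin 3 → F) : dot3 (c • u) v = c * dot3 u v := by
  simp only [dot3, Pi.smul_apply, smul_eq_mul]; ring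

lemma dot3_cross_left (u v : Fin 3 → F) : dot3 u (cross3 u v) = 0 := by
  simp [dot3, cross3]; ring

lemma dot3_cross_right (u v : Fin 3 → F) : dot3 v (cross3 u v) = 0 := by
  simp [dot3, cross3]; ring

lemma cross3_cross3 (u v x : Fin 3 → F) :
    cross3 (cross3 u v) x = dot3 x u • v - dot3 x v • u := by
  funext i
  fin_cases i <;> simp [cross3, dot3] <;> ring

lemma parallel_of_cross3_eq_zero {u v : Fin 3 → F} (hu : u ≠ 0) (h : cross3 u v = 0) :
    ∃ c : F, v = c • u := by
  have h0 := congrFun h 0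
  have h1 := congrFun h 1
  have h2 := congrFun h 2
  simp only [cross3, Matrix.cons_val_zero, Matrix.cons_val_one, Matrix.head_cons,
    Matrix.cons_val_two, Matrix.tail_cons, Pi.zero_apply, sub_eq_zero] at h0 h1 h2
  have solve : ∀ i : Fin 3, (u i * v 0 = v i * u 0) → (u i * v 1 = v i * u 1) →
      (u i * v 2 = v i * u 2) → u i ≠ 0 → ∃ c : F, v = c • u := by
    intro i k0 k1 k2 hi
    have key : u i • v = v i • u := by
      funext j
      simp only [Pi.smul_apply, smul_eq_mul]
      fin_cases j
      · exact k0
      · exact k1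
      · exact k2
    refine ⟨(u i)⁻¹ * v i, ?_⟩
    have := congrArg (fun w => (u i)⁻¹ • w) key
    simpa [smul_smul, inv_mul_cancel₀ hi] using this
  by_cases e0 : u 0 ≠ 0
  · exact solve 0 (by ring) (by linear_combination h2) (by linear_combination -h1) e0
  by_cases e1 : u 1 ≠ 0
  · exact solve 1 (by linear_combination -h2) (by ring) (by linear_combination h0) e1
  by_cases e2 : u 2 ≠ 0
  · exact solve 2 (by linear_combination h1) (by linear_combination -h0) (by ring) e2
  push_neg at e0 e1 e2
  exact absurd (by funext j; fin_cases j <;> simpa) hu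

lemma incident_def {P L : PG2 F} : P.incident L ↔ dot3 P.rep L.rep = 0 := Iff.rfl

lemma incident_comm {P L : PG2 F} : P.incident L ↔ L.incident P := by
  rw [incident_def, incident_def, dot3_comm]

lemma eq_iff_par {P Q : PG2 F} : P = Q ↔ ∃ c : F, c ≠ 0 ∧ Q.rep = c • P.rep := by
  constructor
  · rintro rfl
    exact ⟨1, one_ne_zero, (one_smul _ _).symm⟩
  · rintro ⟨c, hc, hrep⟩
    have h1 : Projectivization.mk F Q.rep Q.rep_nonzero =
        Projectivization.mk F P.rep P.rep_nonzero :=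
      (Projectivization.mk_eq_mk_iff' F _ _ _ _).mpr ⟨c, hrep.symm⟩
    rw [Projectivization.mk_rep, Projectivization.mk_rep] at h1
    exact h1.symm

lemma cross3_rep_ne_zero {A B : PG2 F} (hAB : A ≠ B) : cross3 A.rep B.rep ≠ 0 := by
  intro h
  obtain ⟨c, hc⟩ := parallel_of_cross3_eq_zero A.rep_nonzero h
  have hc0 : c ≠ 0 := by
    rintro rfl
    rw [zero_smul] at hc
    exact B.rep_nonzero hc
  exact hAB (eq_iff_par.mpr ⟨c, hc0, hc⟩)

lemma exists_meet (A B : PG2 F) (hAB : A ≠ B) :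
    ∃ P : PG2 F, P.incident A ∧ P.incident B := by
  have hc := cross3_rep_ne_zero hAB
  refine ⟨Projectivization.mk F _ hc, ?_, ?_⟩ <;>
  · rw [incident_def]
    obtain ⟨a, ha⟩ := Projectivization.exists_smul_eq_mk_rep F _ hc
    rw [← ha, Units.smul_def, dot3_smul_left]
    first
      | rw [dot3_comm, dot3_cross_left, mul_zero]
      | rw [dot3_comm, dot3_cross_right, mul_zero]

lemma unique_pt {A B : PG2 F} (hAB : A ≠ B) {P Q : PG2 F}
    (hPA : P.incident A) (hPB : P.incident B) (hQA : Q.incident A) (hQB : Q.incident B) :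
    P = Q := by
  have hw := cross3_rep_ne_zero hAB
  have key : ∀ x : Fin 3 → F, x ≠ 0 → dot3 x A.rep = 0 → dot3 x B.rep = 0 →
      ∃ c : F, c ≠ 0 ∧ x = c • cross3 A.rep B.rep := by
    intro x hx hxA hxB
    have hz : cross3 (cross3 A.rep B.rep) x = 0 := by
      rw [cross3_cross3, hxA, hxB, zero_smul, zero_smul, sub_zero]
    obtain ⟨c, hc⟩ := parallel_of_cross3_eq_zero hw hz
    refine ⟨c, ?_, hc⟩
    rintro rfl
    rw [zero_smul] at hc
    exact hx hc
  obtain ⟨c, hc0, hcx⟩ := key P.rep P.rep_nonzero hPA hPB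
  obtain ⟨d, hd0, hdx⟩ := key Q.rep Q.rep_nonzero hQA hQB
  refine eq_iff_par.mpr ⟨d * c⁻¹, by simp [hd0, hc0], ?_⟩
  rw [hdx, hcx, smul_smul, mul_assoc, inv_mul_cancel₀ hc0, mul_one]

lemma unique_line {P Q : PG2 F} (hPQ : P ≠ Q) {L M : PG2 F}
    (h1 : P.incident L) (h2 : Q.incident L) (h3 : P.incident M) (h4 : Q.incident M) :
    L = M :=
  unique_pt hPQ (incident_comm.mp h1) (incident_comm.mp h2) (incident_comm.mp h3)
    (incident_comm.mp h4)

lemma exists_join (P Q : PG2 F) (h : P ≠ Q) : ∃ L : PG2 F, P.incident L ∧ Q.incident L := by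
  obtain ⟨L, h1, h2⟩ := exists_meet P Q h
  exact ⟨L, incident_comm.mpr h1, incident_comm.mpr h2⟩

lemma mem_linePts {P L : PG2 F} : P ∈ linePts L ↔ P.incident L := Iff.rfl


section Counting

variable [Fintype F]

instance : Finite (PG2 F) := Quotient.finite _

lemma nat_sq_sub_one (q : ℕ) (h : 2 ≤ q) : q ^ 2 - 1 = (q + 1) * (q - 1) := by
  obtain ⟨k, rfl⟩ : ∃ k, q = k + 2 := ⟨q - 2, by omega⟩
  have e1 : (k+2) ^ 2 = k*k+4*k+4 := by ring
  have e2 : (k+2+1)*(k+2-1) = k*k+4*k+3 := by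
    have h3 : k+2-1 = k+1 := by omega
    rw [h3]; ring
  omega

lemma card_linePts (L : PG2 F) : (linePts L).ncard = Fintype.card F + 1 := by
  classical
  set q := Fintype.card F with hq
  set u := L.rep with hu
  have hu0 : u ≠ 0 := L.rep_nonzero
  let φ : (Fin 3 → F) →ₗ[F] F :=
    { toFun := fun v => dot3 v u
      map_add' := by intro x y; simp only [dot3, Pi.add_apply]; ring
      map_smul' := by intro c x; simp only [dot3, Pi.smul_apply, smul_eq_mul,
        RingHom.id_apply]; ring }
  have hφ : ∀ v, φ v = dot3 v u := fun v => rfl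
  have hφsurj : Function.Surjective φ := by
    obtain ⟨i, hi⟩ := Function.ne_iff.mp hu0
    simp only [Pi.zero_apply] at hi
    intro c
    refine ⟨(c * (u i)⁻¹) • ((fun j => if j = i then (1:F) else 0) : Fin 3 → F), ?_⟩
    rw [map_smul, smul_eq_mul, hφ]
    have : dot3 (fun j => if j = i then (1:F) else 0) u = u i := by
      fin_cases i <;> simp [dot3]
    rw [this]
    field_simp
  have hker : Module.finrank F (LinearMap.ker φ) = 2 := by
    have h1 := LinearMap.finrank_range_add_finrank_ker φ
    rw [LinearMap.range_eq_top.mpr hφsurj, finrank_top, Module.finrank_self,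
      Module.finrank_pi] at h1
    simp only [Fintype.card_fin] at h1
    omega
  haveI : Fintype (LinearMap.ker φ) := Fintype.ofFinite _
  have hcard_ker : Fintype.card (LinearMap.ker φ) = q ^ 2 := by
    rw [Module.card_eq_pow_finrank (K := F), hker]
  set A : Set (Fin 3 → F) := {v | dot3 v u = 0 ∧ v ≠ 0} with hA
  have hAcard : Nat.card A = q ^ 2 - 1 := by
    have e : A ≃ {x : LinearMap.ker φ // x ≠ 0} :=
      { toFun := fun v => ⟨⟨v.1, by rw [LinearMap.mem_ker, hφ]; exact v.2.1⟩, by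
          intro hzero
          apply v.2.2
          simpa [Subtype.ext_iff] using hzero⟩
        invFun := fun x => ⟨x.1.1, ⟨by rw [← hφ]; exact x.1.2, by
          intro hzero
          apply x.2
          exact Subtype.ext (by exact hzero)⟩⟩
        left_inv := fun v => rfl
        right_inv := fun x => rfl }
    rw [Nat.card_congr e, Nat.card_eq_fintype_card]
    have hsub : Fintype.card {x : LinearMap.ker φ // x ≠ 0} =
        Fintype.card (LinearMap.ker φ) - 1 := by
      simp only [Ne]
      rw [Fintype.card_subtype_compl, Fintype.card_subtype_eq (0 : LinearMap.ker φ)]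
    rw [hsub, hcard_ker]
  have hApos : ∀ Pc : (↥(linePts L)) × Fˣ, ((Pc.2 : F) • Pc.1.1.rep) ∈ A := by
    rintro ⟨⟨P, hP⟩, c⟩
    constructor
    · rw [dot3_smul_left]
      have : dot3 P.rep u = 0 := hP
      rw [this, mul_zero]
    · exact smul_ne_zero (Units.ne_zero c) P.rep_nonzero
  let f : (↥(linePts L)) × Fˣ → A := fun Pc => ⟨_, hApos Pc⟩
  have hfbij : Function.Bijective f := by
    constructor
    · rintro ⟨⟨P, hP⟩, c⟩ ⟨⟨Q, hQ⟩, d⟩ hfeq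
      have heq : (c : F) • P.rep = (d : F) • Q.rep := congrArg Subtype.val hfeq
      have hPQ : P = Q := by
        refine eq_iff_par.mpr ⟨(d : F)⁻¹ * c, by simp, ?_⟩
        rw [mul_smul, heq, smul_smul, inv_mul_cancel₀ (Units.ne_zero d), one_smul]
      subst hPQ
      have hcd : (c : F) = d := by
        obtain ⟨i, hi⟩ := Function.ne_iff.mp P.rep_nonzero
        simp only [Pi.zero_apply] at hi
        have := congrFun heq i
        simp only [Pi.smul_apply, smul_eq_mul] at this
        exact mul_right_cancel₀ hi this
      simp only [Prod.mk.injEq]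
      exact ⟨trivial, Units.ext hcd⟩
    · rintro ⟨v, hv0, hvne⟩
      obtain ⟨a, ha⟩ := Projectivization.exists_smul_eq_mk_rep F v hvne
      have hPmem : Projectivization.mk F v hvne ∈ linePts L := by
        rw [mem_linePts, incident_def, ← hu, ← ha, Units.smul_def, dot3_smul_left, hv0,
          mul_zero]
      refine ⟨⟨⟨Projectivization.mk F v hvne, hPmem⟩, a⁻¹⟩, ?_⟩
      apply Subtype.ext
      show ((a⁻¹ : Fˣ) : F) • (Projectivization.mk F v hvne).rep = v
      rw [← ha]
      simp [Units.smul_def, smul_smul]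
  have hcards : Nat.card ((↥(linePts L)) × Fˣ) = Nat.card A := Nat.card_eq_of_bijective f hfbij
  rw [Nat.card_prod, Nat.card_coe_set_eq, Nat.card_eq_fintype_card, Fintype.card_units,
    hAcard] at hcards
  have hq2 : 2 ≤ q := Fintype.one_lt_card
  have hfac : q ^ 2 - 1 = (q + 1) * (q - 1) := nat_sq_sub_one q hq2
  rw [hfac] at hcards
  have hqpos : 0 < q - 1 := by omega
  exact Nat.eq_of_mul_eq_mul_right hqpos hcards


lemma card_pencil (h : PG2 F) : {M : PG2 F | h.incident M}.ncard = Fintype.card F + 1 := by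
  have : {M : PG2 F | h.incident M} = linePts h := by
    ext M
    exact incident_comm
  rw [this, card_linePts]

lemma two_secant {B : Set (PG2 F)} (hbl : IsBlocking 2 B)
    (hcardB : B.ncard = 3 * Fintype.card F - 1) {s h0 : PG2 F}
    (hs2 : (linePts s \ B).ncard = 2) (hh : h0.incident s) (hhB : h0 ∉ B)
    {M : PG2 F} (hM : h0.incident M) (hMs : M ≠ s) : (B ∩ linePts M).ncard = 2 := by
  classical
  set q := Fintype.card F with hqdef
  have hq2 : 2 ≤ q := Fintype.one_lt_card
  have pfin : (linePts h0).Finite := Set.toFinite _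
  set P : Finset (PG2 F) := pfin.toFinset with hPdef
  have hPcard : P.card = q + 1 := by
    rw [← Set.ncard_eq_toFinset_card _ pfin, card_linePts]
  have hmemP : ∀ N : PG2 F, N ∈ P ↔ h0.incident N := by
    intro N
    rw [hPdef, Set.Finite.mem_toFinset, mem_linePts, incident_comm]
  have hsum : ∑ N ∈ P, (B ∩ linePts N).ncard = B.ncard := by
    have hBfin : B.Finite := Set.toFinite _
    have hpart : hBfin.toFinset =
        P.biUnion (fun N => (Set.toFinite (B ∩ linePts N)).toFinset) := by
      ext x
      simp only [Set.Finite.mem_toFinset, Finset.mem_biUnion, Set.mem_inter_iff]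
      constructor
      · intro hx
        have hxh : x ≠ h0 := fun e => hhB (e ▸ hx)
        obtain ⟨N, h1, h2⟩ := exists_join x h0 hxh
        exact ⟨N, (hmemP N).mpr h2, hx, h1⟩
      · rintro ⟨N, _, hx, _⟩
        exact hx
    have hdisj : ∀ N ∈ P, ∀ N' ∈ P, N ≠ N' →
        Disjoint ((Set.toFinite (B ∩ linePts N)).toFinset)
          ((Set.toFinite (B ∩ linePts N')).toFinset) := by
      intro N hN N' hN' hNN'
      rw [Finset.disjoint_left]
      rintro x hx hx'
      rw [Set.Finite.mem_toFinset] at hx hx'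
      have hxN : x.incident N := hx.2
      have hxN' : x.incident N' := hx'.2
      have : x = h0 := unique_pt hNN' hxN hxN' ((hmemP N).mp hN) ((hmemP N').mp hN')
      exact hhB (this ▸ hx.1)
    rw [Set.ncard_eq_toFinset_card _ hBfin, hpart, Finset.card_biUnion hdisj]
    exact Finset.sum_congr rfl fun N _ => Set.ncard_eq_toFinset_card _ _
  have hsmem : s ∈ P := (hmemP s).mpr hh
  have hBs : (B ∩ linePts s).ncard = q - 1 := by
    have hkey := Set.ncard_inter_add_ncard_diff_eq_ncard (linePts s) B (Set.toFinite _)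
    rw [hs2, card_linePts] at hkey
    rw [Set.inter_comm]
    omega
  have hsum' : ∑ N ∈ P.erase s, (B ∩ linePts N).ncard = 2 * q := by
    have h2 : (B ∩ linePts s).ncard + ∑ N ∈ P.erase s, (B ∩ linePts N).ncard =
        ∑ N ∈ P, (B ∩ linePts N).ncard :=
      Finset.add_sum_erase P (fun N => (B ∩ linePts N).ncard) hsmem
    rw [hsum, hBs, hcardB] at h2
    omega
  have hcard_erase : (P.erase s).card = q := by
    rw [Finset.card_erase_of_mem hsmem, hPcard]
    omega
  have hMmem : M ∈ P.erase s := Finset.mem_erase.mpr ⟨hMs, (hmemP M).mpr hM⟩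
  by_contra hne2
  have h3le : 2 < (B ∩ linePts M).ncard := lt_of_le_of_ne (hbl M) (Ne.symm hne2)
  have hlt : ∑ _N ∈ P.erase s, 2 < ∑ N ∈ P.erase s, (B ∩ linePts N).ncard :=
    Finset.sum_lt_sum (fun N _ => hbl N) ⟨M, hMmem, h3le⟩
  rw [Finset.sum_const, hcard_erase, smul_eq_mul, hsum'] at hlt
  omega


lemma main_contra (B : Set (PG2 F)) (l1 l2 l3 : PG2 F)
    (hbl : IsBlocking 2 B) (hcardB : B.ncard = 3 * Fintype.card F - 1)
    (hmid : (B \ (linePts l1 ∪ linePts l2 ∪ linePts l3)).ncard = 5)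
    (p p' a a' b b' : PG2 F)
    (h1 : linePts l1 \ B = {p, p'}) (hpp' : p ≠ p')
    (h2 : linePts l2 \ B = {a, a'}) (haa' : a ≠ a')
    (h3 : linePts l3 \ B = {b, b'}) (hbb' : b ≠ b')
    (hp2 : ¬ p.incident l2) (hp3 : ¬ p.incident l3)
    (hp'2 : ¬ p'.incident l2) (hp'3 : ¬ p'.incident l3)
    (ha1 : ¬ a.incident l1) (ha3 : ¬ a.incident l3)
    (ha'1 : ¬ a'.incident l1) (ha'3 : ¬ a'.incident l3)
    (hb1 : ¬ b.incident l1) (hb2 : ¬ b.incident l2)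
    (hb'1 : ¬ b'.incident l1) (hb'2 : ¬ b'.incident l2)
    (ℓ ℓ' : PG2 F)
    (hpℓ : p.incident ℓ) (haℓ : a.incident ℓ) (hbℓ : b.incident ℓ)
    (hpℓ' : p.incident ℓ') (ha'ℓ' : a'.incident ℓ') (hb'ℓ' : b'.incident ℓ') : False := by
  classical
  -- memberships of the six holes
  have hp_mem : p ∈ linePts l1 \ B := by rw [h1]; exact Set.mem_insert _ _
  have hp'_mem : p' ∈ linePts l1 \ B := by rw [h1]; exact Set.mem_insert_of_mem _ rfl
  have ha_mem : a ∈ linePts l2 \ B := by rw [h2]; exact Set.mem_insert _ _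
  have ha'_mem : a' ∈ linePts l2 \ B := by rw [h2]; exact Set.mem_insert_of_mem _ rfl
  have hb_mem : b ∈ linePts l3 \ B := by rw [h3]; exact Set.mem_insert _ _
  have hb'_mem : b' ∈ linePts l3 \ B := by rw [h3]; exact Set.mem_insert_of_mem _ rfl
  have hp1 : p.incident l1 := hp_mem.1
  have hpB : p ∉ B := hp_mem.2
  have hp'1 : p'.incident l1 := hp'_mem.1
  have hp'B : p' ∉ B := hp'_mem.2
  have ha2 : a.incident l2 := ha_mem.1
  have haB : a ∉ B := ha_mem.2
  have ha'2 : a'.incident l2 := ha'_mem.1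
  have ha'B : a' ∉ B := ha'_mem.2
  have hb3 : b.incident l3 := hb_mem.1
  have hbB : b ∉ B := hb_mem.2
  have hb'3 : b'.incident l3 := hb'_mem.1
  have hb'B : b' ∉ B := hb'_mem.2
  -- hole counts
  have hc1 : (linePts l1 \ B).ncard = 2 := by rw [h1]; exact Set.ncard_pair hpp'
  have hc2 : (linePts l2 \ B).ncard = 2 := by rw [h2]; exact Set.ncard_pair haa'
  have hc3 : (linePts l3 \ B).ncard = 2 := by rw [h3]; exact Set.ncard_pair hbb'
  -- two-secant lemmas
  have tsp : ∀ M : PG2 F, p.incident M → M ≠ l1 → (B ∩ linePts M).ncard = 2 :=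
    fun M hM hMs => two_secant hbl hcardB hc1 hp1 hpB hM hMs
  have tsp' : ∀ M : PG2 F, p'.incident M → M ≠ l1 → (B ∩ linePts M).ncard = 2 :=
    fun M hM hMs => two_secant hbl hcardB hc1 hp'1 hp'B hM hMs
  have tsa : ∀ M : PG2 F, a.incident M → M ≠ l2 → (B ∩ linePts M).ncard = 2 :=
    fun M hM hMs => two_secant hbl hcardB hc2 ha2 haB hM hMs
  have tsa' : ∀ M : PG2 F, a'.incident M → M ≠ l2 → (B ∩ linePts M).ncard = 2 :=
    fun M hM hMs => two_secant hbl hcardB hc2 ha'2 ha'B hM hMs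
  -- line distinctness
  have hℓl1 : ℓ ≠ l1 := fun e => ha1 (e ▸ haℓ)
  have hℓl2 : ℓ ≠ l2 := fun e => hp2 (e ▸ hpℓ)
  have hℓl3 : ℓ ≠ l3 := fun e => hp3 (e ▸ hpℓ)
  have hℓ'l1 : ℓ' ≠ l1 := fun e => ha'1 (e ▸ ha'ℓ')
  have hℓ'l2 : ℓ' ≠ l2 := fun e => hp2 (e ▸ hpℓ')
  have hℓ'l3 : ℓ' ≠ l3 := fun e => hp3 (e ▸ hpℓ')
  have hl2l3 : l2 ≠ l3 := fun e => ha3 (e ▸ ha2)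
  have hpa : p ≠ a := fun e => ha1 (e ▸ hp1)
  have hpa' : p ≠ a' := fun e => ha'1 (e ▸ hp1)
  -- intersection facts
  have iℓ1 : ∀ x : PG2 F, x.incident ℓ → x.incident l1 → x = p :=
    fun x hx hx1 => unique_pt hℓl1 hx hx1 hpℓ hp1
  have iℓ2 : ∀ x : PG2 F, x.incident ℓ → x.incident l2 → x = a :=
    fun x hx hx2 => unique_pt hℓl2 hx hx2 haℓ ha2
  have iℓ3 : ∀ x : PG2 F, x.incident ℓ → x.incident l3 → x = b :=
    fun x hx hx3 => unique_pt hℓl3 hx hx3 hbℓ hb3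
  have iℓ'1 : ∀ x : PG2 F, x.incident ℓ' → x.incident l1 → x = p :=
    fun x hx hx1 => unique_pt hℓ'l1 hx hx1 hpℓ' hp1
  have iℓ'2 : ∀ x : PG2 F, x.incident ℓ' → x.incident l2 → x = a' :=
    fun x hx hx2 => unique_pt hℓ'l2 hx hx2 ha'ℓ' ha'2
  have iℓ'3 : ∀ x : PG2 F, x.incident ℓ' → x.incident l3 → x = b' :=
    fun x hx hx3 => unique_pt hℓ'l3 hx hx3 hb'ℓ' hb'3
  have hℓℓ' : ℓ ≠ ℓ' := by
    intro e
    exact haa' (iℓ2 a' (e ▸ ha'ℓ') ha'2).symm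
  have iℓℓ' : ∀ x : PG2 F, x.incident ℓ → x.incident ℓ' → x = p :=
    fun x hx hx' => unique_pt hℓℓ' hx hx' hpℓ hpℓ'
  have hp'ℓ : ¬ p'.incident ℓ := fun h => hpp' (iℓ1 p' h hp'1).symm
  have hp'ℓ' : ¬ p'.incident ℓ' := fun h => hpp' (iℓ'1 p' h hp'1).symm
  -- mids on ℓ and ℓ'
  have hBℓ : (B ∩ linePts ℓ).ncard = 2 := tsp ℓ hpℓ hℓl1
  have hBℓ' : (B ∩ linePts ℓ').ncard = 2 := tsp ℓ' hpℓ' hℓ'l1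
  -- points of B on ℓ and ℓ' are midpoints
  set mids : Set (PG2 F) := B \ (linePts l1 ∪ linePts l2 ∪ linePts l3) with hmidsdef
  have midℓ : ∀ x ∈ B ∩ linePts ℓ, x ∈ mids := by
    rintro x ⟨hxB, hxℓ⟩
    refine ⟨hxB, ?_⟩
    rintro ((hx1 | hx2) | hx3)
    · exact hpB ((iℓ1 x hxℓ hx1) ▸ hxB)
    · exact haB ((iℓ2 x hxℓ hx2) ▸ hxB)
    · exact hbB ((iℓ3 x hxℓ hx3) ▸ hxB)
  have midℓ' : ∀ x ∈ B ∩ linePts ℓ', x ∈ mids := by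
    rintro x ⟨hxB, hxℓ'⟩
    refine ⟨hxB, ?_⟩
    rintro ((hx1 | hx2) | hx3)
    · exact hpB ((iℓ'1 x hxℓ' hx1) ▸ hxB)
    · exact ha'B ((iℓ'2 x hxℓ' hx2) ▸ hxB)
    · exact hb'B ((iℓ'3 x hxℓ' hx3) ▸ hxB)
  have disjBℓℓ' : ∀ x : PG2 F, x ∈ B ∩ linePts ℓ → x ∈ B ∩ linePts ℓ' → False := by
    rintro x ⟨hxB, hxℓ⟩ ⟨_, hxℓ'⟩
    exact hpB ((iℓℓ' x hxℓ hxℓ') ▸ hxB)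
  -- the fifth midpoint
  set rest : Set (PG2 F) := mids \ (linePts ℓ ∪ linePts ℓ') with hrestdef
  have hrest1 : rest.ncard = 1 := by
    have e1 : mids ∩ (linePts ℓ ∪ linePts ℓ') = (B ∩ linePts ℓ) ∪ (B ∩ linePts ℓ') := by
      ext x
      constructor
      · rintro ⟨⟨hxB, _⟩, (h | h)⟩
        · exact Or.inl ⟨hxB, h⟩
        · exact Or.inr ⟨hxB, h⟩
      · rintro (⟨hxB, h⟩ | ⟨hxB, h⟩)
        · exact ⟨midℓ x ⟨hxB, h⟩, Or.inl h⟩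
        · exact ⟨midℓ' x ⟨hxB, h⟩, Or.inr h⟩
    have e2 : ((B ∩ linePts ℓ) ∪ (B ∩ linePts ℓ')).ncard = 4 := by
      rw [Set.ncard_union_eq (Set.disjoint_left.mpr (fun x h1 h2 => disjBℓℓ' x h1 h2))
        (Set.toFinite _) (Set.toFinite _), hBℓ, hBℓ']
    have e3 := Set.ncard_inter_add_ncard_diff_eq_ncard mids (linePts ℓ ∪ linePts ℓ')
      (Set.toFinite _)
    rw [e1, e2, hmid, ← hrestdef] at e3
    omega
  obtain ⟨m5, hm5⟩ := Set.ncard_eq_one.mp hrest1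
  have hm5_mem : m5 ∈ rest := by rw [hm5]; exact rfl
  have hm5B : m5 ∈ B := hm5_mem.1.1
  have hm5l1 : ¬ m5.incident l1 := fun h => hm5_mem.1.2 (Or.inl (Or.inl h))
  have hm5l2 : ¬ m5.incident l2 := fun h => hm5_mem.1.2 (Or.inl (Or.inr h))
  have hm5l3 : ¬ m5.incident l3 := fun h => hm5_mem.1.2 (Or.inr h)
  have hm5ℓ : ¬ m5.incident ℓ := fun h => hm5_mem.2 (Or.inl h)
  have hm5ℓ' : ¬ m5.incident ℓ' := fun h => hm5_mem.2 (Or.inr h)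
  have restmem : ∀ x : PG2 F, x ∈ B → ¬ x.incident l1 → ¬ x.incident l2 → ¬ x.incident l3 →
      ¬ x.incident ℓ → ¬ x.incident ℓ' → x = m5 := by
    intro x hxB hx1 hx2 hx3 hxℓ hxℓ'
    have : x ∈ rest := by
      refine ⟨⟨hxB, ?_⟩, ?_⟩
      · rintro ((h | h) | h)
        · exact hx1 h
        · exact hx2 h
        · exact hx3 h
      · rintro (h | h)
        · exact hxℓ h
        · exact hxℓ' h
    rw [hm5] at this
    exact this
  -- no line through p', a, b'  (and none through p', a', b)
  have noT1 : ∀ M : PG2 F, p'.incident M → a.incident M → b'.incident M → False := by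
    intro M hp'M haM hb'M
    have hMl1 : M ≠ l1 := fun e => ha1 (e ▸ haM)
    have hMl2 : M ≠ l2 := fun e => hp'2 (e ▸ hp'M)
    have hMl3 : M ≠ l3 := fun e => hp'3 (e ▸ hp'M)
    have hMℓ : M ≠ ℓ := fun e => hp'ℓ (e ▸ hp'M)
    have hMℓ' : M ≠ ℓ' := fun e => hp'ℓ' (e ▸ hp'M)
    have hBM := tsa M haM hMl2
    obtain ⟨x, y, hxy, hxyeq⟩ := Set.ncard_eq_two.mp hBM
    have key : ∀ z : PG2 F, z ∈ B ∩ linePts M → z = m5 := by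
      rintro z ⟨hzB, hzM⟩
      refine restmem z hzB ?_ ?_ ?_ ?_ ?_
      · intro h
        exact hp'B ((unique_pt hMl1 hzM h hp'M hp'1) ▸ hzB)
      · intro h
        exact haB ((unique_pt hMl2 hzM h haM ha2) ▸ hzB)
      · intro h
        exact hb'B ((unique_pt hMl3 hzM h hb'M hb'3) ▸ hzB)
      · intro h
        exact haB ((unique_pt hMℓ hzM h haM haℓ) ▸ hzB)
      · intro h
        exact hb'B ((unique_pt hMℓ' hzM h hb'M hb'ℓ') ▸ hzB)
    have hx : x = m5 := key x (by rw [hxyeq]; exact Set.mem_insert _ _)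
    have hy : y = m5 := key y (by rw [hxyeq]; exact Set.mem_insert_of_mem _ rfl)
    exact hxy (hx.trans hy.symm)
  have noT2 : ∀ M : PG2 F, p'.incident M → a'.incident M → b.incident M → False := by
    intro M hp'M ha'M hbM
    have hMl1 : M ≠ l1 := fun e => ha'1 (e ▸ ha'M)
    have hMl2 : M ≠ l2 := fun e => hp'2 (e ▸ hp'M)
    have hMl3 : M ≠ l3 := fun e => hp'3 (e ▸ hp'M)
    have hMℓ : M ≠ ℓ := fun e => hp'ℓ (e ▸ hp'M)
    have hMℓ' : M ≠ ℓ' := fun e => hp'ℓ' (e ▸ hp'M)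
    have hBM := tsa' M ha'M hMl2
    obtain ⟨x, y, hxy, hxyeq⟩ := Set.ncard_eq_two.mp hBM
    have key : ∀ z : PG2 F, z ∈ B ∩ linePts M → z = m5 := by
      rintro z ⟨hzB, hzM⟩
      refine restmem z hzB ?_ ?_ ?_ ?_ ?_
      · intro h
        exact hp'B ((unique_pt hMl1 hzM h hp'M hp'1) ▸ hzB)
      · intro h
        exact ha'B ((unique_pt hMl2 hzM h ha'M ha'2) ▸ hzB)
      · intro h
        exact hbB ((unique_pt hMl3 hzM h hbM hb3) ▸ hzB)
      · intro h
        exact hbB ((unique_pt hMℓ hzM h hbM hbℓ) ▸ hzB)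
      · intro h
        exact ha'B ((unique_pt hMℓ' hzM h ha'M ha'ℓ') ▸ hzB)
    have hx : x = m5 := key x (by rw [hxyeq]; exact Set.mem_insert _ _)
    have hy : y = m5 := key y (by rw [hxyeq]; exact Set.mem_insert_of_mem _ rfl)
    exact hxy (hx.trans hy.symm)
  -- the line N5 through a and b' contains m5
  have hab' : a ≠ b' := fun e => ha3 (e ▸ hb'3)
  obtain ⟨N5, haN5, hb'N5⟩ := exists_join a b' hab'
  have hN5l1 : N5 ≠ l1 := fun e => ha1 (e ▸ haN5)
  have hN5l2 : N5 ≠ l2 := fun e => hb'2 (e ▸ hb'N5)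
  have hN5l3 : N5 ≠ l3 := fun e => ha3 (e ▸ haN5)
  have hN5ℓ : N5 ≠ ℓ := fun e => hbb' (iℓ3 b' (e ▸ hb'N5) hb'3).symm
  have hN5ℓ' : N5 ≠ ℓ' := fun e => haa' (iℓ'2 a (e ▸ haN5) ha2)
  have hm5N5 : m5.incident N5 := by
    have hBN5 := tsa N5 haN5 hN5l2
    obtain ⟨x, y, hxy, hxyeq⟩ := Set.ncard_eq_two.mp hBN5
    have hxmem : x ∈ B ∩ linePts N5 := by rw [hxyeq]; exact Set.mem_insert _ _
    have hymem : y ∈ B ∩ linePts N5 := by rw [hxyeq]; exact Set.mem_insert_of_mem _ rfl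
    have key : ∀ z : PG2 F, z ∈ B ∩ linePts N5 → ¬ z.incident l1 → z = m5 := by
      rintro z ⟨hzB, hzN⟩ hz1
      refine restmem z hzB hz1 ?_ ?_ ?_ ?_
      · intro h
        exact haB ((unique_pt hN5l2 hzN h haN5 ha2) ▸ hzB)
      · intro h
        exact hb'B ((unique_pt hN5l3 hzN h hb'N5 hb'3) ▸ hzB)
      · intro h
        exact haB ((unique_pt hN5ℓ hzN h haN5 haℓ) ▸ hzB)
      · intro h
        exact hb'B ((unique_pt hN5ℓ' hzN h hb'N5 hb'ℓ') ▸ hzB)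
    by_cases hx1 : x.incident l1
    · by_cases hy1 : y.incident l1
      · exact absurd (unique_pt hN5l1 hxmem.2 hx1 hymem.2 hy1) hxy
      · have := key y hymem hy1
        exact this ▸ hymem.2
    · have := key x hxmem hx1
      exact this ▸ hxmem.2
  -- the line N6 through a' and b contains m5
  have ha'b : a' ≠ b := fun e => ha'3 (e ▸ hb3)
  obtain ⟨N6, ha'N6, hbN6⟩ := exists_join a' b ha'b
  have hN6l1 : N6 ≠ l1 := fun e => ha'1 (e ▸ ha'N6)
  have hN6l2 : N6 ≠ l2 := fun e => hb2 (e ▸ hbN6)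
  have hN6l3 : N6 ≠ l3 := fun e => ha'3 (e ▸ ha'N6)
  have hN6ℓ : N6 ≠ ℓ := fun e => haa' (iℓ2 a' (e ▸ ha'N6) ha'2).symm
  have hN6ℓ' : N6 ≠ ℓ' := fun e => hbb' (iℓ'3 b (e ▸ hbN6) hb3)
  have hm5N6 : m5.incident N6 := by
    have hBN6 := tsa' N6 ha'N6 hN6l2
    obtain ⟨x, y, hxy, hxyeq⟩ := Set.ncard_eq_two.mp hBN6
    have hxmem : x ∈ B ∩ linePts N6 := by rw [hxyeq]; exact Set.mem_insert _ _
    have hymem : y ∈ B ∩ linePts N6 := by rw [hxyeq]; exact Set.mem_insert_of_mem _ rfl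
    have key : ∀ z : PG2 F, z ∈ B ∩ linePts N6 → ¬ z.incident l1 → z = m5 := by
      rintro z ⟨hzB, hzN⟩ hz1
      refine restmem z hzB hz1 ?_ ?_ ?_ ?_
      · intro h
        exact ha'B ((unique_pt hN6l2 hzN h ha'N6 ha'2) ▸ hzB)
      · intro h
        exact hbB ((unique_pt hN6l3 hzN h hbN6 hb3) ▸ hzB)
      · intro h
        exact hbB ((unique_pt hN6ℓ hzN h hbN6 hbℓ) ▸ hzB)
      · intro h
        exact ha'B ((unique_pt hN6ℓ' hzN h ha'N6 ha'ℓ') ▸ hzB)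
    by_cases hx1 : x.incident l1
    · by_cases hy1 : y.incident l1
      · exact absurd (unique_pt hN6l1 hxmem.2 hx1 hymem.2 hy1) hxy
      · have := key y hymem hy1
        exact this ▸ hymem.2
    · have := key x hxmem hx1
      exact this ▸ hxmem.2
  -- distinctness of m5 from holes
  have ham5 : a ≠ m5 := fun e => hm5l2 (e ▸ ha2)
  have ha'm5 : a' ≠ m5 := fun e => hm5l2 (e ▸ ha'2)
  have hbm5 : b ≠ m5 := fun e => hm5l3 (e ▸ hb3)
  have hb'm5 : b' ≠ m5 := fun e => hm5l3 (e ▸ hb'3)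
  have hp'm5 : p' ≠ m5 := fun e => hm5l1 (e ▸ hp'1)
  have hpm5 : p ≠ m5 := fun e => hm5l1 (e ▸ hp1)
  -- the line g through p' and m5
  obtain ⟨g, hp'g, hm5g⟩ := exists_join p' m5 hp'm5
  have hgl1 : g ≠ l1 := fun e => hm5l1 (e ▸ hm5g)
  have hgl2 : g ≠ l2 := fun e => hp'2 (e ▸ hp'g)
  have hgl3 : g ≠ l3 := fun e => hp'3 (e ▸ hp'g)
  obtain ⟨x2, hx2g, hx2l2⟩ := exists_meet g l2 hgl2
  obtain ⟨y3, hy3g, hy3l3⟩ := exists_meet g l3 hgl3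
  -- helpers: a line through m5 meeting a side in a hole leads to a contradiction
  have hole2 : ∀ x M : PG2 F, m5.incident M → x.incident M → x ∈ linePts l2 \ B →
      (a'.incident M → b.incident M → False) → (a.incident M → b'.incident M → False) →
      False := by
    intro x M hm5M hxM hxmem hcase' hcase
    rw [h2] at hxmem
    simp only [Set.mem_insert_iff, Set.mem_singleton_iff] at hxmem
    rcases hxmem with rfl | rfl
    · have hMN5 : M = N5 := unique_line ham5 hxM hm5M haN5 hm5N5
      exact hcase hxM (hMN5.symm ▸ hb'N5)
    · have hMN6 : M = N6 := unique_line ha'm5 hxM hm5M ha'N6 hm5N6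
      exact hcase' hxM (hMN6.symm ▸ hbN6)
  have hole3 : ∀ x M : PG2 F, m5.incident M → x.incident M → x ∈ linePts l3 \ B →
      (a'.incident M → b.incident M → False) → (a.incident M → b'.incident M → False) →
      False := by
    intro x M hm5M hxM hxmem hcase' hcase
    rw [h3] at hxmem
    simp only [Set.mem_insert_iff, Set.mem_singleton_iff] at hxmem
    rcases hxmem with rfl | rfl
    · have hMN6 : M = N6 := unique_line hbm5 hxM hm5M hbN6 hm5N6
      exact hcase' (hMN6.symm ▸ ha'N6) hxM
    · have hMN5 : M = N5 := unique_line hb'm5 hxM hm5M hb'N5 hm5N5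
      exact hcase (hMN5.symm ▸ haN5) hxM
  -- finishers for g
  have fin_g_a'b : a'.incident g → b.incident g → False := fun h h' => noT2 g hp'g h h'
  have fin_g_ab' : a.incident g → b'.incident g → False := fun h h' => noT1 g hp'g h h'
  by_cases hx2B : x2 ∈ B
  swap
  · exact hole2 x2 g hm5g hx2g ⟨hx2l2, hx2B⟩ fin_g_a'b fin_g_ab'
  by_cases hy3B : y3 ∈ B
  swap
  · exact hole3 y3 g hm5g hy3g ⟨hy3l3, hy3B⟩ fin_g_a'b fin_g_ab'
  by_cases hxy : x2 = y3
  swap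
  · -- three points of B on g
    have hm5x2 : m5 ≠ x2 := fun e => hm5l2 (e ▸ hx2l2)
    have hm5y3 : m5 ≠ y3 := fun e => hm5l3 (e ▸ hy3l3)
    have hsub : ({m5, x2, y3} : Set (PG2 F)) ⊆ B ∩ linePts g := by
      rintro z (rfl | rfl | rfl)
      · exact ⟨hm5B, hm5g⟩
      · exact ⟨hx2B, hx2g⟩
      · exact ⟨hy3B, hy3g⟩
    have h3c : ({m5, x2, y3} : Set (PG2 F)).ncard = 3 :=
      Set.ncard_eq_three.mpr ⟨m5, x2, y3, hm5x2, hm5y3, hxy, rfl⟩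
    have hle := Set.ncard_le_ncard hsub (Set.toFinite _)
    rw [h3c, tsp' g hp'g hgl1] at hle
    omega
  · -- x2 = y3 is the vertex of l2 and l3; now use the line through p and m5
    obtain ⟨g2, hpg2, hm5g2⟩ := exists_join p m5 hpm5
    have hg2l1 : g2 ≠ l1 := fun e => hm5l1 (e ▸ hm5g2)
    have hg2l2 : g2 ≠ l2 := fun e => hp2 (e ▸ hpg2)
    have hg2l3 : g2 ≠ l3 := fun e => hp3 (e ▸ hpg2)
    obtain ⟨x2', hx2'g2, hx2'l2⟩ := exists_meet g2 l2 hg2l2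
    obtain ⟨y3', hy3'g2, hy3'l3⟩ := exists_meet g2 l3 hg2l3
    have fin_g2_a'b : a'.incident g2 → b.incident g2 → False := by
      intro h h'
      have : g2 = ℓ' := unique_line hpa' hpg2 h hpℓ' ha'ℓ'
      exact hm5ℓ' (this ▸ hm5g2)
    have fin_g2_ab' : a.incident g2 → b'.incident g2 → False := by
      intro h h'
      have : g2 = ℓ := unique_line hpa hpg2 h hpℓ haℓ
      exact hm5ℓ (this ▸ hm5g2)
    by_cases hx2'B : x2' ∈ B
    swap
    · exact hole2 x2' g2 hm5g2 hx2'g2 ⟨hx2'l2, hx2'B⟩ fin_g2_a'b fin_g2_ab'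
    by_cases hy3'B : y3' ∈ B
    swap
    · exact hole3 y3' g2 hm5g2 hy3'g2 ⟨hy3'l3, hy3'B⟩ fin_g2_a'b fin_g2_ab'
    by_cases hxy' : x2' = y3'
    swap
    · have hm5x2' : m5 ≠ x2' := fun e => hm5l2 (e ▸ hx2'l2)
      have hm5y3' : m5 ≠ y3' := fun e => hm5l3 (e ▸ hy3'l3)
      have hsub : ({m5, x2', y3'} : Set (PG2 F)) ⊆ B ∩ linePts g2 := by
        rintro z (rfl | rfl | rfl)
        · exact ⟨hm5B, hm5g2⟩
        · exact ⟨hx2'B, hx2'g2⟩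
        · exact ⟨hy3'B, hy3'g2⟩
      have h3c : ({m5, x2', y3'} : Set (PG2 F)).ncard = 3 :=
        Set.ncard_eq_three.mpr ⟨m5, x2', y3', hm5x2', hm5y3', hxy', rfl⟩
      have hle := Set.ncard_le_ncard hsub (Set.toFinite _)
      rw [h3c, tsp g2 hpg2 hg2l1] at hle
      omega
    · -- both vertices coincide, so g = g2 and then g = l1, contradiction
      have hVV : x2 = x2' := unique_pt hl2l3 hx2l2 (hxy ▸ hy3l3) hx2'l2 (hxy' ▸ hy3'l3)
      have hx2m5 : x2 ≠ m5 := fun e => hm5l2 (e ▸ hx2l2)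
      have hgg2 : g = g2 := unique_line hx2m5 hx2g hm5g (hVV ▸ hx2'g2) hm5g2
      have hpg : p.incident g := hgg2 ▸ hpg2
      have : l1 = g := unique_line hpp' hp1 hp'1 hpg hp'g
      exact hgl1 this.symm

lemma extract_triple (B : Set (PG2 F)) (l1 l2 l3 : PG2 F)
    (hc1 : (linePts l1 \ B).ncard = 2) (hc2 : (linePts l2 \ B).ncard = 2)
    (hc3 : (linePts l3 \ B).ncard = 2)
    (S : Set (PG2 F)) (hS : S ⊆ (linePts l1 ∪ linePts l2 ∪ linePts l3) \ B)
    (hS3 : S.ncard = 3)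
    (ℓ : PG2 F) (hℓ : ∀ x ∈ S, x.incident ℓ)
    (p : PG2 F) (hpS : p ∈ S) (hp1 : p.incident l1) :
    ∃ a b, S = {p, a, b} ∧ p ≠ a ∧ p ≠ b ∧ a ≠ b ∧ a.incident l2 ∧ b.incident l3 ∧
      a ∉ B ∧ b ∉ B ∧ a ∈ S ∧ b ∈ S := by
  have hℓside : ∀ l0 : PG2 F, (linePts l0 \ B).ncard = 2 → ℓ ≠ l0 := by
    intro l0 hl0 he
    have hsub : S ⊆ linePts l0 \ B := fun x hx => ⟨(he ▸ hℓ x hx : x.incident l0), (hS hx).2⟩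
    have := Set.ncard_le_ncard hsub (Set.toFinite _)
    rw [hS3, hl0] at this
    omega
  have hℓ1 := hℓside l1 hc1
  have hℓ2 := hℓside l2 hc2
  have hℓ3 := hℓside l3 hc3
  obtain ⟨x, y, z, hxy, hxz, hyz, hSeq⟩ := Set.ncard_eq_three.mp hS3
  have hget : ∃ u v, u ≠ v ∧ p ≠ u ∧ p ≠ v ∧ S = {p, u, v} := by
    have hp3 : p ∈ ({x, y, z} : Set (PG2 F)) := hSeq ▸ hpS
    simp only [Set.mem_insert_iff, Set.mem_singleton_iff] at hp3
    rcases hp3 with rfl | rfl | rfl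
    · exact ⟨y, z, hyz, hxy, hxz, hSeq⟩
    · refine ⟨x, z, hxz, hxy.symm, hyz, ?_⟩
      rw [hSeq]
      ext w
      simp only [Set.mem_insert_iff, Set.mem_singleton_iff]
      tauto
    · refine ⟨x, y, hxy, hxz.symm, hyz.symm, ?_⟩
      rw [hSeq]
      ext w
      simp only [Set.mem_insert_iff, Set.mem_singleton_iff]
      tauto
  obtain ⟨u, v, huv, hpu, hpv, hSeq'⟩ := hget
  have huS : u ∈ S := by rw [hSeq']; exact Or.inr (Or.inl rfl)
  have hvS : v ∈ S := by rw [hSeq']; exact Or.inr (Or.inr rfl)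
  have not_l1 : ∀ w ∈ S, w ≠ p → ¬ w.incident l1 := by
    intro w hw hwp hwl1
    exact hwp (unique_pt hℓ1 (hℓ w hw) hwl1 (hℓ p hpS) hp1)
  have sides : ∀ w ∈ S, w ≠ p → w.incident l2 ∨ w.incident l3 := by
    intro w hw hwp
    rcases (hS hw).1 with (h | h) | h
    · exact absurd h (not_l1 w hw hwp)
    · exact Or.inl h
    · exact Or.inr h
  rcases sides u huS (Ne.symm hpu) with hu2 | hu3
  · rcases sides v hvS (Ne.symm hpv) with hv2 | hv3
    · exact absurd (unique_pt hℓ2 (hℓ u huS) hu2 (hℓ v hvS) hv2) huv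
    · exact ⟨u, v, hSeq', hpu, hpv, huv, hu2, hv3, (hS huS).2, (hS hvS).2, huS, hvS⟩
  · rcases sides v hvS (Ne.symm hpv) with hv2 | hv3
    · refine ⟨v, u, ?_, hpv, hpu, huv.symm, hv2, hu3, (hS hvS).2, (hS huS).2, hvS, huS⟩
      rw [hSeq']
      ext w
      simp only [Set.mem_insert_iff, Set.mem_singleton_iff]
      tauto
    · exact absurd (unique_pt hℓ3 (hℓ u huS) hu3 (hℓ v hvS) hv3) huv

lemma aux_main (B : Set (PG2 F)) (l1 l2 l3 : PG2 F)
    (hbl : IsBlocking 2 B) (hcardB : B.ncard = 3 * Fintype.card F - 1)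
    (hmid : (B \ (linePts l1 ∪ linePts l2 ∪ linePts l3)).ncard = 5)
    (hc1 : (linePts l1 \ B).ncard = 2) (hc2 : (linePts l2 \ B).ncard = 2)
    (hc3 : (linePts l3 \ B).ncard = 2)
    (hnv : ∀ x ∈ (linePts l1 ∪ linePts l2 ∪ linePts l3) \ B,
      ¬(x ∈ linePts l1 ∧ x ∈ linePts l2) ∧ ¬(x ∈ linePts l2 ∧ x ∈ linePts l3) ∧
      ¬(x ∈ linePts l1 ∧ x ∈ linePts l3))
    (S S' : Set (PG2 F))
    (hS : S ⊆ (linePts l1 ∪ linePts l2 ∪ linePts l3) \ B)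
    (hS' : S' ⊆ (linePts l1 ∪ linePts l2 ∪ linePts l3) \ B)
    (hS3 : S.ncard = 3) (hS'3 : S'.ncard = 3) (hne : S ≠ S')
    (ℓ ℓ' : PG2 F) (hℓ : ∀ x ∈ S, x.incident ℓ) (hℓ' : ∀ x ∈ S', x.incident ℓ')
    (p : PG2 F) (hpS : p ∈ S) (hpS' : p ∈ S') (hp1 : p.incident l1) : False := by
  obtain ⟨a, b, hSeq, hpa, hpb, hab, ha2, hb3, haB, hbB, haS, hbS⟩ :=
    extract_triple B l1 l2 l3 hc1 hc2 hc3 S hS hS3 ℓ hℓ p hpS hp1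
  obtain ⟨a', b', hS'eq, hpa', hpb', ha'b', ha'2, hb'3, ha'B, hb'B, ha'S', hb'S'⟩ :=
    extract_triple B l1 l2 l3 hc1 hc2 hc3 S' hS' hS'3 ℓ' hℓ' p hpS' hp1
  have ha_h := hnv a (hS haS)
  have ha'_h := hnv a' (hS' ha'S')
  have hb_h := hnv b (hS hbS)
  have hb'_h := hnv b' (hS' hb'S')
  have hp_h := hnv p (hS hpS)
  have ha1 : ¬ a.incident l1 := fun h => ha_h.1 ⟨h, ha2⟩
  have ha3 : ¬ a.incident l3 := fun h => ha_h.2.1 ⟨ha2, h⟩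
  have ha'1 : ¬ a'.incident l1 := fun h => ha'_h.1 ⟨h, ha'2⟩
  have ha'3 : ¬ a'.incident l3 := fun h => ha'_h.2.1 ⟨ha'2, h⟩
  have hb1 : ¬ b.incident l1 := fun h => hb_h.2.2 ⟨h, hb3⟩
  have hb2 : ¬ b.incident l2 := fun h => hb_h.2.1 ⟨h, hb3⟩
  have hb'1 : ¬ b'.incident l1 := fun h => hb'_h.2.2 ⟨h, hb'3⟩
  have hb'2 : ¬ b'.incident l2 := fun h => hb'_h.2.1 ⟨h, hb'3⟩
  have hp2 : ¬ p.incident l2 := fun h => hp_h.1 ⟨hp1, h⟩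
  have hp3 : ¬ p.incident l3 := fun h => hp_h.2.2 ⟨hp1, h⟩
  have hℓ'l2 : ℓ' ≠ l2 := fun e => hp2 (e ▸ hℓ' p hpS')
  have hℓ'l3 : ℓ' ≠ l3 := fun e => hp3 (e ▸ hℓ' p hpS')
  have haa' : a ≠ a' := by
    intro e
    have hℓeq : ℓ = ℓ' :=
      unique_line hpa (hℓ p hpS) (hℓ a haS) (hℓ' p hpS')
        (by rw [e]; exact hℓ' a' ha'S')
    have hbb'eq : b = b' :=
      unique_pt hℓ'l3 (hℓeq ▸ hℓ b hbS) hb3 (hℓ' b' hb'S') hb'3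
    exact hne (by rw [hSeq, hS'eq, e, hbb'eq])
  have hbb' : b ≠ b' := by
    intro e
    have hℓeq : ℓ = ℓ' :=
      unique_line hpb (hℓ p hpS) (hℓ b hbS) (hℓ' p hpS')
        (by rw [e]; exact hℓ' b' hb'S')
    have haa'eq : a = a' :=
      unique_pt hℓ'l2 (hℓeq ▸ hℓ a haS) ha2 (hℓ' a' ha'S') ha'2
    exact hne (by rw [hSeq, hS'eq, haa'eq, e])
  obtain ⟨w1, w2, hw12, hweq⟩ := Set.ncard_eq_two.mp hc1
  have hpmem : p ∈ linePts l1 \ B := ⟨hp1, (hS hpS).2⟩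
  have hget : ∃ p', p ≠ p' ∧ linePts l1 \ B = {p, p'} := by
    rw [hweq] at hpmem ⊢
    simp only [Set.mem_insert_iff, Set.mem_singleton_iff] at hpmem
    rcases hpmem with h | h
    · exact ⟨w2, fun e => hw12 (h.symm.trans e), by rw [h]⟩
    · exact ⟨w1, fun e => hw12 (e.symm.trans h), by rw [h]; exact Set.pair_comm w1 w2⟩
  obtain ⟨p', hpp', h1eq⟩ := hget
  have h2eq : linePts l2 \ B = {a, a'} := by
    refine (Set.eq_of_subset_of_ncard_le ?_ ?_ (Set.toFinite _)).symm
    · rintro x hx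
      simp only [Set.mem_insert_iff, Set.mem_singleton_iff] at hx
      rcases hx with rfl | rfl
      · exact ⟨ha2, haB⟩
      · exact ⟨ha'2, ha'B⟩
    · rw [hc2, Set.ncard_pair haa']
  have h3eq : linePts l3 \ B = {b, b'} := by
    refine (Set.eq_of_subset_of_ncard_le ?_ ?_ (Set.toFinite _)).symm
    · rintro x hx
      simp only [Set.mem_insert_iff, Set.mem_singleton_iff] at hx
      rcases hx with rfl | rfl
      · exact ⟨hb3, hbB⟩
      · exact ⟨hb'3, hb'B⟩
    · rw [hc3, Set.ncard_pair hbb']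
  have hp'mem : p' ∈ linePts l1 \ B := by rw [h1eq]; exact Or.inr rfl
  have hp'_h := hnv p' ⟨Or.inl (Or.inl hp'mem.1), hp'mem.2⟩
  have hp'2 : ¬ p'.incident l2 := fun h => hp'_h.1 ⟨hp'mem.1, h⟩
  have hp'3 : ¬ p'.incident l3 := fun h => hp'_h.2.2 ⟨hp'mem.1, h⟩
  exact main_contra B l1 l2 l3 hbl hcardB hmid p p' a a' b b' h1eq hpp' h2eq haa' h3eq hbb'
    hp2 hp3 hp'2 hp'3 ha1 ha3 ha'1 ha'3 hb1 hb2 hb'1 hb'2 ℓ ℓ'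
    (hℓ p hpS) (hℓ a haS) (hℓ b hbS) (hℓ' p hpS') (hℓ' a' ha'S') (hℓ' b' hb'S')

end Counting

end PG2Aux

open PG2
variable {F : Type*} [Field F] [Fintype F]

/-- **Lemma.** In the triangle setting, any two distinct collinear triplets among the six holes
are disjoint. -/
theorem collinear_hole_triplets_disjoint (T : TriangleDBS F)
    (S S' : Set (PG2 F)) (hS : S ⊆ T.holes) (hS' : S' ⊆ T.holes)
    (hS3 : S.ncard = 3) (hS'3 : S'.ncard = 3) (hne : S ≠ S')
    (hcol : ∃ L : PG2 F, ∀ p ∈ S, PG2.incident p L)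
    (hcol' : ∃ L : PG2 F, ∀ p ∈ S', PG2.incident p L) :
    Disjoint S S' := by
  classical
  by_contra hdis
  rw [Set.not_disjoint_iff] at hdis
  obtain ⟨p, hpS, hpS'⟩ := hdis
  obtain ⟨ℓ, hℓ⟩ := hcol
  obtain ⟨ℓ', hℓ'⟩ := hcol'
  have hSsub : S ⊆ (PG2.linePts T.lA ∪ PG2.linePts T.lB ∪ PG2.linePts T.lC) \ T.B := hS
  have hS'sub : S' ⊆ (PG2.linePts T.lA ∪ PG2.linePts T.lB ∪ PG2.linePts T.lC) \ T.B := hS'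
  have hp_hole : p ∈ (PG2.linePts T.lA ∪ PG2.linePts T.lB ∪ PG2.linePts T.lC) \ T.B :=
    hSsub hpS
  rcases hp_hole.1 with (h | h) | h
  · exact PG2Aux.aux_main T.B T.lA T.lB T.lC T.blocking T.card_B T.card_mid T.holesA T.holesB
      T.holesC T.holes_not_vertex S S' hSsub hS'sub hS3 hS'3 hne ℓ ℓ' hℓ hℓ' p hpS hpS' h
  · have hU : PG2.linePts T.lB ∪ PG2.linePts T.lA ∪ PG2.linePts T.lC
        = PG2.linePts T.lA ∪ PG2.linePts T.lB ∪ PG2.linePts T.lC := by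
      ext x
      simp only [Set.mem_union]
      tauto
    have hnv' : ∀ x ∈ (PG2.linePts T.lB ∪ PG2.linePts T.lA ∪ PG2.linePts T.lC) \ T.B,
        ¬(x ∈ PG2.linePts T.lB ∧ x ∈ PG2.linePts T.lA) ∧
        ¬(x ∈ PG2.linePts T.lA ∧ x ∈ PG2.linePts T.lC) ∧
        ¬(x ∈ PG2.linePts T.lB ∧ x ∈ PG2.linePts T.lC) := by
      intro x hx
      rw [hU] at hx
      have := T.holes_not_vertex x hx
      tauto
    exact PG2Aux.aux_main T.B T.lB T.lA T.lC T.blocking T.card_B (by rw [hU]; exact T.card_mid)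
      T.holesB T.holesA T.holesC hnv' S S' (by rw [hU]; exact hSsub) (by rw [hU]; exact hS'sub)
      hS3 hS'3 hne ℓ ℓ' hℓ hℓ' p hpS hpS' h
  · have hU : PG2.linePts T.lC ∪ PG2.linePts T.lA ∪ PG2.linePts T.lB
        = PG2.linePts T.lA ∪ PG2.linePts T.lB ∪ PG2.linePts T.lC := by
      ext x
      simp only [Set.mem_union]
      tauto
    have hnv' : ∀ x ∈ (PG2.linePts T.lC ∪ PG2.linePts T.lA ∪ PG2.linePts T.lB) \ T.B,
        ¬(x ∈ PG2.linePts T.lC ∧ x ∈ PG2.linePts T.lA) ∧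
        ¬(x ∈ PG2.linePts T.lA ∧ x ∈ PG2.linePts T.lB) ∧
        ¬(x ∈ PG2.linePts T.lC ∧ x ∈ PG2.linePts T.lB) := by
      intro x hx
      rw [hU] at hx
      have := T.holes_not_vertex x hx
      tauto
    exact PG2Aux.aux_main T.B T.lC T.lA T.lB T.blocking T.card_B (by rw [hU]; exact T.card_mid)
      T.holesC T.holesA T.holesB hnv' S S' (by rw [hU]; exact hSsub) (by rw [hU]; exact hS'sub)
      hS3 hS'3 hne ℓ ℓ' hℓ hℓ' p hpS hpS' h
end
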